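/- arXiv:1206.0598 — 7 statements merged into one kernel-verified Lean document; each statement's English description precedes it below -/
import Mathlib

section
/- For every integer n ≥ 2, the following identity holds in the polynomial ring ℤ[x_1,…,x_n]: the sum over all Cayley trees T with vertex set {1,…,n} of the monomial ∏_{i=1}^n x_i^{deg_T(i)} equals x_1 x_2 ⋯ x_n · (x_1 + x_2 + ⋯ + x_n)^{n−2}. -/
/-!
For a degree sequence `d` on a vertex type `V` with `|V| = m + 2`, the trees in which every vertex
`v` has degree `d v` are equinumerous with the words of length `m` over `V` in which `v` occurs
`d v - 1` times (the Prüfer codes). Expanding `x₁ ⋯ xₙ (x₁ + ⋯ + xₙ) ^ (n - 2)` as a sum over all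
words turns this count into the identity.

The count is by induction on `m`. If `d v₀ = 1`, split the trees according to the neighbour `u` of
the leaf `v₀` and the words according to their last letter `u`; deleting the leaf, respectively the
last letter, is a bijection onto the trees, respectively words, on `V ∖ {v₀}` for the degree
sequence `d` with `d u` lowered by one. If no `d v` equals `1`, both sides are empty: a tree with at
least two vertices has a leaf, and a word of length `m < |V|` misses a letter.
-/

open scoped Classical

open Finset

theorem Finset.sum_comp_eq_of_card_filter_eq {α β γ M : Type*} [DecidableEq γ]
    [AddCommMonoid M] {s : Finset α} {t : Finset β} {f : α → γ} {g : β → γ}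
    (h : ∀ c, #{a ∈ s | f a = c} = #{b ∈ t | g b = c}) (F : γ → M) :
    ∑ a ∈ s, F (f a) = ∑ b ∈ t, F (g b) := by
  have himage : s.image f = t.image g := by
    ext c
    simp only [mem_image, ← filter_nonempty_iff, ← card_pos, h]
  rw [sum_comp, sum_comp, himage]
  simp only [h]

theorem Fintype.prod_comp_eq_prod_pow_card_filter {ι κ M : Type*} [Fintype ι] [Fintype κ]
    [DecidableEq κ] [CommMonoid M] (f : ι → κ) (g : κ → M) :
    ∏ i, g (f i) = ∏ k, g k ^ #{i | f i = k} :=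
  (prod_comp g f).trans (Finset.prod_subset (subset_univ _) fun k _ hk => by simp_all)

theorem Fin.card_filter_snoc_eq {α : Type*} [DecidableEq α] {m : ℕ} (g : Fin m → α) (x v : α) :
    #{j | (Fin.snoc g x : Fin (m + 1) → α) j = v} = #{j | g j = v} + if x = v then 1 else 0 := by
  simp only [card_filter, Fin.sum_univ_castSucc, Fin.snoc_castSucc, Fin.snoc_last]

section ComplSingleton

variable {V : Type*} {v₀ : V}

theorem forall_iff_and_forall_compl_singleton {p : V → Prop} :
    (∀ v, p v) ↔ p v₀ ∧ ∀ w : ({v₀}ᶜ : Set V), p w :=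
  ⟨fun h => ⟨h v₀, fun w => h w⟩, fun h v => if hv : v = v₀ then hv ▸ h.1 else h.2 ⟨v, hv⟩⟩

theorem Fintype.sum_eq_sum_compl_singleton [Fintype V] [DecidableEq V] {M : Type*}
    [AddCommMonoid M] {f : V → M} (hf : f v₀ = 0) :
    ∑ v, f v = ∑ w : ({v₀}ᶜ : Set V), f w := by
  rw [← add_sum_erase _ _ (mem_univ v₀), hf, zero_add]
  exact sum_subtype _ (by simp) f

theorem card_filter_coe_eq_zero [DecidableEq V] {ι : Type*} [Fintype ι] (g : ι → ({v₀}ᶜ : Set V)) :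
    #{j | (g j : V) = v₀} = 0 :=
  card_eq_zero.2 (filter_false_of_mem fun j _ => (g j).2)

end ComplSingleton

namespace SimpleGraph

variable {V : Type*} {G : SimpleGraph V} {v₀ u : V}

theorem forall_adj_iff_of_degree_eq_one [Fintype (G.neighborSet v₀)] (h : G.degree v₀ = 1)
    (hadj : G.Adj v₀ u) : ∀ w, G.Adj v₀ w ↔ w = u := by
  obtain ⟨x, -, hx⟩ := degree_eq_one_iff_existsUnique_adj.1 h
  exact fun w => ⟨fun hw => (hx w hw).trans (hx u hadj).symm, fun hw => hw ▸ hadj⟩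

theorem degree_eq_one_of_forall_adj_iff [Fintype (G.neighborSet v₀)]
    (hleaf : ∀ w, G.Adj v₀ w ↔ w = u) : G.degree v₀ = 1 :=
  degree_eq_one_iff_existsUnique_adj.2 ⟨u, (hleaf u).2 rfl, fun w h => (hleaf w).1 h⟩

theorem spanningCoe_induce_compl_singleton_sup_edge (hleaf : ∀ w, G.Adj v₀ w ↔ w = u) :
    (G.induce {v₀}ᶜ).spanningCoe ⊔ edge v₀ u = G := by
  ext a b
  have := hleaf a
  have := hleaf b
  simp only [sup_adj, spanningCoe, map_adj, comap_adj, edge_adj, Function.Embedding.subtype_apply,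
    Subtype.exists]
  grind [Adj.ne, adj_comm]

theorem induce_compl_singleton_spanningCoe_sup_edge (H : SimpleGraph ({v₀}ᶜ : Set V))
    (u : ({v₀}ᶜ : Set V)) : (H.spanningCoe ⊔ edge v₀ u).induce {v₀}ᶜ = H := by
  ext a b
  have := a.2
  have := b.2
  simp only [comap_adj, sup_adj, spanningCoe, map_adj, edge_adj, Function.Embedding.subtype_apply,
    Subtype.exists]
  grind

theorem spanningCoe_sup_edge_adj_iff (H : SimpleGraph ({v₀}ᶜ : Set V)) (u : ({v₀}ᶜ : Set V))
    (w : V) : (H.spanningCoe ⊔ edge v₀ u).Adj v₀ w ↔ w = u := by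
  have := u.2
  simp only [sup_adj, spanningCoe, map_adj, edge_adj, Function.Embedding.subtype_apply,
    Subtype.exists]
  grind

theorem connected_induce_compl_singleton_iff [Fintype (G.neighborSet v₀)]
    (hleaf : ∀ w, G.Adj v₀ w ↔ w = u) : (G.induce {v₀}ᶜ).Connected ↔ G.Connected := by
  refine ⟨fun h => ?_, fun h => h.induce_compl_singleton_of_degree_eq_one
    (degree_eq_one_of_forall_adj_iff hleaf)⟩
  have hu : u ∈ ({v₀}ᶜ : Set V) := (G.ne_of_adj ((hleaf u).2 rfl)).symm
  refine (connected_iff_exists_forall_reachable _).2 ⟨u, fun w => ?_⟩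
  by_cases hw : w = v₀
  · exact hw ▸ ((hleaf u).2 rfl).symm.reachable
  · exact (h.preconnected ⟨u, hu⟩ ⟨w, hw⟩).map (Embedding.induce _).toHom

variable [Fintype V]

theorem degree_eq_one_of_isTree_of_card_eq_two (hV : Fintype.card V = 2) [DecidableRel G.Adj]
    (hT : G.IsTree) (v : V) : G.degree v = 1 := by
  have : Nontrivial V := Fintype.one_lt_card_iff_nontrivial.1 (by omega)
  have := hT.connected.preconnected.degree_pos_of_nontrivial v
  have := G.degree_lt_card_verts v
  omega

theorem isTree_iff_eq_top_of_card_eq_two (hV : Fintype.card V = 2) : G.IsTree ↔ G = ⊤ := by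
  refine ⟨fun hT => ?_, ?_⟩
  · ext a b
    refine ⟨G.ne_of_adj, fun hab => ?_⟩
    obtain ⟨c, hc⟩ := (G.degree_pos_iff_exists_adj a).1
      (by rw [degree_eq_one_of_isTree_of_card_eq_two hV hT]; exact one_pos)
    obtain ⟨x, -, hx⟩ := (Nat.card_eq_two_iff' a).1 (by rw [Nat.card_eq_fintype_card, hV])
    rwa [← (hx c (G.ne_of_adj hc).symm).trans (hx b (Ne.symm hab)).symm]
  · rintro rfl
    have : Nonempty V := Fintype.card_pos_iff.1 (by omega)
    exact ⟨connected_top, IsAcyclic.of_card_le_two (by simp [ENat.card_eq_coe_fintype_card, hV])⟩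

variable [DecidableEq V]

theorem degree_induce_compl_singleton_add_ite (hleaf : ∀ w, G.Adj v₀ w ↔ w = u)
    (w : ({v₀}ᶜ : Set V)) :
    (G.induce {v₀}ᶜ).degree w + (if (w : V) = u then 1 else 0) = G.degree w := by
  have hnbr : G.neighborFinset w ∩ ({v₀}ᶜ : Set V).toFinset = (G.neighborFinset w).erase v₀ := by
    ext; simp [and_comm]
  have hv₀ : v₀ ∈ G.neighborFinset w ↔ (w : V) = u := by
    rw [mem_neighborFinset, adj_comm, hleaf]
  rw [← card_neighborFinset_eq_degree, ← card_map, map_neighborFinset_induce, hnbr,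
    ← card_neighborFinset_eq_degree]
  split_ifs with h
  · exact card_erase_add_one (hv₀.2 h)
  · rw [erase_eq_of_notMem (mt hv₀.1 h), add_zero]

theorem card_edgeFinset_induce_compl_singleton_add_one (hleaf : ∀ w, G.Adj v₀ w ↔ w = u) :
    #(G.induce {v₀}ᶜ).edgeFinset + 1 = #G.edgeFinset := by
  have hu : u ≠ v₀ := (G.ne_of_adj ((hleaf u).2 rfl)).symm
  have hsum : ∑ v, G.degree v = ∑ w : ({v₀}ᶜ : Set V), (G.induce {v₀}ᶜ).degree w + 2 := by
    rw [← add_sum_erase _ _ (mem_univ v₀),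
      sum_subtype (univ.erase v₀) (p := (· ∈ ({v₀}ᶜ : Set V))) (by simp)]
    simp_rw [← degree_induce_compl_singleton_add_ite hleaf]
    rw [sum_add_distrib, degree_eq_one_of_forall_adj_iff hleaf,
      ← Fintype.sum_eq_sum_compl_singleton (f := fun v => if v = u then 1 else 0)
        (by simp [hu.symm])]
    simp only [sum_ite_eq', mem_univ, if_true]
    ring
  have := G.sum_degrees_eq_twice_card_edges
  have := (G.induce {v₀}ᶜ).sum_degrees_eq_twice_card_edges
  omega

theorem isTree_induce_compl_singleton_iff (hleaf : ∀ w, G.Adj v₀ w ↔ w = u) :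
    (G.induce {v₀}ᶜ).IsTree ↔ G.IsTree := by
  have hcard : Fintype.card ({v₀}ᶜ : Set V) + 1 = Fintype.card V := by
    rw [Fintype.card_compl_set, Set.card_singleton]
    have := Fintype.card_pos_iff.2 ⟨v₀⟩
    omega
  simp only [isTree_iff_connected_and_card, connected_induce_compl_singleton_iff hleaf,
    Nat.card_eq_fintype_card, ← edgeFinset_card, ← hcard,
    ← card_edgeFinset_induce_compl_singleton_add_one hleaf, Nat.add_right_cancel_iff]

end SimpleGraph

namespace Cayley

open SimpleGraph

variable {V : Type*} [Fintype V] [DecidableEq V]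

noncomputable def treesWithDegree (d : V → ℕ) : Finset (SimpleGraph V) :=
  {G | G.IsTree ∧ ∀ v, G.degree v = d v}

/-- The Prüfer codes of the trees in `treesWithDegree d`, for `|V| = m + 2`. -/
def pruferWords (m : ℕ) (d : V → ℕ) : Finset (Fin m → V) :=
  {f | ∀ v, #{j | f j = v} + 1 = d v}

@[simp]
theorem mem_treesWithDegree {d : V → ℕ} {G : SimpleGraph V} [DecidableRel G.Adj] :
    G ∈ treesWithDegree d ↔ G.IsTree ∧ ∀ v, G.degree v = d v := by
  simp only [treesWithDegree, mem_filter, mem_univ, true_and]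
  congr!

@[simp]
theorem mem_pruferWords {m : ℕ} {d : V → ℕ} {f : Fin m → V} :
    f ∈ pruferWords m d ↔ ∀ v, #{j | f j = v} + 1 = d v := by
  simp [pruferWords]

section Leaf

variable {v₀ : V} {d : V → ℕ}

/-- The truncated subtraction is harmless: on at least two vertices every vertex of a tree has
positive degree. -/
theorem mem_treesWithDegree_iff_induce [Nontrivial ({v₀}ᶜ : Set V)] {G : SimpleGraph V}
    {u : ({v₀}ᶜ : Set V)} (hleaf : ∀ w, G.Adj v₀ w ↔ w = u) (hd : d v₀ = 1) :
    G ∈ treesWithDegree d ↔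
      G.induce {v₀}ᶜ ∈ treesWithDegree fun w : ({v₀}ᶜ : Set V) => d w - if w = u then 1 else 0 := by
  have hdeg (w : ({v₀}ᶜ : Set V)) := degree_induce_compl_singleton_add_ite hleaf w
  simp only [← Subtype.ext_iff] at hdeg
  simp only [mem_treesWithDegree, isTree_induce_compl_singleton_iff hleaf]
  refine and_congr_right fun hT => ⟨fun h w => ?_, fun h v => ?_⟩
  · have := hdeg w
    rw [h] at this
    split_ifs at this ⊢ <;> omega
  by_cases hv : v = v₀
  · rw [hv, degree_eq_one_of_forall_adj_iff hleaf, hd]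
  have hw := hdeg ⟨v, hv⟩
  have hw' := h ⟨v, hv⟩
  dsimp only at hw hw'
  by_cases hvu : (⟨v, hv⟩ : ({v₀}ᶜ : Set V)) = u
  · have hpos := ((isTree_induce_compl_singleton_iff hleaf).2 hT).connected.preconnected
      |>.degree_pos_of_nontrivial u
    rw [if_pos hvu] at hw hw'
    rw [← hvu] at hpos
    omega
  · rw [if_neg hvu] at hw hw'
    omega

theorem card_filter_adj_treesWithDegree [Nontrivial ({v₀}ᶜ : Set V)] (hd : d v₀ = 1)
    (u : ({v₀}ᶜ : Set V)) :
    #{G ∈ treesWithDegree d | G.Adj v₀ u} =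
      #(treesWithDegree fun w : ({v₀}ᶜ : Set V) => d w - if w = u then 1 else 0) := by
  have hleaf {G : SimpleGraph V} (hG : G ∈ treesWithDegree d) (hadj : G.Adj v₀ u) :=
    forall_adj_iff_of_degree_eq_one (((mem_treesWithDegree.1 hG).2 v₀).trans hd) hadj
  refine card_nbij' (·.induce {v₀}ᶜ) (·.spanningCoe ⊔ edge v₀ u) (fun G hG => ?_)
    (fun H hH => ?_) (fun G hG => ?_) (fun H _ => induce_compl_singleton_spanningCoe_sup_edge H u)
  · rw [mem_coe, mem_filter] at hG
    exact (mem_treesWithDegree_iff_induce (hleaf hG.1 hG.2) hd).1 hG.1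
  · have hleaf' := spanningCoe_sup_edge_adj_iff H u
    rw [mem_coe, mem_filter, mem_treesWithDegree_iff_induce hleaf' hd,
      induce_compl_singleton_spanningCoe_sup_edge]
    exact ⟨hH, (hleaf' u).2 rfl⟩
  · rw [mem_coe, mem_filter] at hG
    exact spanningCoe_induce_compl_singleton_sup_edge (hleaf hG.1 hG.2)

theorem card_treesWithDegree_eq_sum [Nontrivial ({v₀}ᶜ : Set V)] (hd : d v₀ = 1) :
    #(treesWithDegree d) = ∑ u : ({v₀}ᶜ : Set V),
      #(treesWithDegree fun w : ({v₀}ᶜ : Set V) => d w - if w = u then 1 else 0) := by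
  have hfiber : #(treesWithDegree d) = ∑ u, #{G ∈ treesWithDegree d | G.Adj v₀ u} :=
    calc #(treesWithDegree d)
        = ∑ G ∈ treesWithDegree d, #(bipartiteAbove (fun G u => G.Adj v₀ u) univ G) := by
          rw [card_eq_sum_ones]
          refine sum_congr rfl fun G hG => ?_
          rw [bipartiteAbove, ← neighborFinset_eq_filter, card_neighborFinset_eq_degree,
            (mem_treesWithDegree.1 hG).2, hd]
      _ = _ := sum_card_bipartiteAbove_eq_sum_card_bipartiteBelow _
  rw [hfiber, Fintype.sum_eq_sum_compl_singleton (v₀ := v₀) (by simp)]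
  exact sum_congr rfl fun u _ => card_filter_adj_treesWithDegree hd u

theorem ne_of_mem_pruferWords {m : ℕ} {f : Fin m → V} (hf : f ∈ pruferWords m d)
    (hd : d v₀ = 1) (j : Fin m) : f j ≠ v₀ := by
  have := mem_pruferWords.1 hf v₀
  rw [hd, add_eq_right, card_eq_zero, filter_eq_empty_iff] at this
  exact this (mem_univ j)

theorem snoc_mem_pruferWords_iff {m : ℕ} (hd : d v₀ = 1) (u : ({v₀}ᶜ : Set V))
    (g : Fin m → ({v₀}ᶜ : Set V)) :
    (Fin.snoc (fun j => (g j : V)) u : Fin (m + 1) → V) ∈ pruferWords (m + 1) d ↔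
      g ∈ pruferWords m fun w : ({v₀}ᶜ : Set V) => d w - if w = u then 1 else 0 := by
  have hu : (u : V) ≠ v₀ := u.2
  simp only [mem_pruferWords, Fin.card_filter_snoc_eq,
    forall_iff_and_forall_compl_singleton (v₀ := v₀), card_filter_coe_eq_zero, if_neg hu, hd,
    Subtype.coe_inj, true_and]
  refine forall_congr' fun w => ?_
  by_cases h : u = w
  · simp only [h, if_true]
    omega
  · simp only [if_neg h, if_neg (Ne.symm h)]
    omega

theorem card_filter_last_pruferWords {m : ℕ} (hd : d v₀ = 1) (u : ({v₀}ᶜ : Set V)) :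
    #{f ∈ pruferWords (m + 1) d | f (Fin.last m) = (u : V)} =
      #(pruferWords m fun w : ({v₀}ᶜ : Set V) => d w - if w = u then 1 else 0) := by
  have hsnoc {f : Fin (m + 1) → V}
      (hf : f ∈ {f ∈ pruferWords (m + 1) d | f (Fin.last m) = (u : V)}) :
      Fin.snoc (fun j => f j.castSucc) u = f := by
    rw [← (mem_filter.1 hf).2]
    exact Fin.snoc_init_self f
  symm
  refine card_bij' (fun g _ => Fin.snoc (fun j => (g j : V)) u)
    (fun f hf j => ⟨f j.castSucc, ne_of_mem_pruferWords (mem_filter.1 hf).1 hd _⟩)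
    (fun g hg => ?_) (fun f hf => ?_) (fun g _ => ?_) (fun f hf => hsnoc hf)
  · exact mem_filter.2 ⟨(snoc_mem_pruferWords_iff hd u g).2 hg, Fin.snoc_last _ _⟩
  · rw [← snoc_mem_pruferWords_iff hd u]
    exact (hsnoc hf).symm ▸ (mem_filter.1 hf).1
  · ext j
    simp

theorem card_pruferWords_succ_eq_sum {m : ℕ} (hd : d v₀ = 1) :
    #(pruferWords (m + 1) d) = ∑ u : ({v₀}ᶜ : Set V),
      #(pruferWords m fun w : ({v₀}ᶜ : Set V) => d w - if w = u then 1 else 0) := by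
  rw [card_eq_sum_card_fiberwise (f := fun f => f (Fin.last m)) (t := univ)
      fun _ _ => mem_coe.2 (mem_univ _),
    Fintype.sum_eq_sum_compl_singleton (v₀ := v₀)
      (card_eq_zero.2 (filter_false_of_mem fun f hf => ne_of_mem_pruferWords hf hd _))]
  exact sum_congr rfl fun u _ => card_filter_last_pruferWords hd u

end Leaf

theorem card_treesWithDegree_of_card_eq_two (hV : Fintype.card V = 2) (d : V → ℕ) :
    #(treesWithDegree d) = if ∀ v, d v = 1 then 1 else 0 := by
  split_ifs with hd
  · refine card_eq_one.2 ⟨⊤, eq_singleton_iff_unique_mem.2 ⟨?_, fun G hG => ?_⟩⟩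
    · have hT := (isTree_iff_eq_top_of_card_eq_two hV).2 rfl
      exact mem_treesWithDegree.2
        ⟨hT, fun v => (degree_eq_one_of_isTree_of_card_eq_two hV hT v).trans (hd v).symm⟩
    · exact (isTree_iff_eq_top_of_card_eq_two hV).1 (mem_treesWithDegree.1 hG).1
  · obtain ⟨v, hv⟩ := not_forall.1 hd
    refine card_eq_zero.2 (eq_empty_iff_forall_notMem.2 fun G hG => hv ?_)
    obtain ⟨hT, hdeg⟩ := mem_treesWithDegree.1 hG
    exact (hdeg v).symm.trans (degree_eq_one_of_isTree_of_card_eq_two hV hT v)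

theorem card_pruferWords_zero (d : V → ℕ) :
    #(pruferWords 0 d) = if ∀ v, d v = 1 then 1 else 0 := by
  simp [pruferWords, eq_comm, apply_ite card]

theorem treesWithDegree_eq_empty [Nontrivial V] {d : V → ℕ} (hd : ∀ v, d v ≠ 1) :
    treesWithDegree d = ∅ := by
  refine eq_empty_iff_forall_notMem.2 fun G hG => ?_
  obtain ⟨hT, hdeg⟩ := mem_treesWithDegree.1 hG
  obtain ⟨v, hv⟩ := hT.exists_vert_degree_one_of_nontrivial
  exact hd v (hdeg v ▸ hv)

theorem pruferWords_eq_empty {m : ℕ} (hm : m < Fintype.card V) {d : V → ℕ}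
    (hd : ∀ v, d v ≠ 1) : pruferWords m d = ∅ := by
  refine eq_empty_iff_forall_notMem.2 fun f hf => hm.not_ge ?_
  refine (Fintype.card_fin m).symm ▸ Fintype.card_le_of_surjective f fun v => ?_
  have hpos : 0 < #{j | f j = v} := by
    have := mem_pruferWords.1 hf v
    have := hd v
    omega
  obtain ⟨j, hj⟩ := card_pos.1 hpos
  exact ⟨j, (mem_filter.1 hj).2⟩

theorem card_treesWithDegree_eq_card_pruferWords (m : ℕ) (hV : Fintype.card V = m + 2)
    (d : V → ℕ) :
    #(treesWithDegree d) = #(pruferWords m d) := by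
  induction m generalizing V with
  | zero => rw [card_treesWithDegree_of_card_eq_two hV, card_pruferWords_zero]
  | succ m ih =>
    by_cases hleaf : ∃ v₀, d v₀ = 1
    · obtain ⟨v₀, hd⟩ := hleaf
      have hW : Fintype.card ({v₀}ᶜ : Set V) = m + 2 := by
        rw [Fintype.card_compl_set, Set.card_singleton, hV]
        rfl
      have : Nontrivial ({v₀}ᶜ : Set V) := Fintype.one_lt_card_iff_nontrivial.1 (by omega)
      rw [card_treesWithDegree_eq_sum hd, card_pruferWords_succ_eq_sum hd]
      exact sum_congr rfl fun u _ => ih hW _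
    · simp only [not_exists] at hleaf
      have : Nontrivial V := Fintype.one_lt_card_iff_nontrivial.1 (by omega)
      rw [treesWithDegree_eq_empty hleaf, pruferWords_eq_empty (by omega) hleaf, card_empty,
        card_empty]

end Cayley

/-- **Refined Cayley formula.**
For `n ≥ 2`, the generating polynomial of Cayley trees (connected acyclic simple
graphs on the vertex set `Fin n`) counted according to the degrees of their
vertices is `x_1 ⋯ x_n (x_1 + ⋯ + x_n)^(n-2)`. -/
theorem cayley_degree_generating_function (n : ℕ) (hn : 2 ≤ n) :
    ∑ G ∈ Finset.univ.filter (fun G : SimpleGraph (Fin n) => G.IsTree),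
        ∏ i : Fin n, (MvPolynomial.X i : MvPolynomial (Fin n) ℤ) ^ G.degree i
      =
    (∏ i : Fin n, (MvPolynomial.X i : MvPolynomial (Fin n) ℤ)) *
      (∑ i : Fin n, (MvPolynomial.X i : MvPolynomial (Fin n) ℤ)) ^ (n - 2) := by
  obtain ⟨m, rfl⟩ : ∃ m, n = m + 2 := ⟨n - 2, by omega⟩
  rw [Nat.add_sub_cancel, Fintype.sum_pow, mul_sum]
  simp_rw [Fintype.prod_comp_eq_prod_pow_card_filter, ← prod_mul_distrib, ← pow_succ']
  refine sum_comp_eq_of_card_filter_eq (fun d => ?_)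
    (fun d : Fin (m + 2) → ℕ => ∏ i, MvPolynomial.X i ^ d i)
  convert Cayley.card_treesWithDegree_eq_card_pruferWords m (Fintype.card_fin _) d using 2 <;>
    ext <;> simp [filter_filter, funext_iff]
end

section
/- Let n ≥ 2 and let γ = (γ_1,…,γ_n) be a tuple of positive integers summing to 2n−2. Let i ≠ j in {1,…,n} and let γ' = (γ'_1,…,γ'_n) be defined by γ'_i = γ_i − 1, γ'_j = γ_j + 1, and γ'_k = γ_k for k ∉ {i,j}. Then (γ_i − 1)·|T_γ| = (γ'_j − 1)·|T_{γ'}|, where |·| denotes cardinality. -/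
/-!
Double counting. Call `x` an off-path neighbour of `i` (towards `j`) in a tree `T` if `x` is
adjacent to `i` but is not the first vertex of the `i`–`j` path; every `T ∈ T_γ` has exactly
`γ_i - 1` of them. Replacing the edge `ix` by `jx` gives a tree with degree sequence `γ'` in which
`x` is an off-path neighbour of `j` towards `i`, and moving the edge back inverts this, so both
sides count the same set of marked trees.
-/

open scoped Classical

namespace SimpleGraph

variable {V : Type*}

structure IsOffPathNeighbor (G : SimpleGraph V) (a b x : V) : Prop where
  adj : G.Adj a x
  reachable : (G.deleteEdges {s(a, x)}).Reachable a b

variable {G : SimpleGraph V} {a b x : V}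

lemma IsAcyclic.not_reachable_deleteEdges (hG : G.IsAcyclic) {u v : V} (h : G.Adj u v) :
    ¬ (G.deleteEdges {s(u, v)}).Reachable u v :=
  isAcyclic_iff_forall_adj_isBridge.mp hG h

namespace IsOffPathNeighbor

lemma not_reachable_right (hG : G.IsAcyclic) (h : G.IsOffPathNeighbor a b x) :
    ¬ (G.deleteEdges {s(a, x)}).Reachable b x :=
  fun hbx => hG.not_reachable_deleteEdges h.adj (h.reachable.trans hbx)

lemma ne_right (hG : G.IsAcyclic) (h : G.IsOffPathNeighbor a b x) : x ≠ b := by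
  rintro rfl
  exact h.not_reachable_right hG .rfl

lemma not_adj_right (hG : G.IsAcyclic) (h : G.IsOffPathNeighbor a b x) (hab : a ≠ b) :
    ¬ G.Adj b x := fun hbx =>
  h.not_reachable_right hG <| Adj.reachable <| by
    simp only [deleteEdges_adj, Set.mem_singleton_iff, Sym2.eq_iff]
    exact ⟨hbx, by rintro (⟨rfl, -⟩ | ⟨rfl, rfl⟩) <;> simp_all⟩

end IsOffPathNeighbor

lemma IsAcyclic.isOffPathNeighbor_iff (hG : G.IsAcyclic) {p : G.Walk a b} (hp : p.IsPath)
    (hab : a ≠ b) : G.IsOffPathNeighbor a b x ↔ G.Adj a x ∧ x ≠ p.snd := by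
  refine ⟨fun h => ⟨h.adj, ?_⟩, fun ⟨hax, hx⟩ => ⟨hax, ?_⟩⟩
  · rintro rfl
    obtain ⟨q, hq⟩ := reachable_deleteEdges_iff_exists_walk.mp h.reachable
    have hqp : q.bypass = p :=
      congrArg Subtype.val <| (hG.subsingleton_path a b).elim ⟨_, q.bypass_isPath⟩ ⟨p, hp⟩
    exact hq <| q.edges_bypass_subset_edges <|
      hqp ▸ p.mk_start_snd_mem_edges (p.not_nil_of_ne hab)
  · refine reachable_deleteEdges_iff_exists_walk.mpr ⟨p, fun hax_p => hx ?_⟩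
    exact hG.eq_snd_of_adj_start hp hax (p.snd_mem_support_of_mem_edges hax_p)

lemma IsTree.card_isOffPathNeighbor [Fintype V] (hG : G.IsTree) (hab : a ≠ b) :
    Nat.card {x // G.IsOffPathNeighbor a b x} = G.degree a - 1 := by
  obtain ⟨p, hp, -⟩ := hG.existsUnique_path a b
  have hset : {x | G.IsOffPathNeighbor a b x} = ↑((G.neighborFinset a).erase p.snd) := by
    ext x
    simp [hG.isAcyclic.isOffPathNeighbor_iff hp hab, and_comm]
  rw [← Set.coe_ofPred, Nat.card_coe_set_eq, hset, Set.ncard_coe_finset,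
    Finset.card_erase_of_mem (by simpa using p.adj_snd (p.not_nil_of_ne hab)),
    card_neighborFinset_eq_degree]

def moveEdge (G : SimpleGraph V) (a b x : V) : SimpleGraph V :=
  G.deleteEdges {s(a, x)} ⊔ edge b x

lemma sup_edge_deleteEdges (hab : a ≠ b) :
    (G ⊔ edge b x).deleteEdges {s(a, x)} = G.moveEdge a b x := by
  ext u v
  simp only [moveEdge, deleteEdges_adj, sup_adj, edge_adj, Set.mem_singleton_iff, Sym2.eq_iff]
  grind

lemma moveEdge_deleteEdges (hab : a ≠ b) (hbx : ¬ G.Adj b x) :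
    (G.moveEdge a b x).deleteEdges {s(b, x)} = G.deleteEdges {s(a, x)} := by
  ext u v
  simp only [moveEdge, deleteEdges_adj, sup_adj, edge_adj, Set.mem_singleton_iff, Sym2.eq_iff]
  grind [G.adj_symm]

lemma moveEdge_moveEdge (hax : G.Adj a x) (hbx : ¬ G.Adj b x) (hab : a ≠ b) :
    (G.moveEdge a b x).moveEdge b a x = G := by
  rw [moveEdge, moveEdge_deleteEdges hab hbx]
  ext u v
  simp only [sup_adj, deleteEdges_adj, edge_adj, Set.mem_singleton_iff, Sym2.eq_iff]
  grind [G.adj_symm, Adj.ne]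

namespace IsOffPathNeighbor

lemma moveEdge (hG : G.IsAcyclic) (h : G.IsOffPathNeighbor a b x) (hab : a ≠ b) :
    (G.moveEdge a b x).IsOffPathNeighbor b a x where
  adj := Or.inr <| (edge_adj ..).mpr ⟨Or.inl ⟨rfl, rfl⟩, (h.ne_right hG).symm⟩
  reachable := by
    rw [moveEdge_deleteEdges hab (h.not_adj_right hG hab)]
    exact h.reachable.symm

lemma isAcyclic_moveEdge (hG : G.IsAcyclic) (h : G.IsOffPathNeighbor a b x) :
    (G.moveEdge a b x).IsAcyclic :=
  (hG.anti (deleteEdges_le _)).sup_edge_of_not_reachable (h.not_reachable_right hG)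

lemma connected_moveEdge (hG : G.Connected) (h : G.IsOffPathNeighbor a b x) (hab : a ≠ b) :
    (G.moveEdge a b x).Connected := by
  have hb_x : (edge b x).Reachable b x := by
    obtain rfl | hbx := eq_or_ne b x
    · rfl
    · exact Adj.reachable <| (edge_adj ..).mpr ⟨Or.inl ⟨rfl, rfl⟩, hbx⟩
  have ha_x : (G.moveEdge a b x).Reachable a x :=
    (h.reachable.mono le_sup_left).trans (hb_x.mono le_sup_right)
  have hdel := sup_edge_deleteEdges (G := G) (x := x) hab
  rw [← hdel]
  refine (hG.mono le_sup_left).connected_delete_edge_of_not_isBridge ?_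
  rw [isBridge_iff, hdel]
  exact not_not_intro ha_x

lemma isTree_moveEdge (hG : G.IsTree) (h : G.IsOffPathNeighbor a b x) (hab : a ≠ b) :
    (G.moveEdge a b x).IsTree :=
  ⟨h.connected_moveEdge hG.connected hab, h.isAcyclic_moveEdge hG.isAcyclic⟩

end IsOffPathNeighbor

section Degree

variable [Fintype V]

lemma neighborFinset_moveEdge_left (hax : G.Adj a x) (hab : a ≠ b) :
    (G.moveEdge a b x).neighborFinset a = (G.neighborFinset a).erase x := by
  ext y
  simp only [mem_neighborFinset, Finset.mem_erase]
  simp only [moveEdge, sup_adj, deleteEdges_adj, edge_adj, Set.mem_singleton_iff, Sym2.eq_iff]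
  grind [Adj.ne]

lemma neighborFinset_moveEdge_right (hab : a ≠ b) (hxb : x ≠ b) :
    (G.moveEdge a b x).neighborFinset b = insert x (G.neighborFinset b) := by
  ext y
  simp only [mem_neighborFinset, Finset.mem_insert]
  simp only [moveEdge, sup_adj, deleteEdges_adj, edge_adj, Set.mem_singleton_iff, Sym2.eq_iff]
  grind [Adj.ne]

lemma neighborFinset_moveEdge_moved (hxb : x ≠ b) :
    (G.moveEdge a b x).neighborFinset x = insert b ((G.neighborFinset x).erase a) := by
  ext y
  simp only [mem_neighborFinset, Finset.mem_insert, Finset.mem_erase]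
  simp only [moveEdge, sup_adj, deleteEdges_adj, edge_adj, Set.mem_singleton_iff, Sym2.eq_iff]
  grind [Adj.ne]

lemma neighborFinset_moveEdge_of_ne {k : V} (hka : k ≠ a) (hkb : k ≠ b) (hkx : k ≠ x) :
    (G.moveEdge a b x).neighborFinset k = G.neighborFinset k := by
  ext y
  simp only [mem_neighborFinset]
  simp only [moveEdge, sup_adj, deleteEdges_adj, edge_adj, Set.mem_singleton_iff, Sym2.eq_iff]
  grind

-- `δ' + Pi.single a 1 = δ + Pi.single b 1` encodes "`δ'` is `δ` with one unit of degree moved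
-- from `a` to `b`"; unlike `Function.update` it is symmetric and avoids truncated subtraction.
lemma IsOffPathNeighbor.degree_moveEdge_add_single [DecidableEq V] (hG : G.IsAcyclic)
    (h : G.IsOffPathNeighbor a b x) (hab : a ≠ b) :
    (fun k => (G.moveEdge a b x).degree k) + Pi.single a 1 =
      (fun k => G.degree k) + Pi.single b 1 := by
  funext k
  have hxb := h.ne_right hG
  have hbx := h.not_adj_right hG hab
  simp only [Pi.add_apply, Pi.single_apply, ← card_neighborFinset_eq_degree]
  by_cases hka : k = a
  · subst hka
    simp [hab, neighborFinset_moveEdge_left h.adj hab, h.adj,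
      Nat.sub_add_cancel h.adj.degree_pos_left]
  by_cases hkb : k = b
  · subst hkb
    simp [hab.symm, neighborFinset_moveEdge_right hab hxb, Finset.card_insert_of_notMem, hbx]
  by_cases hkx : k = x
  · subst hkx
    simp [hka, hkb, neighborFinset_moveEdge_moved hxb, Finset.card_insert_of_notMem,
      G.adj_comm, hbx, h.adj, Nat.sub_add_cancel h.adj.degree_pos_right]
  · simp [hka, hkb, neighborFinset_moveEdge_of_ne hka hkb hkx]

lemma IsOffPathNeighbor.degree_moveEdge_eq [DecidableEq V] {δ δ' : V → ℕ} (hG : G.IsAcyclic)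
    (h : G.IsOffPathNeighbor a b x) (hab : a ≠ b) (hdeg : ∀ k, G.degree k = δ k)
    (hδ : δ' + Pi.single a 1 = δ + Pi.single b 1) (k : V) :
    (G.moveEdge a b x).degree k = δ' k :=
  congrFun (add_right_cancel <| (h.degree_moveEdge_add_single hG hab).trans <|
    funext hdeg ▸ hδ.symm) k

end Degree

end SimpleGraph

open SimpleGraph

section CayleyTrees

variable {V : Type*} [Fintype V] {δ δ' : V → ℕ} {a b : V}

abbrev TreesWithDegrees (δ : V → ℕ) : Type _ :=
  {G : SimpleGraph V // G.IsTree ∧ ∀ k, G.degree k = δ k}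

abbrev MarkedTrees (δ : V → ℕ) (a b : V) : Type _ :=
  {p : TreesWithDegrees δ × V // p.1.1.IsOffPathNeighbor a b p.2}

lemma card_markedTrees (δ : V → ℕ) (hab : a ≠ b) :
    Nat.card (MarkedTrees δ a b) = (δ a - 1) * Nat.card (TreesWithDegrees δ) := by
  rw [Nat.card_congr (Equiv.subtypeProdEquivSigmaSubtype fun (T : TreesWithDegrees δ) x =>
    T.1.IsOffPathNeighbor a b x), Nat.card_sigma]
  simp only [fun T : TreesWithDegrees δ => T.2.1.card_isOffPathNeighbor hab,
    fun T : TreesWithDegrees δ => T.2.2 a]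
  rw [Finset.sum_const, smul_eq_mul, Finset.card_univ, Nat.card_eq_fintype_card, mul_comm]

def MarkedTrees.move [DecidableEq V] (hab : a ≠ b)
    (hδ : δ' + Pi.single a 1 = δ + Pi.single b 1) : MarkedTrees δ a b → MarkedTrees δ' b a
  | ⟨(T, x), h⟩ =>
    ⟨(⟨T.1.moveEdge a b x, h.isTree_moveEdge T.2.1 hab,
        h.degree_moveEdge_eq T.2.1.isAcyclic hab T.2.2 hδ⟩, x),
      h.moveEdge T.2.1.isAcyclic hab⟩

lemma MarkedTrees.move_move [DecidableEq V] (hab : a ≠ b)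
    (hδ : δ' + Pi.single a 1 = δ + Pi.single b 1)
    (hδ' : δ + Pi.single b 1 = δ' + Pi.single a 1) (p : MarkedTrees δ a b) :
    move hab.symm hδ' (move hab hδ p) = p := by
  obtain ⟨⟨⟨T, hT, -⟩, x⟩, h⟩ := p
  exact Subtype.ext <| Prod.ext (Subtype.ext <|
    moveEdge_moveEdge h.adj (h.not_adj_right hT.isAcyclic hab) hab) rfl

lemma card_markedTrees_eq [DecidableEq V] (hab : a ≠ b)
    (hδ : δ' + Pi.single a 1 = δ + Pi.single b 1) :
    Nat.card (MarkedTrees δ a b) = Nat.card (MarkedTrees δ' b a) :=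
  Nat.card_congr ⟨MarkedTrees.move hab hδ, MarkedTrees.move hab.symm hδ.symm,
    MarkedTrees.move_move hab hδ hδ.symm, MarkedTrees.move_move hab.symm hδ.symm hδ⟩

end CayleyTrees

theorem cayley_degree_symmetry_general (n : ℕ)
    (γ : Fin n → ℕ) (hγpos : ∀ k, 0 < γ k)
    (i j : Fin n) (hij : i ≠ j)
    (γ' : Fin n → ℕ)
    (hγ' : γ' = Function.update (Function.update γ i (γ i - 1)) j (γ j + 1)) :
    (γ i - 1) *
        Nat.card {G : SimpleGraph (Fin n) // G.IsTree ∧ ∀ k, G.degree k = γ k}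
      =
    (γ' j - 1) *
        Nat.card {G : SimpleGraph (Fin n) // G.IsTree ∧ ∀ k, G.degree k = γ' k} := by
  have hγ'_add : γ' + Pi.single i 1 = γ + Pi.single j 1 := by
    subst hγ'
    funext k
    by_cases hkj : k = j
    · subst hkj
      simp [hij.symm]
    by_cases hki : k = i
    · subst hki
      simp [hkj, Nat.sub_add_cancel (hγpos k)]
    simp [hki, hkj]
  calc (γ i - 1) * Nat.card (TreesWithDegrees γ)
      = Nat.card (MarkedTrees γ i j) := (card_markedTrees γ hij).symm
    _ = Nat.card (MarkedTrees γ' j i) := card_markedTrees_eq hij hγ'_add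
    _ = (γ' j - 1) * Nat.card (TreesWithDegrees γ') := card_markedTrees γ' hij.symm

/-- **Symmetry lemma for degree-constrained Cayley trees.**
For a tuple `γ` of positive integers summing to `2n − 2`, moving one unit of degree
from vertex `i` to vertex `j` changes the number of Cayley trees with degree
sequence `γ` by the explicit factor: `(γ_i − 1)·|T_γ| = (γ'_j − 1)·|T_{γ'}|`. -/
theorem cayley_degree_symmetry (n : ℕ) (hn : 2 ≤ n)
    (γ : Fin n → ℕ) (hγpos : ∀ k, 0 < γ k) (hγsum : ∑ k, γ k = 2 * n - 2)
    (i j : Fin n) (hij : i ≠ j)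
    (γ' : Fin n → ℕ)
    (hγ' : γ' = Function.update (Function.update γ i (γ i - 1)) j (γ j + 1)) :
    (γ i - 1) *
        Nat.card {G : SimpleGraph (Fin n) // G.IsTree ∧ ∀ k, G.degree k = γ k}
      =
    (γ' j - 1) *
        Nat.card {G : SimpleGraph (Fin n) // G.IsTree ∧ ∀ k, G.degree k = γ' k} :=
  cayley_degree_symmetry_general n γ hγpos i j hij γ' hγ'
end

section
/- Fix d ≥ 1, a tuple n = (n_1,…,n_d) of positive integers, and ρ ∈ {1,…,d}. In the polynomial ring ℤ[x_{s,t,i} : s,t ∈ [d], i ∈ [n_t]] the following identity holds: Σ_{T ∈ T_ρ(n)} ∏_{s,t∈[d], i∈[n_t]} x_{s,t,i}^{ch_s(t,i)} = ∏_{s∈[d]} ( Σ_{t∈[d], i∈[n_t]} x_{s,t,i} )^{n_s − 1} · Δ, where Δ = Σ_{A ∈ Cay_d^ρ} ∏_{(s,t)∈A} ( Σ_{i∈[n_t]} x_{s,t,i} ). -/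
/-!
By the directed matrix-tree theorem, the trees rooted at a vertex `r` are counted by the
determinant of the reduced Laplacian of the complete digraph on `V_n` in which an edge from a
vertex of type `s` to `v` has weight `x_{s,v}`. The rows of this Laplacian depend only on the
type of the row index, so `det (1 - A * B) = det (1 - B * A)` collapses it to a `d × d`
determinant, at the cost of the factor `∏_s R_s ^ n_s / (R_ρ ∏_s R_s)` with
`R_s = ∑_v x_{s,v}`. Summed over the roots of type `ρ`, these `d × d` determinants give `R_ρ`
times the determinant of the reduced Laplacian of the digraph on the types with weights
`∑_i x_{s,t,i}`, which the matrix-tree theorem evaluates to `Δ`. The computation takes place in the fraction field of the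
polynomial ring, where every `R_s` is invertible.
-/

open scoped Classical

/-- The vertex set of multitype Cayley trees of profile `n`: the vertex `⟨t, i⟩`
has type `t` and label `i`. -/
abbrev Vtx (d : ℕ) (n : Fin d → ℕ) := Σ t : Fin d, Fin (n t)

/-- A rooted multitype Cayley tree of profile `n`, encoded by the pair consisting of
its root vertex and its parent function (edges are oriented toward the root): the
root is a fixed point of the parent function and every vertex eventually reaches
the root by iterating it. -/
def MTree (d : ℕ) (n : Fin d → ℕ) : Type :=
  {p : Vtx d n × (Vtx d n → Vtx d n) //
    p.2 p.1 = p.1 ∧ ∀ v, ∃ k, p.2^[k] v = p.1}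

namespace MTree

variable {d : ℕ} {n : Fin d → ℕ}

/-- The root vertex of a rooted multitype Cayley tree. -/
def root (T : MTree d n) : Vtx d n := T.1.1

/-- The parent function of a rooted multitype Cayley tree. -/
def parent (T : MTree d n) : Vtx d n → Vtx d n := T.1.2

/-- `T.ch s w` is the number of children of type `s` of the vertex `w` in `T`. -/
noncomputable def ch (T : MTree d n) (s : Fin d) (w : Vtx d n) : ℕ :=
  Nat.card {v : Vtx d n // v.1 = s ∧ v ≠ T.root ∧ T.parent v = w}

/-- `T.etype s t` is the number of edges of type `(s,t)` of `T`, i.e. edges going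
from a vertex of type `s` to a vertex of type `t` (edges oriented toward the root). -/
noncomputable def etype (T : MTree d n) (s t : Fin d) : ℕ :=
  Nat.card {v : Vtx d n // v ≠ T.root ∧ v.1 = s ∧ (T.parent v).1 = t}

end MTree

/-- `Cay d ρ` is the set of (unitype) Cayley trees with vertex set `Fin d`, rooted at
`ρ` and oriented toward the root, encoded by parent functions: the oriented edges of
`A` are the pairs `(s, A.1 s)` for `s ≠ ρ`. -/
def Cay (d : ℕ) (ρ : Fin d) : Type :=
  {f : Fin d → Fin d // f ρ = ρ ∧ ∀ v, ∃ k, f^[k] v = ρ}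

noncomputable instance (d : ℕ) (n : Fin d → ℕ) : Fintype (MTree d n) :=
  Subtype.fintype _

noncomputable instance (d : ℕ) (ρ : Fin d) : Fintype (Cay d ρ) :=
  Subtype.fintype _

open Matrix Function

namespace Matrix

variable {m R : Type*} [Fintype m] [DecidableEq m] [CommRing R]

theorem det_eq_prod_diag_of_rank (M : Matrix m m R) (b : m → ℕ)
    (hM : ∀ i j, i ≠ j → b i ≤ b j → M i j = 0) : M.det = ∏ i, M i i := by
  -- `M` is lower triangular for any linear order refining `b`
  let e := Fintype.equivFin m
  let _ : LinearOrder m := LinearOrder.lift' (fun i => toLex (b i, e i)) fun i j h =>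
    e.injective (Prod.ext_iff.1 (toLex.injective h)).2
  refine det_of_isLowerTriangular M fun i j (hij : i < j) => hM i j hij.ne ?_
  rcases Prod.Lex.lt_iff.1 (show toLex (b i, e i) < toLex (b j, e j) from hij)
    with h | ⟨h, -⟩ <;> exact h.le

theorem det_updateCol_single_self (M : Matrix m m R) (j : m) :
    (M.updateCol j (Pi.single j 1)).det =
      (M.submatrix (↑) (↑) : Matrix {x // x ≠ j} {x // x ≠ j} R).det := by
  rw [twoBlockTriangular_det _ (· = j) fun i hi k hk => by simp [hk, hi],
    @det_unique _ _ _ _ _ (Subtype.fintype _)]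
  change M.updateCol j (Pi.single j 1) j j * _ = _
  rw [updateCol_self, Pi.single_eq_same, one_mul]
  congr 1
  ext i k
  exact updateCol_ne k.2

theorem det_diagonal_comp_sub_mul_prod {ι W F : Type*} [Fintype ι] [DecidableEq ι]
    [Fintype W] [DecidableEq W] [Field F] (τ : W → ι) (a : ι → F) (ha : ∀ i, a i ≠ 0)
    (g : ι → W → F) :
    (diagonal (a ∘ τ) - of fun u v => g (τ u) v).det * ∏ i, a i =
      (∏ u, a (τ u)) * (diagonal a - of fun s t => ∑ v with τ v = t, g s v).det := by
  -- both sides are `∏ u, a (τ u)` times `∏ i, a i` times `det (1 - D' * (G * P))`, by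
  -- `det (1 - A * B) = det (1 - B * A)` applied to `A = P` and `B = D' * G`
  let P : Matrix W ι F := of fun u s => if τ u = s then 1 else 0
  let G : Matrix ι W F := of g
  let D' : Matrix ι ι F := diagonal fun i => (a i)⁻¹
  have hPG : P * G = of fun u v => g (τ u) v := by ext; simp [P, G, mul_apply]
  have hGP : G * P = of fun s t => ∑ v with τ v = t, g s v := by
    ext; simp [P, G, mul_apply, Finset.sum_filter]
  have hDP : diagonal (a ∘ τ) * P = P * diagonal a := by
    ext u s
    by_cases h : τ u = s <;> simp [P, h]
  have hD' : diagonal a * D' = 1 := by simp [D', diagonal_mul_diagonal, ha]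
  have h1 : diagonal (a ∘ τ) - P * G = diagonal (a ∘ τ) * (1 - P * (D' * G)) := by
    rw [mul_sub, mul_one, ← Matrix.mul_assoc, ← Matrix.mul_assoc, hDP, Matrix.mul_assoc P, hD',
      Matrix.mul_one]
  have h2 : diagonal a - G * P = diagonal a * (1 - D' * (G * P)) := by
    rw [mul_sub, mul_one, ← Matrix.mul_assoc, hD', Matrix.one_mul]
  rw [← hPG, ← hGP, h1, h2, det_mul, det_mul, det_one_sub_mul_comm, Matrix.mul_assoc D',
    det_diagonal, det_diagonal]
  simp only [Function.comp_apply]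
  ring

end Matrix

theorem Fintype.sum_subtype_eq_sum_ite {α M : Type*} [Fintype α] [AddCommMonoid M]
    (p : α → Prop) [DecidablePred p] (g : α → M) :
    ∑ x : Subtype p, g x = ∑ x, if p x then g x else 0 := by
  rw [← Finset.sum_filter, ← Finset.sum_subtype_eq_sum_filter, Finset.subtype_univ]

namespace Function

theorem exists_iterate_mem_periodicPts {α : Type*} [Finite α] (f : α → α) (x : α) :
    ∃ m, f^[m] x ∈ periodicPts f := by
  obtain ⟨m, n, hne, heq⟩ := Finite.exists_ne_map_eq_of_infinite (f^[·] x)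
  wlog hmn : m < n generalizing m n
  · exact this n m hne.symm heq.symm (hne.lt_or_gt.resolve_left hmn)
  refine ⟨m, mk_mem_periodicPts (Nat.sub_pos_of_lt hmn) ?_⟩
  rw [IsPeriodicPt, IsFixedPt, ← iterate_add_apply, Nat.sub_add_cancel hmn.le]
  exact heq.symm

theorem exists_rank_lt_of_forall_exists_iterate_eq {α : Type*} {f : α → α} {r : α}
    (h : ∀ v, ∃ k, f^[k] v = r) : ∃ b : α → ℕ, ∀ u, u ≠ r → b (f u) < b u := by
  classical
  refine ⟨fun v => Nat.find (h v), fun u hu => show Nat.find _ < Nat.find _ from ?_⟩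
  have hpos : 0 < Nat.find (h u) :=
    Nat.pos_of_ne_zero fun h0 => hu (by simpa [h0] using Nat.find_spec (h u))
  have hfu : f^[Nat.find (h u) - 1] (f u) = r := by
    rw [← iterate_succ_apply, Nat.succ_eq_add_one, Nat.sub_add_cancel hpos]
    exact Nat.find_spec (h u)
  exact (Nat.find_le hfu).trans_lt (Nat.sub_lt hpos one_pos)

end Function

section MatrixTree

variable {V : Type*} [Fintype V] [DecidableEq V] {R : Type*} [CommRing R]

variable (R) in
def funGraphMatrix (f : V → V) (r : V) : Matrix {x // x ≠ r} {x // x ≠ r} R :=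
  of fun u v => if f u = v then 1 else 0

theorem det_one_sub_funGraphMatrix_of_reaches {f : V → V} {r : V}
    (h : ∀ v, ∃ k, f^[k] v = r) : (1 - funGraphMatrix R f r).det = 1 := by
  obtain ⟨b, hb⟩ := exists_rank_lt_of_forall_exists_iterate_eq h
  have hlt (u v : {x // x ≠ r}) (huv : f u = v) : b v < b u := huv ▸ hb u u.2
  rw [det_eq_prod_diag_of_rank _ fun u : {x // x ≠ r} => b u]
  · refine Finset.prod_eq_one fun u _ => ?_
    have hu : f u ≠ u := fun hu => (hlt u u hu).false
    simp [funGraphMatrix, hu]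
  · intro u v huv hle
    have hf : f u ≠ v := fun hf => (hlt u v hf).not_ge hle
    simp [funGraphMatrix, one_apply_ne huv, hf]

theorem det_one_sub_funGraphMatrix_of_not_reaches {f : V → V} {r : V} (hr : f r = r)
    (h : ¬ ∀ v, ∃ k, f^[k] v = r) : (1 - funGraphMatrix R f r).det = 0 := by
  push Not at h
  obtain ⟨v₀, hv₀⟩ := h
  obtain ⟨m, hm⟩ := exists_iterate_mem_periodicPts f v₀
  -- `f` permutes its periodic points, none of which is `r` here, so their indicator `c`
  -- is a nonzero left null vector
  let c : {x // x ≠ r} → R := fun u => if u.1 ∈ periodicPts f then 1 else 0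
  have hc (v : {x // x ≠ r}) : (c ᵥ* funGraphMatrix R f r) v = c v := by
    simp only [vecMul, dotProduct]
    by_cases hv : v.1 ∈ periodicPts f
    · obtain ⟨u, hu, huv⟩ := (bijOn_periodicPts f).surjOn hv
      have hur : u ≠ r := fun h => v.2 (by rw [← huv, h, hr])
      rw [Finset.sum_eq_single ⟨u, hur⟩ _ (by simp)]
      · simp [c, funGraphMatrix, hu, hv, huv]
      · intro u' _ hu'
        by_cases hp : u'.1 ∈ periodicPts f
        · have : f u' ≠ v := fun h' =>
            hu' (Subtype.ext ((bijOn_periodicPts f).injOn hp hu (h'.trans huv.symm)))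
          simp [funGraphMatrix, this]
        · simp [c, hp]
    · refine (Finset.sum_eq_zero fun u _ => ?_).trans (by simp [c, hv])
      by_cases hp : u.1 ∈ periodicPts f
      · have : f u ≠ v := fun h' => hv (h' ▸ (bijOn_periodicPts f).mapsTo hp)
        simp [funGraphMatrix, this]
      · simp [c, hp]
  rw [← det_transpose]
  refine det_eq_zero_of_mulVec_eq_zero_of_mem_nonZeroDivisors (v := c) (i := ⟨_, hv₀ m⟩) ?_
    (by simp [c, hm])
  rw [mulVec_transpose, vecMul_sub, vecMul_one, sub_eq_zero]
  exact funext fun v => (hc v).symm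

theorem det_one_sub_funGraphMatrix {f : V → V} {r : V} (hr : f r = r) :
    (1 - funGraphMatrix R f r).det = if ∀ v, ∃ k, f^[k] v = r then 1 else 0 := by
  split_ifs with h
  · exact det_one_sub_funGraphMatrix_of_reaches h
  · exact det_one_sub_funGraphMatrix_of_not_reaches hr h

variable (R) in
def laplacian (w : V → V → R) : Matrix V V R :=
  diagonal (fun u => ∑ x, w u x) - of w

variable (R) in
def reducedLaplacian (w : V → V → R) (r : V) : Matrix {x // x ≠ r} {x // x ≠ r} R :=
  (laplacian R w).submatrix (↑) (↑)

abbrev ParentMap (V : Type*) (r : V) : Type _ :=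
  {f : V → V // f r = r ∧ ∀ v, ∃ k, f^[k] v = r}

@[simps]
def restrictNeEquiv (r : V) : {f : V → V // f r = r} ≃ ({x // x ≠ r} → V) where
  toFun f u := f.1 u
  invFun g := ⟨fun x => if h : x = r then r else g ⟨x, h⟩, by simp⟩
  left_inv f := by
    ext x
    by_cases h : x = r
    · simp [h, f.2]
    · simp [h]
  right_inv g := by
    ext u
    simp [u.2]

theorem det_reducedLaplacian (w : V → V → R) (r : V) :
    (reducedLaplacian R w r).det = ∑ f : ParentMap V r, ∏ u : {x // x ≠ r}, w u (f.1 u) := by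
  have hrows : reducedLaplacian R w r =
      of fun u : {x // x ≠ r} => ∑ x, fun v : {x // x ≠ r} =>
      w u x * ((1 : Matrix {x // x ≠ r} {x // x ≠ r} R) u v - if x = v.1 then 1 else 0) := by
    ext u v
    by_cases h : u = v <;>
      simp [reducedLaplacian, laplacian, Finset.sum_apply, mul_sub, Subtype.val_inj, h]
  have hexpand : (reducedLaplacian R w r).det = ∑ p : {x // x ≠ r} → V,
      (∏ u : {x // x ≠ r}, w u (p u)) *
        (1 - funGraphMatrix R ((restrictNeEquiv r).symm p).1 r).det := by
    rw [hrows]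
    refine (detRowAlternating.toMultilinearMap.map_sum _).trans
      (Finset.sum_congr rfl fun p _ => ?_)
    rw [← det_mul_column]
    refine congrArg det (ext fun u v => ?_)
    simp [funGraphMatrix, restrictNeEquiv, u.2]
  rw [hexpand, ← (restrictNeEquiv r).sum_comp]
  simp only [Equiv.symm_apply_apply, restrictNeEquiv_apply]
  rw [Fintype.sum_subtype_eq_sum_ite (fun f : V → V => f r = r ∧ ∀ v, ∃ k, f^[k] v = r)
      fun f => ∏ u : {x // x ≠ r}, w u (f u),
    Fintype.sum_subtype_eq_sum_ite (fun f : V → V => f r = r)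
      fun f => (∏ u : {x // x ≠ r}, w u (f u)) * (1 - funGraphMatrix R f r).det]
  refine Finset.sum_congr rfl fun f _ => ?_
  by_cases hr : f r = r
  · simp [hr, det_one_sub_funGraphMatrix hr]
  · simp [hr]

end MatrixTree

theorem sum_det_laplacian_add_col {ι R J : Type*} [Fintype ι] [DecidableEq ι] [CommRing R]
    [Fintype J] (z : ι → ι → R) (ρ : ι) (c : J → ι → R)
    (hc : ∀ t, ∑ j, c j t = z t ρ) :
    ∑ j, (laplacian R z + of fun t u => if u = ρ then c j t else 0).det =
      (∑ x, z ρ x) * (reducedLaplacian R z ρ).det := by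
  set K := laplacian R z
  -- `K` is singular, so each determinant is `cramer K (c j) ρ`; the columns `c j` add up to
  -- `(∑ x, z ρ x) • Pi.single ρ 1` minus the `ρ`-th column of `K`
  have hK : K.det = 0 := by
    refine det_eq_zero_of_mulVec_eq_zero_of_mem_nonZeroDivisors (v := 1) (i := ρ) ?_ (by simp)
    ext t
    simp [K, laplacian, mulVec, dotProduct, diagonal_apply]
  have hcol (j : J) : (K + of fun t u => if u = ρ then c j t else 0).det = cramer K (c j) ρ := by
    have : K + (of fun t u => if u = ρ then c j t else 0) =
        K.updateCol ρ ((fun t => K t ρ) + c j) := by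
      ext t u
      by_cases hu : u = ρ <;> simp [hu]
    rw [cramer_apply, this, det_updateCol_add, updateCol_eq_self, hK, zero_add]
  have hsum : ∑ j, c j = (∑ x, z ρ x) • Pi.single ρ 1 - fun t => K t ρ := by
    ext t
    by_cases ht : t = ρ <;> simp [K, laplacian, hc, ht, Finset.sum_apply]
  simp_rw [hcol, ← Finset.sum_apply, ← map_sum, hsum, map_sub, map_smul, Pi.sub_apply,
    Pi.smul_apply, cramer_apply, updateCol_eq_self, hK, det_updateCol_single_self,
    sub_zero, smul_eq_mul]
  rfl

namespace Vtx

open Finset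

variable {d : ℕ} {n : Fin d → ℕ}

theorem sum_filter_fst {M : Type*} [AddCommMonoid M] (f : Vtx d n → M) (t : Fin d) :
    ∑ v with v.1 = t, f v = ∑ i, f ⟨t, i⟩ := by
  rw [sum_filter, Fintype.sum_sigma, Fintype.sum_eq_single t fun t' ht' => by simp [ht']]
  simp

theorem det_reducedLaplacian_mul_prod {F : Type*} [Field F] (y : Fin d → Vtx d n → F)
    (hy : ∀ s, ∑ v, y s v ≠ 0) (r : Vtx d n) :
    (reducedLaplacian F (fun v w => y v.1 w) r).det * ((∏ s, ∑ v, y s v) * ∑ v, y r.1 v) =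
      (∏ s, (∑ v, y s v) ^ n s) *
        (laplacian F (fun s t => ∑ i, y s ⟨t, i⟩) +
          of fun s t => if t = r.1 then y s r else 0).det := by
  have hdiag : (fun s => ∑ w, y s w) = fun s => ∑ t, ∑ i, y s ⟨t, i⟩ :=
    funext fun s => Fintype.sum_sigma _
  have hlump (s t : Fin d) : ∑ v : {x // x ≠ r} with v.1.1 = t, y s v.1 =
      ∑ i, y s ⟨t, i⟩ - if t = r.1 then y s r else 0 := by
    rw [← sum_filter_fst, sum_filter, sum_filter,
      Fintype.sum_eq_add_sum_subtype_ne (fun v => if v.1 = t then y s v else 0) r]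
    simp [eq_comm]
  have hmatrix : (diagonal fun s => ∑ w, y s w) -
      (of fun s t => ∑ v : {x // x ≠ r} with v.1.1 = t, y s v.1) =
      laplacian F (fun s t => ∑ i, y s ⟨t, i⟩) +
        of fun s t => if t = r.1 then y s r else 0 := by
    ext s t
    by_cases ht : t = r.1 <;> simp [laplacian, hlump, hdiag, ht]
    ring
  have hprod : (∏ v : {x // x ≠ r}, ∑ w, y v.1.1 w) * ∑ w, y r.1 w =
      ∏ s, (∑ w, y s w) ^ n s := by
    rw [mul_comm, ← Fintype.prod_eq_mul_prod_subtype_ne (fun v : Vtx d n => ∑ w, y v.1 w),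
      Fintype.prod_sigma]
    simp
  have hL : reducedLaplacian F (fun v w => y v.1 w) r =
      diagonal ((fun s => ∑ w, y s w) ∘ fun v : {x // x ≠ r} => v.1.1) -
        of fun u v => y u.1.1 v.1 := by
    ext u v
    simp [reducedLaplacian, laplacian, diagonal_apply, Subtype.val_inj]
  rw [← hmatrix, ← hprod, hL]
  linear_combination (∑ w, y r.1 w) * det_diagonal_comp_sub_mul_prod
    (fun v : {x // x ≠ r} => v.1.1) (fun s => ∑ w, y s w) hy (fun s v => y s v.1)

end Vtx

namespace MTree

open Finset

variable {d : ℕ} {n : Fin d → ℕ}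

theorem ch_eq_card (T : MTree d n) (s : Fin d) (w : Vtx d n) :
    T.ch s w = #{v | v ≠ T.root ∧ (v.1, T.parent v) = (s, w)} := by
  rw [ch, Nat.card_eq_fintype_card, Fintype.card_subtype]
  congr 1
  ext v
  simp only [mem_filter, mem_univ, true_and, Prod.mk.injEq]
  tauto

theorem prod_pow_ch {M : Type*} [CommMonoid M] (T : MTree d n) (x : Fin d → Vtx d n → M) :
    ∏ s, ∏ w, x s w ^ T.ch s w = ∏ v : {v // v ≠ T.root}, x v.1.1 (T.parent v) := by
  rw [← prod_subtype {v | v ≠ T.root} (by simp) fun v => x v.1 (T.parent v),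
    ← prod_fiberwise _ (fun v => (v.1, T.parent v)), ← Fintype.prod_prod_type']
  refine prod_congr rfl fun p _ => ?_
  rw [ch_eq_card, filter_filter, ← prod_const]
  exact prod_congr rfl fun v hv => by rw [← (mem_filter.1 hv).2.2]

def rootEquiv (ρ : Fin d) :
    {T : MTree d n // T.root.1 = ρ} ≃
      Σ r : {v : Vtx d n // v.1 = ρ}, ParentMap (Vtx d n) r.1 where
  toFun T := ⟨⟨T.1.root, T.2⟩, ⟨T.1.parent, T.1.2⟩⟩
  invFun p := ⟨⟨(p.1.1, p.2.1), p.2.2⟩, p.1.2⟩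
  left_inv _ := rfl
  right_inv _ := rfl

theorem sum_prod_pow_ch_eq_sum_det {R : Type*} [CommRing R] (ρ : Fin d)
    (y : Fin d → Vtx d n → R) :
    ∑ T : {T : MTree d n // T.root.1 = ρ}, ∏ s, ∏ w, y s w ^ T.1.ch s w =
      ∑ r : {v : Vtx d n // v.1 = ρ}, (reducedLaplacian R (fun v w => y v.1 w) r.1).det := by
  simp_rw [det_reducedLaplacian, prod_pow_ch]
  rw [← (rootEquiv ρ).symm.sum_comp, Fintype.sum_sigma]
  rfl

theorem sum_prod_pow_ch_eq {F : Type*} [Field F] (hn : ∀ t, 0 < n t) (ρ : Fin d)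
    (y : Fin d → Vtx d n → F) (hy : ∀ s, ∑ v, y s v ≠ 0) :
    ∑ T : {T : MTree d n // T.root.1 = ρ}, ∏ s, ∏ w, y s w ^ T.1.ch s w =
      (∏ s, (∑ v, y s v) ^ (n s - 1)) *
        ∑ A : Cay d ρ, ∏ s ∈ univ.erase ρ, ∑ i : Fin (n (A.1 s)), y s ⟨A.1 s, i⟩ := by
  let z : Fin d → Fin d → F := fun s t => ∑ i : Fin (n t), y s ⟨t, i⟩
  have hR (s : Fin d) : ∑ v, y s v = ∑ t, z s t := Fintype.sum_sigma _
  have hroots (s : Fin d) : ∑ r : {v : Vtx d n // v.1 = ρ}, y s r = z s ρ := by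
    rw [show z s ρ = ∑ i, y s ⟨ρ, i⟩ from rfl, ← Vtx.sum_filter_fst]
    exact (sum_subtype _ (by simp) _).symm
  have hΔ : ∑ A : Cay d ρ, ∏ s ∈ univ.erase ρ, z s (A.1 s) =
      (reducedLaplacian F z ρ).det := by
    rw [det_reducedLaplacian]
    -- the `Fintype` instances of `Cay d ρ` and `ParentMap (Fin d) ρ` differ in their
    -- decidability instances
    exact sum_congr (congrArg (@univ (Cay d ρ)) (Subsingleton.elim _ _))
      fun A _ => prod_subtype (univ.erase ρ) (p := (· ≠ ρ)) (by simp) _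
  have hroot (r : {v : Vtx d n // v.1 = ρ}) :
      (reducedLaplacian F (fun v w => y v.1 w) r.1).det * ((∏ s, ∑ v, y s v) * ∑ v, y ρ v) =
        (∏ s, (∑ v, y s v) ^ n s) *
          (laplacian F z + of fun s t => if t = ρ then y s r else 0).det := by
    obtain ⟨r, rfl⟩ := r
    exact Vtx.det_reducedLaplacian_mul_prod y hy r
  have hpow : ∏ s, (∑ v, y s v) ^ n s =
      (∏ s, (∑ v, y s v) ^ (n s - 1)) * ∏ s, ∑ v, y s v := by
    rw [← prod_mul_distrib]
    exact prod_congr rfl fun s _ => (pow_sub_one_mul (hn s).ne' _).symm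
  have hN : (∏ s, ∑ v, y s v) * ∑ v, y ρ v ≠ 0 :=
    mul_ne_zero (prod_ne_zero_iff.2 fun s _ => hy s) (hy ρ)
  refine mul_right_cancel₀ hN ?_
  rw [sum_prod_pow_ch_eq_sum_det, sum_mul, sum_congr rfl fun r _ => hroot r, ← mul_sum,
    sum_det_laplacian_add_col z ρ (fun (r : {v : Vtx d n // v.1 = ρ}) s => y s r) hroots,
    ← hR, hΔ, hpow]
  ring

end MTree

/-- **Generating function of multitype Cayley trees (Theorem 2).**
The generating polynomial of rooted multitype Cayley trees of profile `n` with root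
vertex of type `ρ`, counted according to their indegree vectors, is
`∏_s (Σ_{t,i} x_{s,t,i})^{n_s−1} · Δ` where
`Δ = Σ_{A ∈ Cay_d^ρ} ∏_{(s,t)∈A} (Σ_i x_{s,t,i})`. -/
theorem multitype_cayley_generating_function (d : ℕ) (n : Fin d → ℕ)
    (hn : ∀ t, 0 < n t) (ρ : Fin d) :
    ∑ T : {T : MTree d n // T.root.1 = ρ},
        ∏ s : Fin d, ∏ v : Vtx d n,
          (MvPolynomial.X (s, v) : MvPolynomial (Fin d × Vtx d n) ℤ) ^ T.1.ch s v
      =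
    (∏ s : Fin d,
        (∑ v : Vtx d n,
          (MvPolynomial.X (s, v) : MvPolynomial (Fin d × Vtx d n) ℤ)) ^ (n s - 1)) *
      ∑ A : Cay d ρ, ∏ s ∈ Finset.univ.erase ρ,
        ∑ i : Fin (n (A.1 s)),
          (MvPolynomial.X (s, ⟨A.1 s, i⟩) : MvPolynomial (Fin d × Vtx d n) ℤ) := by
  let P := MvPolynomial (Fin d × Vtx d n) ℤ
  let φ := algebraMap P (FractionRing P)
  have hφ : Injective φ := IsFractionRing.injective P (FractionRing P)
  have hX (s : Fin d) : ∑ v, φ (MvPolynomial.X (s, v)) ≠ 0 := by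
    rw [← map_sum, map_ne_zero_iff φ hφ]
    intro h
    have h1 := congrArg (MvPolynomial.eval fun _ => (1 : ℤ)) h
    simp only [map_sum, MvPolynomial.eval_X, map_zero] at h1
    exact (Finset.sum_pos (fun _ _ => one_pos) ⟨⟨ρ, 0, hn ρ⟩, Finset.mem_univ _⟩).ne' h1
  apply hφ
  simpa only [map_sum, map_prod, map_pow, map_mul] using
    MTree.sum_prod_pow_ch_eq hn ρ (fun s v => φ (MvPolynomial.X (s, v))) hX
end

section
/- Fix d ≥ 1, a tuple n = (n_1,…,n_d) of positive integers, and ρ ∈ [d]. Let γ = (γ_{s,t,i})_{s,t∈[d], i∈[n_t]} be a tuple of nonnegative integers, let s,t ∈ [d] and i ≠ j in [n_t], and let γ' be defined by γ'_{s,t,i} = γ_{s,t,i} − 1, γ'_{s,t,j} = γ_{s,t,j} + 1, and γ'_{a,b,c} = γ_{a,b,c} for (a,b,c) ∉ {(s,t,i),(s,t,j)} (assuming γ_{s,t,i} ≥ 1). Then γ_{s,t,i}·|T_{ρ,γ}| = γ'_{s,t,j}·|T_{ρ,γ'}|. -/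
open scoped Classical

/-! Double count the pairs `(T, x)` with `T ∈ T_{ρ,γ}` and `x` a child of type `s` of
`u = (t,i)`: there are `γ_{s,t,i} · |T_{ρ,γ}|` of them. Moving the marked child `x` from `u`
to `w = (t,j)` is a bijection onto the analogous pairs for `γ'` and `w`, with inverse the
move from `w` back to `u`. The move reattaches `x` to `w` and then relabels by `σ`, the
transposition `(u w)` if `w` lies in the subtree of `x` (where plain reattachment would close a
cycle) and the identity otherwise: every non-root vertex `y` of the new tree gets the parent
that `σ y` has after the reattachment. As `σ` preserves types, the child counts change only by
one child of type `s` passing from `u` to `w`. -/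

open Function

theorem Nat.card_subtype_add_ite_eq {α : Type*} [Finite α] {P Q : α → Prop} {v : α}
    (h : ∀ x ≠ v, P x ↔ Q x) :
    Nat.card {x // P x} + (if Q v then 1 else 0) =
      Nat.card {x // Q x} + (if P v then 1 else 0) := by
  have := Fintype.ofFinite α
  have hcompl :
      ∑ x ∈ {v}ᶜ, (if P x then 1 else 0) = ∑ x ∈ {v}ᶜ, (if Q x then 1 else 0) :=
    Finset.sum_congr rfl fun x hx =>
      if_congr (h x (Finset.notMem_singleton.mp (Finset.mem_compl.mp hx))) rfl rfl
  simp only [Nat.card_eq_fintype_card, Fintype.card_subtype, Finset.card_filter]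
  rw [Fintype.sum_eq_add_sum_compl v,
    Fintype.sum_eq_add_sum_compl v (fun x => if Q x then 1 else 0), hcompl]
  ring

namespace ParentMap

variable {α : Type*} {p q : α → α} {r u v w x y z : α}

def Reaches (p : α → α) (x y : α) : Prop := ∃ k, p^[k] x = y

def IsRootedAt (p : α → α) (r : α) : Prop := p r = r ∧ ∀ x, Reaches p x r

namespace Reaches

@[refl]
theorem refl (p : α → α) (x : α) : Reaches p x x := ⟨0, rfl⟩

theorem trans (hxy : Reaches p x y) (hyz : Reaches p y z) : Reaches p x z := by
  obtain ⟨k, rfl⟩ := hxy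
  obtain ⟨l, rfl⟩ := hyz
  exact ⟨l + k, iterate_add_apply p l k x⟩

theorem of_apply_eq (h : p x = y) : Reaches p x y := ⟨1, h⟩

theorem apply_of_ne (h : Reaches p x y) (hxy : x ≠ y) : Reaches p (p x) y := by
  obtain ⟨_ | k, hk⟩ := h
  · exact absurd hk hxy
  · exact ⟨k, by rwa [← iterate_succ_apply]⟩

theorem exists_iterate_first (h : Reaches p x y) :
    ∃ k, p^[k] x = y ∧ ∀ l < k, p^[l] x ≠ y :=
  ⟨Nat.find h, Nat.find_spec h, fun _ => Nat.find_min h⟩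

theorem of_iterate_eq_of_eqOn {S : Set α} (hq : Set.EqOn q p Sᶜ) {k : ℕ}
    (hk : p^[k] x = y) (hS : ∀ l < k, p^[l] x ∉ S) : Reaches q x y := by
  refine ⟨k, ?_⟩
  induction k generalizing y with
  | zero => exact hk
  | succ k ih =>
    rw [iterate_succ_apply', ih rfl fun l hl => hS l (by omega), ← hk,
      iterate_succ_apply', hq (hS k (by omega))]

theorem of_eqOn {S : Set α} (hq : Set.EqOn q p Sᶜ) (hxy : Reaches p x y)
    (hS : ∀ z ∈ S, ¬ Reaches p x z) : Reaches q x y := by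
  obtain ⟨k, hk⟩ := hxy
  exact of_iterate_eq_of_eqOn hq hk fun l _ hl => hS _ hl ⟨l, rfl⟩

theorem of_eqOn_compl_singleton (hq : Set.EqOn q p {y}ᶜ) (h : Reaches q x y) :
    Reaches p x y := by
  obtain ⟨k, hk, hfirst⟩ := h.exists_iterate_first
  exact of_iterate_eq_of_eqOn hq.symm hk hfirst

end Reaches

namespace IsRootedAt

variable (ht : IsRootedAt p r)
include ht

theorem iterate_root (k : ℕ) : p^[k] r = r := iterate_fixed ht.1 k

theorem eq_of_reaches_root (h : Reaches p r x) : x = r := by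
  obtain ⟨k, rfl⟩ := h
  exact ht.iterate_root k

theorem eq_root_of_reaches_apply (h : Reaches p (p x) x) : x = r := by
  obtain ⟨k, hk⟩ := h
  have hper : IsPeriodicPt p (k + 1) x := by
    rw [IsPeriodicPt, IsFixedPt, iterate_succ_apply, hk]
  obtain ⟨m, hm⟩ := ht.2 x
  rw [← (hper.mul_const m).eq, ← Nat.sub_add_cancel (Nat.le_mul_of_pos_left m k.succ_pos),
    iterate_add_apply, hm, ht.iterate_root]

theorem not_reaches_apply (hyx : Reaches p y x) (hx : x ≠ r) : ¬ Reaches p (p x) y :=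
  fun h => hx (ht.eq_root_of_reaches_apply (h.trans hyx))

theorem apply_ne_self (hx : x ≠ r) : p x ≠ x :=
  fun h => hx (ht.eq_root_of_reaches_apply (.of_apply_eq (by rw [h, h])))

/-- Every `p`-path to the root first meets `S ∪ {r}`, and `q` follows it up to there. -/
theorem reaches_of_eqOn {S : Set α} (hq : Set.EqOn q p Sᶜ) {r' : α}
    (hS : ∀ z ∈ S, Reaches q z r') (hr : Reaches q r r') (x : α) : Reaches q x r' := by
  have hex : ∃ m, p^[m] x ∈ S ∨ p^[m] x = r := by
    obtain ⟨k, hk⟩ := ht.2 x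
    exact ⟨k, .inr hk⟩
  have hfirst : Reaches q x (p^[Nat.find hex] x) :=
    Reaches.of_iterate_eq_of_eqOn hq rfl fun l hl hlS => Nat.find_min hex hl (.inl hlS)
  rcases Nat.find_spec hex with hS' | hr'
  · exact hfirst.trans (hS _ hS')
  · exact hfirst.trans (by rwa [hr'])

theorem update_of_not_reaches (hvr : v ≠ r) (hs : ¬ Reaches p w v) :
    IsRootedAt (update p v w) r := by
  have hq : Set.EqOn (update p v w) p {v}ᶜ := fun z hz => update_of_ne hz _ _
  have hw : Reaches (update p v w) w r :=
    .of_eqOn hq (ht.2 w) fun z hz => by rwa [Set.mem_singleton_iff.mp hz]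
  refine ⟨by rw [update_of_ne hvr.symm, ht.1],
    ht.reaches_of_eqOn hq (fun z hz => ?_) (.refl _ r)⟩
  rw [Set.mem_singleton_iff.mp hz]
  exact (Reaches.of_apply_eq (update_self v w p)).trans hw

end IsRootedAt

noncomputable def childCount {β : Type*} (τ : α → β) (p : α → α) (r : α)
    (a : β) (b : α) : ℕ :=
  Nat.card {x // τ x = a ∧ x ≠ r ∧ p x = b}

theorem childCount_update [Finite α] {β : Type*} (τ : α → β) (hvr : v ≠ r)
    (a : β) (b : α) :
    childCount τ (update p v w) r a b + (if τ v = a ∧ p v = b then 1 else 0) =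
      childCount τ p r a b + (if τ v = a ∧ w = b then 1 else 0) := by
  have key := Nat.card_subtype_add_ite_eq (v := v)
    (P := fun x => τ x = a ∧ x ≠ r ∧ update p v w x = b)
    (Q := fun x => τ x = a ∧ x ≠ r ∧ p x = b) fun x hx => by rw [update_of_ne hx]
  simpa only [childCount, update_self, ne_eq, hvr, not_false_eq_true, true_and] using key

noncomputable def moveSwap (p : α → α) (v u w : α) : Equiv.Perm α :=
  if Reaches p w v then Equiv.swap u w else 1

/-- Moves the child `v` of `u` to `w`. If `w` lies in the subtree of `v`, plain reattachment
would close a cycle, so `u` and `w` also exchange their parents (and `w` becomes the root if `u`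
was); for `w = v` this reverses the edge from `v` to `u`. -/
noncomputable def moveChild (p : α → α) (v u w : α) : α → α := fun x =>
  if x = u ∨ x = w then moveSwap p v u w (p (moveSwap p v u w x))
  else if x = v then w else p x

theorem moveSwap_of_reaches (h : Reaches p w v) : moveSwap p v u w = Equiv.swap u w := if_pos h

theorem moveSwap_of_not_reaches (h : ¬ Reaches p w v) : moveSwap p v u w = 1 := if_neg h

theorem moveSwap_apply_of_ne (hu : x ≠ u) (hw : x ≠ w) : moveSwap p v u w x = x := by
  unfold moveSwap
  split_ifs
  · exact Equiv.swap_apply_of_ne_of_ne hu hw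
  · rfl

theorem moveSwap_apply_eq_or (hx : x = u ∨ x = w) :
    moveSwap p v u w x = u ∨ moveSwap p v u w x = w := by
  unfold moveSwap
  split_ifs
  · rcases hx with rfl | rfl <;> simp
  · exact hx

@[simp]
theorem moveSwap_moveSwap : moveSwap p v u w (moveSwap p v u w x) = x := by
  unfold moveSwap
  split_ifs
  · exact Equiv.swap_apply_self u w x
  · rfl

theorem moveSwap_apply_eq_iff : moveSwap p v u w x = y ↔ x = moveSwap p v u w y := by
  rw [← (moveSwap p v u w).injective.eq_iff, moveSwap_moveSwap]

theorem apply_moveSwap {β : Type*} {τ : α → β} (hτ : τ u = τ w) :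
    τ (moveSwap p v u w x) = τ x := by
  unfold moveSwap
  split_ifs
  · rw [Equiv.swap_apply_def]
    split_ifs <;> subst_vars <;> simp [hτ]
  · rfl

theorem moveChild_apply_of_eq_or (hx : x = u ∨ x = w) :
    moveChild p v u w x = moveSwap p v u w (p (moveSwap p v u w x)) := if_pos hx

theorem moveChild_apply_of_ne_of_ne (hu : x ≠ u) (hw : x ≠ w) :
    moveChild p v u w x = if x = v then w else p x := if_neg (by tauto)

theorem eqOn_moveChild : Set.EqOn (moveChild p v u w) p {u, v, w}ᶜ := fun x hx => by
  simp only [Set.mem_compl_iff, Set.mem_insert_iff, Set.mem_singleton_iff, not_or] at hx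
  rw [moveChild_apply_of_ne_of_ne hx.1 hx.2.2, if_neg hx.2.1]

section Move

variable (ht : IsRootedAt p r) (hv : p v = u) (hvr : v ≠ r)
include ht hv hvr

theorem moveChild_of_not_reaches (hs : ¬ Reaches p w v) : moveChild p v u w = update p v w := by
  have hvu : v ≠ u := hv ▸ (ht.apply_ne_self hvr).symm
  have hvw : v ≠ w := fun h => hs (h ▸ .refl p v)
  funext x
  simp only [moveChild, moveSwap_of_not_reaches hs, Equiv.Perm.one_apply, update_apply]
  by_cases hx : x = v
  · subst hx; simp [hvu, hvw]
  · simp [hx]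

theorem moveChild_apply (hx : x ≠ moveSwap p v u w r) :
    moveChild p v u w x = update p v w (moveSwap p v u w x) := by
  by_cases hs : Reaches p w v
  swap
  · rw [moveChild_of_not_reaches ht hv hvr hs, moveSwap_of_not_reaches hs, Equiv.Perm.one_apply]
  have hvu : v ≠ u := hv ▸ (ht.apply_ne_self hvr).symm
  have hwr : w ≠ r := fun h => hvr (ht.eq_of_reaches_root (h ▸ hs))
  rw [moveSwap_of_reaches hs] at hx ⊢
  by_cases hxu : x = u
  · subst hxu
    rw [moveChild_apply_of_eq_or (.inl rfl), moveSwap_of_reaches hs, Equiv.swap_apply_left]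
    by_cases hwv : w = v
    · subst hwv; rw [hv, update_self, Equiv.swap_apply_left]
    · have hpwu : p w ≠ x := fun h =>
        ht.not_reaches_apply (.refl p v) hvr (hv ▸ h ▸ hs.apply_of_ne hwv)
      rw [update_of_ne hwv, Equiv.swap_apply_of_ne_of_ne hpwu (ht.apply_ne_self hwr)]
  by_cases hxw : x = w
  · subst hxw
    have hur : u ≠ r := by
      rintro rfl
      exact hx (Equiv.swap_apply_left u x).symm
    have hpux : p u ≠ x := fun h =>
      ht.not_reaches_apply (hs.trans (.of_apply_eq hv)) hur (h ▸ .refl p x)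
    rw [moveChild_apply_of_eq_or (.inr rfl), moveSwap_of_reaches hs, Equiv.swap_apply_right,
      update_of_ne hvu.symm, Equiv.swap_apply_of_ne_of_ne (ht.apply_ne_self hur) hpux]
  · rw [moveChild_apply_of_ne_of_ne hxu hxw, Equiv.swap_apply_of_ne_of_ne hxu hxw, update_apply]

theorem moveChild_moveSwap_self : moveChild p v u w (moveSwap p v u w v) = w := by
  rw [moveChild_apply ht hv hvr (by rwa [Ne, moveSwap_apply_eq_iff, moveSwap_moveSwap]),
    moveSwap_moveSwap, update_self]

omit hv in
theorem moveChild_moveSwap_root :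
    moveChild p v u w (moveSwap p v u w r) = moveSwap p v u w r := by
  by_cases hσr : moveSwap p v u w r = u ∨ moveSwap p v u w r = w
  · rw [moveChild_apply_of_eq_or hσr, moveSwap_moveSwap, ht.1]
  · have hr : ¬ (r = u ∨ r = w) := fun h => hσr (moveSwap_apply_eq_or h)
    rw [not_or] at hr
    rw [moveSwap_apply_of_ne hr.1 hr.2, moveChild_apply_of_ne_of_ne hr.1 hr.2, if_neg hvr.symm,
      ht.1]

theorem childCount_moveChild [Finite α] {β : Type*} {τ : α → β} (hτ : τ u = τ w)
    (a : β) (b : α) :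
    childCount τ (moveChild p v u w) (moveSwap p v u w r) a b +
        (if τ v = a ∧ u = b then 1 else 0) =
      childCount τ p r a b + (if τ v = a ∧ w = b then 1 else 0) := by
  have hcongr : childCount τ (moveChild p v u w) (moveSwap p v u w r) a b =
      childCount τ (update p v w) r a b := by
    refine Nat.card_congr (Equiv.subtypeEquiv (moveSwap p v u w) fun x => ?_)
    rw [apply_moveSwap hτ, ne_eq, ne_eq, moveSwap_apply_eq_iff]
    exact and_congr_right fun _ => and_congr_right fun hx => by rw [moveChild_apply ht hv hvr hx]
  rw [hcongr, ← hv]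
  exact childCount_update τ hvr a b

section Reaches

variable (hs : Reaches p w v)
include hs

theorem reaches_moveSwap_self_of_reaches :
    Reaches (moveChild p v u w) u (moveSwap p v u w v) := by
  have hvu : v ≠ u := hv ▸ (ht.apply_ne_self hvr).symm
  have hwr : w ≠ r := fun h => hvr (ht.eq_of_reaches_root (h ▸ hs))
  have huv : ¬ Reaches p u v := hv ▸ ht.not_reaches_apply (.refl p v) hvr
  rw [moveSwap_of_reaches hs]
  by_cases hwv : w = v
  · subst hwv; rw [Equiv.swap_apply_right]
  rw [Equiv.swap_apply_of_ne_of_ne hvu (Ne.symm hwv)]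
  have hu : moveChild p v u w u = p w := by
    rw [moveChild_apply ht hv hvr, moveSwap_of_reaches hs, Equiv.swap_apply_left, update_of_ne hwv]
    rwa [moveSwap_of_reaches hs, Ne, ← Equiv.swap_apply_eq_iff, Equiv.swap_apply_left]
  -- the first `p`-path from `p w` to `v` avoids `u` and `w`, where `moveChild` differs from `p`
  obtain ⟨k, hk, hfirst⟩ := (hs.apply_of_ne hwv).exists_iterate_first
  refine (Reaches.of_apply_eq hu).trans (.of_iterate_eq_of_eqOn eqOn_moveChild hk ?_)
  rintro l hl (h | h | h)
  · exact huv ⟨k - l, by rw [← h, ← iterate_add_apply, Nat.sub_add_cancel hl.le, hk]⟩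
  · exact hfirst l hl h
  · exact hwr (ht.eq_root_of_reaches_apply ⟨l, h⟩)

theorem reaches_moveSwap_root_of_reaches :
    Reaches (moveChild p v u w) w (moveSwap p v u w r) := by
  have hwr : w ≠ r := fun h => hvr (ht.eq_of_reaches_root (h ▸ hs))
  rw [moveSwap_of_reaches hs]
  by_cases hur : u = r
  · rw [← hur, Equiv.swap_apply_left]
  rw [Equiv.swap_apply_of_ne_of_ne (Ne.symm hur) (Ne.symm hwr)]
  have hw : moveChild p v u w w = p u := by
    rw [moveChild_apply ht hv hvr, moveSwap_of_reaches hs, Equiv.swap_apply_right,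
      update_of_ne (hv ▸ ht.apply_ne_self hvr)]
    rwa [moveSwap_of_reaches hs, Equiv.swap_apply_of_ne_of_ne (Ne.symm hur) (Ne.symm hwr)]
  refine (Reaches.of_apply_eq hw).trans (.of_eqOn eqOn_moveChild (ht.2 (p u)) ?_)
  rintro z (rfl | rfl | rfl)
  · exact ht.not_reaches_apply (.refl p z) hur
  · exact ht.not_reaches_apply (.of_apply_eq hv) hur
  · exact ht.not_reaches_apply (hs.trans (.of_apply_eq hv)) hur

end Reaches

theorem isRootedAt_moveChild : IsRootedAt (moveChild p v u w) (moveSwap p v u w r) := by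
  by_cases hs : Reaches p w v
  swap
  · rw [moveChild_of_not_reaches ht hv hvr hs, moveSwap_of_not_reaches hs]
    exact ht.update_of_not_reaches hvr hs
  have hwr : w ≠ r := fun h => hvr (ht.eq_of_reaches_root (h ▸ hs))
  have hRw := reaches_moveSwap_root_of_reaches ht hv hvr hs
  have hRv : Reaches (moveChild p v u w) (moveSwap p v u w v) (moveSwap p v u w r) :=
    (Reaches.of_apply_eq (moveChild_moveSwap_self ht hv hvr)).trans hRw
  have hRu := (reaches_moveSwap_self_of_reaches ht hv hvr hs).trans hRv
  refine ⟨moveChild_moveSwap_root ht hvr, ht.reaches_of_eqOn eqOn_moveChild ?_ ?_⟩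
  · rintro z (rfl | rfl | rfl)
    · exact hRu
    · by_cases hzw : z = w
      · exact hzw ▸ hRw
      · rwa [moveSwap_apply_of_ne (hv ▸ (ht.apply_ne_self hvr).symm) hzw] at hRv
    · exact hRw
  · by_cases hur : u = r
    · exact hur ▸ hRu
    · rw [moveSwap_apply_of_ne (Ne.symm hur) (Ne.symm hwr)]

theorem moveSwap_moveChild :
    moveSwap (moveChild p v u w) (moveSwap p v u w v) w u = moveSwap p v u w := by
  by_cases hs : Reaches p w v
  · rw [moveSwap_of_reaches (reaches_moveSwap_self_of_reaches ht hv hvr hs),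
      moveSwap_of_reaches hs, Equiv.swap_comm]
  · have hs' : ¬ Reaches (moveChild p v u w) u (moveSwap p v u w v) := by
      rw [moveChild_of_not_reaches ht hv hvr hs, moveSwap_of_not_reaches hs, Equiv.Perm.one_apply]
      exact fun h => ht.not_reaches_apply (.refl p v) hvr
        (hv ▸ h.of_eqOn_compl_singleton fun z hz => update_of_ne hz _ _)
    rw [moveSwap_of_not_reaches hs', moveSwap_of_not_reaches hs]

theorem moveChild_moveChild : moveChild (moveChild p v u w) (moveSwap p v u w v) w u = p := by
  funext x
  by_cases hx : x = w ∨ x = u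
  · rw [moveChild_apply_of_eq_or hx, moveSwap_moveChild ht hv hvr,
      moveChild_apply_of_eq_or (moveSwap_apply_eq_or hx.symm), moveSwap_moveSwap,
      moveSwap_moveSwap]
  obtain ⟨hxw, hxu⟩ := not_or.mp hx
  rw [moveChild_apply_of_ne_of_ne hxw hxu, moveChild_apply_of_ne_of_ne hxu hxw]
  by_cases hxv : x = v
  · subst hxv
    rw [if_pos (moveSwap_apply_of_ne hxu hxw).symm, hv]
  · have hσv : x ≠ moveSwap p v u w v := by
      by_cases hv' : v = u ∨ v = w
      · exact fun h => hx (h ▸ (moveSwap_apply_eq_or hv').symm)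
      · rwa [moveSwap_apply_of_ne (not_or.mp hv').1 (not_or.mp hv').2]
    rw [if_neg hσv, if_neg hxv]

end Move

end ParentMap

open ParentMap

namespace MTree

variable {d : ℕ} {n : Fin d → ℕ}

theorem isRootedAt (T : MTree d n) : IsRootedAt T.parent T.root := T.2

section Move

variable (T : MTree d n) {x u : Vtx d n} (hx : T.parent x = u) (hxr : x ≠ T.root) (w : Vtx d n)

noncomputable def move : MTree d n :=
  ⟨(moveSwap T.parent x u w T.root, moveChild T.parent x u w),
    isRootedAt_moveChild T.isRootedAt hx hxr⟩

theorem parent_move : (T.move hx hxr w).parent = moveChild T.parent x u w := rfl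

theorem ch_move (hτ : u.1 = w.1) (a : Fin d) (b : Vtx d n) :
    (T.move hx hxr w).ch a b + (if x.1 = a ∧ u = b then 1 else 0) =
      T.ch a b + (if x.1 = a ∧ w = b then 1 else 0) := by
  -- the `if`s differ from those of `childCount_moveChild` only in their `Decidable` instances
  convert childCount_moveChild T.isRootedAt hx hxr hτ a b using 3 <;> rfl

theorem parent_move_moveSwap : (T.move hx hxr w).parent (moveSwap T.parent x u w x) = w :=
  moveChild_moveSwap_self T.isRootedAt hx hxr

theorem moveSwap_ne_root_move : moveSwap T.parent x u w x ≠ (T.move hx hxr w).root :=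
  (moveSwap T.parent x u w).injective.ne hxr

theorem move_move :
    (T.move hx hxr w).move (T.parent_move_moveSwap hx hxr w) (T.moveSwap_ne_root_move hx hxr w) u =
      T := by
  refine Subtype.ext (Prod.ext ?_ (moveChild_moveChild T.isRootedAt hx hxr))
  change moveSwap (moveChild T.parent x u w) (moveSwap T.parent x u w x) w u
    (moveSwap T.parent x u w T.root) = T.root
  rw [moveSwap_moveChild T.isRootedAt hx hxr, moveSwap_moveSwap]

end Move

abbrev WithChildCounts (ρ : Fin d) (δ : Fin d → Vtx d n → ℕ) : Type :=
  {T : MTree d n // T.root.1 = ρ ∧ ∀ a b, T.ch a b = δ a b}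

abbrev MarkedChild (s : Fin d) (u : Vtx d n) (T : MTree d n) : Type :=
  {x : Vtx d n // x.1 = s ∧ x ≠ T.root ∧ T.parent x = u}

theorem card_sigma_markedChild (ρ s : Fin d) (δ : Fin d → Vtx d n → ℕ) (u : Vtx d n) :
    Nat.card (Σ T : WithChildCounts ρ δ, MarkedChild s u T.1) =
      Nat.card (WithChildCounts ρ δ) * δ s u := by
  rw [Nat.card_sigma, Finset.sum_congr rfl fun T _ => T.2.2 s u, Finset.sum_const,
    Finset.card_univ, smul_eq_mul, Nat.card_eq_fintype_card]

section MarkedChild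

variable {ρ s : Fin d} {δ δ' : Fin d → Vtx d n → ℕ} {u w : Vtx d n} (hτ : u.1 = w.1)
  (hδ : ∀ a b, δ a b + (if s = a ∧ w = b then 1 else 0) =
    δ' a b + (if s = a ∧ u = b then 1 else 0))

noncomputable def moveMarkedChild (q : Σ T : WithChildCounts ρ δ, MarkedChild s u T.1) :
    Σ T : WithChildCounts ρ δ', MarkedChild s w T.1 :=
  ⟨⟨move q.1.1 q.2.2.2.2 q.2.2.2.1 w,
      (apply_moveSwap (τ := Sigma.fst) hτ).trans q.1.2.1, fun a b => by
        have h := ch_move q.1.1 q.2.2.2.2 q.2.2.2.1 w hτ a b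
        simp only [q.2.2.1, q.1.2.2 a b] at h
        have := hδ a b
        omega⟩,
    ⟨moveSwap q.1.1.parent q.2.1 u w q.2.1, (apply_moveSwap (τ := Sigma.fst) hτ).trans q.2.2.1,
      moveSwap_ne_root_move q.1.1 q.2.2.2.2 q.2.2.2.1 w,
      parent_move_moveSwap q.1.1 q.2.2.2.2 q.2.2.2.1 w⟩⟩

theorem moveMarkedChild_moveMarkedChild (q : Σ T : WithChildCounts ρ δ, MarkedChild s u T.1) :
    moveMarkedChild hτ.symm (fun a b => (hδ a b).symm) (moveMarkedChild hτ hδ q) = q := by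
  refine Sigma.subtype_ext (Subtype.ext (move_move q.1.1 q.2.2.2.2 q.2.2.2.1 w)) ?_
  dsimp only [moveMarkedChild, parent_move]
  rw [moveSwap_moveChild q.1.1.isRootedAt q.2.2.2.2 q.2.2.2.1, moveSwap_moveSwap]

noncomputable def markedChildEquiv :
    (Σ T : WithChildCounts ρ δ, MarkedChild s u T.1) ≃
      Σ T : WithChildCounts ρ δ', MarkedChild s w T.1 where
  toFun := moveMarkedChild hτ hδ
  invFun := moveMarkedChild hτ.symm fun a b => (hδ a b).symm
  left_inv := moveMarkedChild_moveMarkedChild hτ hδ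
  right_inv := moveMarkedChild_moveMarkedChild hτ.symm fun a b => (hδ a b).symm

end MarkedChild

end MTree

theorem multitype_cayley_symmetry_general (d : ℕ) (n : Fin d → ℕ)
    (ρ : Fin d) (γ : Fin d → Vtx d n → ℕ)
    (s t : Fin d) (i j : Fin (n t)) (hij : i ≠ j) (hγpos : 1 ≤ γ s ⟨t, i⟩)
    (γ' : Fin d → Vtx d n → ℕ)
    (hγ' : ∀ (a : Fin d) (b : Vtx d n),
      γ' a b =
        if a = s ∧ b = ⟨t, i⟩ then γ s ⟨t, i⟩ - 1
        else if a = s ∧ b = ⟨t, j⟩ then γ s ⟨t, j⟩ + 1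
        else γ a b) :
    γ s ⟨t, i⟩ *
        Nat.card {T : MTree d n // T.root.1 = ρ ∧ ∀ a b, T.ch a b = γ a b}
      =
    γ' s ⟨t, j⟩ *
        Nat.card {T : MTree d n // T.root.1 = ρ ∧ ∀ a b, T.ch a b = γ' a b} := by
  have hne : (⟨t, i⟩ : Vtx d n) ≠ ⟨t, j⟩ := by simpa using hij
  have hγγ' : ∀ a b, γ a b + (if s = a ∧ ⟨t, j⟩ = b then 1 else 0) =
      γ' a b + (if s = a ∧ ⟨t, i⟩ = b then 1 else 0) := by
    intro a b
    rw [hγ' a b]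
    rcases eq_or_ne a s with rfl | ha
    · rcases eq_or_ne b ⟨t, i⟩ with rfl | hbi
      · simp only [hne, hne.symm, and_true, and_false, if_true, if_false]
        omega
      rcases eq_or_ne b ⟨t, j⟩ with rfl | hbj
      · simp [hij, Ne.symm hij]
      · simp [hbi, hbj, Ne.symm hbi, Ne.symm hbj]
    · simp [ha, Ne.symm ha]
  rw [mul_comm, mul_comm (γ' _ _), ← MTree.card_sigma_markedChild,
    ← MTree.card_sigma_markedChild]
  exact Nat.card_congr (MTree.markedChildEquiv rfl hγγ')

/-- **Symmetry lemma for multitype Cayley trees (Lemma 5).**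
Moving one unit of indegree `(s, ·)` from the vertex `(t,i)` to the vertex `(t,j)`
changes the number of trees with prescribed indegree vector by the explicit factor:
`γ_{s,t,i} · |T_{ρ,γ}| = γ'_{s,t,j} · |T_{ρ,γ'}|`. -/
theorem multitype_cayley_symmetry (d : ℕ) (n : Fin d → ℕ) (hn : ∀ t, 0 < n t)
    (ρ : Fin d) (γ : Fin d → Vtx d n → ℕ)
    (s t : Fin d) (i j : Fin (n t)) (hij : i ≠ j) (hγpos : 1 ≤ γ s ⟨t, i⟩)
    (γ' : Fin d → Vtx d n → ℕ)
    (hγ' : ∀ (a : Fin d) (b : Vtx d n),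
      γ' a b =
        if a = s ∧ b = ⟨t, i⟩ then γ s ⟨t, i⟩ - 1
        else if a = s ∧ b = ⟨t, j⟩ then γ s ⟨t, j⟩ + 1
        else γ a b) :
    γ s ⟨t, i⟩ *
        Nat.card {T : MTree d n // T.root.1 = ρ ∧ ∀ a b, T.ch a b = γ a b}
      =
    γ' s ⟨t, j⟩ *
        Nat.card {T : MTree d n // T.root.1 = ρ ∧ ∀ a b, T.ch a b = γ' a b} :=
  multitype_cayley_symmetry_general d n ρ γ s t i j hij hγpos γ' hγ'
end

section
/- Fix d ≥ 1, a tuple n = (n_1,…,n_d) of positive integers, and ρ ∈ [d]. Let γ = (γ_{s,t,i})_{s,t∈[d], i∈[n_t]} be a tuple of nonnegative integers, and let γ* be defined by γ*_{s,t,1} = Σ_{i∈[n_t]} γ_{s,t,i} and γ*_{s,t,i} = 0 for all i ≠ 1. Then |T_{ρ,γ}| = |T_{ρ,γ*}| · ∏_{s,t∈[d]} ( γ*_{s,t,1}! / (γ_{s,t,1}!·γ_{s,t,2}!·⋯·γ_{s,t,n_t}!) ). -/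
open scoped Classical

/-!
After multiplication by `∏ γ_{s,t,i}!` the identity says that `|T_{ρ,γ}| · ∏ γ_{s,t,i}!`
only depends on the sums `∑_i γ_{s,t,i}`. It therefore suffices to move one unit from
`γ_{s,u}` to `γ_{s,w}`, for vertices `u ≠ w` of the same type, turning `γ` into `γ'`, and to
show `|T_{ρ,γ}| · γ_{s,u} = |T_{ρ,γ'}| · γ'_{s,w}`. Both sides count trees with a marked child
of type `s` of `u` (resp. `w`), and an involution matches them: it re-hangs the marked child
`c` under `w`; when `w` lies below `c` this would close a cycle, so first `u` and `w` trade
places, each keeping its other children. Moving all mass to label `1` one unit at a time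
reaches `γ*`.
-/

open scoped Nat

section RootedTree

variable {α : Type*}

def Reaches (f : α → α) : α → α → Prop := Relation.ReflTransGen fun a b => f a = b

def IsRootedTree (r : α) (f : α → α) : Prop := f r = r ∧ ∀ v, ∃ k, f^[k] v = r

variable {f g : α → α} {r r' x y z : α}

theorem reaches_iff_exists_iterate : Reaches f x y ↔ ∃ k, f^[k] x = y := by
  constructor
  · intro h
    induction h with
    | refl => exact ⟨0, rfl⟩
    | tail _ hyz ih =>
      obtain ⟨k, rfl⟩ := ih
      exact ⟨k + 1, by rw [Function.iterate_succ_apply', hyz]⟩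
  · rintro ⟨k, rfl⟩
    induction k with
    | zero => exact .refl
    | succ k ih => exact ih.tail (Function.iterate_succ_apply' f k x).symm

theorem Reaches.refl (f : α → α) (x : α) : Reaches f x x := Relation.ReflTransGen.refl

theorem Reaches.head (h : Reaches f (f x) y) : Reaches f x y := Relation.ReflTransGen.head rfl h

theorem Reaches.trans (hxy : Reaches f x y) (hyz : Reaches f y z) : Reaches f x z :=
  Relation.ReflTransGen.trans hxy hyz

theorem Reaches.parent (h : Reaches f x y) (hxy : x ≠ y) : Reaches f (f x) y := by
  rcases h.cases_head with rfl | ⟨_, rfl, h⟩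
  · exact absurd rfl hxy
  · exact h

theorem Reaches.eq_of_isFixedPt (hr : f r = r) (h : Reaches f r x) : x = r := by
  induction h with
  | refl => rfl
  | tail _ hyz ih => rw [← hyz, ih, hr]

theorem Reaches.of_agree (hxy : Reaches f x y) (hy : Reaches g y z)
    (hg : ∀ v, Reaches f x v → Reaches f v y → v ≠ y → g v = f v ∨ Reaches g v z) :
    Reaches g x z := by
  induction hxy using Relation.ReflTransGen.head_induction_on with
  | refl => exact hy
  | @head a b hab hby ih =>
    by_cases hay : a = y
    · exact hay ▸ hy
    rcases hg a (.refl f a) (Relation.ReflTransGen.head hab hby) hay with hga | hga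
    · exact Reaches.head <| hga.trans hab ▸
        ih fun v hbv hvy => hg v (Relation.ReflTransGen.head hab hbv) hvy
    · exact hga

namespace IsRootedTree

theorem reaches (hT : IsRootedTree r f) (v : α) : Reaches f v r :=
  reaches_iff_exists_iterate.2 (hT.2 v)

theorem of_agree (hT : IsRootedTree r f) (hr' : g r' = r')
    (hg : ∀ v, (v ≠ r ∧ g v = f v) ∨ Reaches g v r') : IsRootedTree r' g :=
  ⟨hr', fun v => reaches_iff_exists_iterate.1 <|
    (hT.reaches v).of_agree ((hg r).resolve_left fun h => h.1 rfl) fun v _ _ _ =>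
      (hg v).imp_left And.right⟩

theorem not_reaches_parent (hT : IsRootedTree r f) (hx : x ≠ r) : ¬ Reaches f (f x) x := by
  intro hcyc
  have hback : ∀ y, Reaches f x y → Reaches f y x := by
    intro y hxy
    induction hxy with
    | refl => exact .refl f x
    | @tail y z _ hyz ih =>
      rcases ih.cases_head with rfl | ⟨_, rfl, h⟩
      · exact hyz ▸ hcyc
      · exact hyz ▸ h
  exact hx ((hback r (hT.reaches x)).eq_of_isFixedPt hT.1)

theorem ne_root_of_reaches (hT : IsRootedTree r f) (h : Reaches f x y) (hy : y ≠ r) :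
    x ≠ r := by
  rintro rfl
  exact hy (h.eq_of_isFixedPt hT.1)

theorem parent_ne (hT : IsRootedTree r f) (hx : x ≠ r) : f x ≠ x := fun h =>
  hT.not_reaches_parent hx (by rw [h]; exact .refl f x)

end IsRootedTree

end RootedTree

section Move

variable {α : Type*} {f : α → α} {r u w c v : α}

noncomputable def moveSwap (f : α → α) (u w c : α) : Equiv.Perm α :=
  if Reaches f w c then Equiv.swap u w else 1

/-- Parent function of the tree in which the child `c` of `u` is re-hung under `w`. When `w`
lies below `c`, `u` and `w` first trade places, which moves the root to `moveSwap f u w c r` and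
the re-hung child to `moveSwap f u w c c`. -/
noncomputable def moveParent (r u w c : α) (f : α → α) (v : α) : α :=
  if v = moveSwap f u w c r then moveSwap f u w c r
  else if v = moveSwap f u w c c then w
  else f (moveSwap f u w c v)

theorem moveSwap_moveSwap (v : α) : moveSwap f u w c (moveSwap f u w c v) = v := by
  unfold moveSwap; split_ifs <;> simp

theorem eq_moveSwap_iff {x : α} : v = moveSwap f u w c x ↔ moveSwap f u w c v = x := by
  constructor <;> rintro rfl <;> simp [moveSwap_moveSwap]

theorem moveSwap_of_reaches (h : Reaches f w c) : moveSwap f u w c = Equiv.swap u w := if_pos h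

theorem moveSwap_of_not_reaches (h : ¬ Reaches f w c) : moveSwap f u w c = 1 := if_neg h

theorem moveSwap_apply_of_ne (hu : v ≠ u) (hw : v ≠ w) : moveSwap f u w c v = v := by
  unfold moveSwap; split_ifs
  · exact Equiv.swap_apply_of_ne_of_ne hu hw
  · rfl

theorem apply_moveSwap {β : Type*} (τ : α → β) (h : τ u = τ w) (v : α) :
    τ (moveSwap f u w c v) = τ v := by
  unfold moveSwap; split_ifs
  · rcases eq_or_ne v u with rfl | hu
    · simp [h]
    rcases eq_or_ne v w with rfl | hw
    · simp [h]
    rw [Equiv.swap_apply_of_ne_of_ne hu hw]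
  · rfl

theorem moveParent_moveSwap_root :
    moveParent r u w c f (moveSwap f u w c r) = moveSwap f u w c r := if_pos rfl

theorem moveParent_moveSwap_child (hcr : c ≠ r) :
    moveParent r u w c f (moveSwap f u w c c) = w := by
  simp [moveParent, hcr]

theorem moveParent_of_ne (hr : v ≠ moveSwap f u w c r) (hc : v ≠ moveSwap f u w c c) :
    moveParent r u w c f v = f (moveSwap f u w c v) := by
  simp [moveParent, hr, hc]

theorem moveParent_apply_of_ne (hr : v ≠ r) (hc : v ≠ c) (hu : v ≠ u) (hw : v ≠ w) :
    moveParent r u w c f v = f v := by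
  have hv : moveSwap f u w c v = v := moveSwap_apply_of_ne hu hw
  rw [moveParent_of_ne, hv] <;> rwa [ne_eq, eq_moveSwap_iff, hv]

theorem moveParent_of_not_reaches (h : ¬ Reaches f w c) (hr : f r = r) (hcr : c ≠ r) :
    moveParent r u w c f = Function.update f c w := by
  funext v
  simp only [moveParent, moveSwap_of_not_reaches h, Equiv.Perm.coe_one, id]
  rcases eq_or_ne v c with rfl | hvc
  · simp [hcr]
  split_ifs with hvr
  · rw [Function.update_of_ne hvc, hvr, hr]
  · rw [Function.update_of_ne hvc]

theorem reaches_moveParent_of_not_reaches (hT : IsRootedTree r f) (hcr : c ≠ r)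
    (h : ¬ Reaches f w c) (hv : ¬ Reaches f v c) : Reaches (moveParent r u w c f) v r := by
  rw [moveParent_of_not_reaches h hT.1 hcr]
  refine (hT.reaches v).of_agree (.refl _ r) fun x hvx _ _ => .inl ?_
  exact Function.update_of_ne (by rintro rfl; exact hv hvx) _ _

theorem reaches_moveParent_moveSwap_child (hT : IsRootedTree r f) (hcu : f c = u) (hcr : c ≠ r)
    (h : Reaches f w c) : Reaches (moveParent r u w c f) u (moveSwap f u w c c) := by
  have hnuc : ¬ Reaches f u c := hcu ▸ hT.not_reaches_parent hcr
  have hwr : w ≠ r := hT.ne_root_of_reaches h hcr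
  have huc : u ≠ c := hcu ▸ hT.parent_ne hcr
  have he := moveSwap_of_reaches (u := u) h
  rcases eq_or_ne w c with rfl | hwc
  · rw [he, Equiv.swap_apply_right]; exact .refl _ _
  have hec : moveSwap f u w c c = c := moveSwap_apply_of_ne huc.symm hwc.symm
  rw [hec]
  refine Reaches.head ?_
  rw [moveParent_of_ne, he, Equiv.swap_apply_left]
  · refine (h.parent hwc).of_agree (.refl _ c) fun x hwx hxc hxc' => .inl ?_
    refine moveParent_apply_of_ne ?_ hxc' ?_ ?_
    · rintro rfl; exact hcr (hxc.eq_of_isFixedPt hT.1)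
    · rintro rfl; exact hnuc hxc
    · rintro rfl; exact hT.not_reaches_parent hwr hwx
  all_goals rwa [ne_eq, eq_moveSwap_iff, he, Equiv.swap_apply_left]

theorem reaches_moveParent_moveSwap_root (hT : IsRootedTree r f) (hcu : f c = u) (hcr : c ≠ r)
    (h : Reaches f w c) : Reaches (moveParent r u w c f) w (moveSwap f u w c r) := by
  have hnuc : ¬ Reaches f u c := hcu ▸ hT.not_reaches_parent hcr
  have hwr : w ≠ r := hT.ne_root_of_reaches h hcr
  have huc : u ≠ c := hcu ▸ hT.parent_ne hcr
  have he := moveSwap_of_reaches (u := u) h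
  rcases eq_or_ne u r with rfl | hur
  · rw [he, Equiv.swap_apply_left]; exact .refl _ _
  rw [moveSwap_apply_of_ne hur.symm hwr.symm]
  refine Reaches.head ?_
  rw [moveParent_of_ne, he, Equiv.swap_apply_right]
  · refine (hT.reaches (f u)).of_agree (.refl _ r) fun x hux _ hxr => .inl ?_
    refine moveParent_apply_of_ne hxr ?_ ?_ ?_
    · rintro rfl; exact hnuc hux.head
    · rintro rfl; exact hT.not_reaches_parent hur hux
    · rintro rfl; exact hnuc (hux.head.trans h)
  all_goals rwa [ne_eq, eq_moveSwap_iff, he, Equiv.swap_apply_right]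

theorem isRootedTree_moveParent (hT : IsRootedTree r f) (hcu : f c = u) (hcr : c ≠ r) :
    IsRootedTree (moveSwap f u w c r) (moveParent r u w c f) := by
  set g := moveParent r u w c f
  set e := moveSwap f u w c
  have hnuc : ¬ Reaches f u c := hcu ▸ hT.not_reaches_parent hcr
  have huc : u ≠ c := hcu ▸ hT.parent_ne hcr
  have hchild : ∀ {x}, Reaches g w x → Reaches g (e c) x := fun hw =>
    Reaches.head (by rwa [show g (e c) = w from moveParent_moveSwap_child hcr])
  obtain ⟨hu, hw⟩ : Reaches g u (e r) ∧ Reaches g w (e r) := by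
    by_cases h : Reaches f w c
    · have hw := reaches_moveParent_moveSwap_root hT hcu hcr h
      exact ⟨(reaches_moveParent_moveSwap_child hT hcu hcr h).trans (hchild hw), hw⟩
    · rw [show e r = r by simp [e, moveSwap_of_not_reaches h]]
      exact ⟨reaches_moveParent_of_not_reaches hT hcr h hnuc,
        reaches_moveParent_of_not_reaches hT hcr h h⟩
  have hc : Reaches g c (e r) := by
    rcases eq_or_ne c w with rfl | hcw
    · exact hw
    · simpa [e, moveSwap_apply_of_ne huc.symm hcw] using hchild hw
  have hr : Reaches g r (e r) := by
    rcases eq_or_ne r u with rfl | hru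
    · exact hu
    rcases eq_or_ne r w with rfl | hrw
    · exact hw
    · rw [show e r = r from moveSwap_apply_of_ne hru hrw]; exact .refl _ _
  refine hT.of_agree moveParent_moveSwap_root fun v => ?_
  by_cases hv : v = r ∨ v = c ∨ v = u ∨ v = w
  · right; rcases hv with h | h | h | h <;> rw [h] <;> assumption
  · simp only [not_or] at hv
    exact .inl ⟨hv.1, moveParent_apply_of_ne hv.1 hv.2.1 hv.2.2.1 hv.2.2.2⟩

theorem moveSwap_moveParent (hT : IsRootedTree r f) (hcu : f c = u) (hcr : c ≠ r) :
    moveSwap (moveParent r u w c f) w u (moveSwap f u w c c) = moveSwap f u w c := by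
  by_cases h : Reaches f w c
  · rw [moveSwap_of_reaches h, moveSwap_of_reaches, Equiv.swap_comm]
    simpa only [moveSwap_of_reaches h] using reaches_moveParent_moveSwap_child hT hcu hcr h
  · rw [moveSwap_of_not_reaches h, moveSwap_of_not_reaches]
    rw [moveParent_of_not_reaches h hT.1 hcr, Equiv.Perm.one_apply]
    intro huc
    refine hcu ▸ hT.not_reaches_parent hcr <| huc.of_agree (.refl f c) fun x _ _ hxc => .inl ?_
    exact (Function.update_of_ne hxc _ _).symm

theorem moveParent_moveParent (hT : IsRootedTree r f) (hcu : f c = u) (hcr : c ≠ r) :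
    moveParent (moveSwap f u w c r) w u (moveSwap f u w c c) (moveParent r u w c f) = f := by
  funext v
  rw [moveParent, moveSwap_moveParent hT hcu hcr, moveSwap_moveSwap, moveSwap_moveSwap]
  split_ifs with hvr hvc
  · rw [hvr, hT.1]
  · rw [hvc, hcu]
  · rw [moveParent_of_ne, moveSwap_moveSwap] <;>
      rwa [ne_eq, ← eq_moveSwap_iff, moveSwap_moveSwap]

theorem card_subtype_eq_card_and_ne_add {Q : α → Prop} [DecidablePred Q] [Finite α] (x : α) :
    Nat.card {v // Q v} = Nat.card {v // Q v ∧ v ≠ x} + if Q x then 1 else 0 := by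
  have := Fintype.ofFinite α
  rw [Nat.card_eq_fintype_card, Nat.card_eq_fintype_card, Fintype.card_subtype,
    Fintype.card_subtype, ← Finset.filter_filter, Finset.filter_ne']
  split_ifs with hx
  · rw [Finset.card_erase_add_one (by simpa using hx)]
  · rw [Finset.erase_eq_of_notMem (by simpa using hx), add_zero]

theorem card_children_moveParent [Finite α] [DecidableEq α] (hcu : f c = u) (hcr : c ≠ r)
    (P : α → Prop) [DecidablePred P] (hP : ∀ v, P (moveSwap f u w c v) ↔ P v) (b : α) :
    Nat.card {v // P v ∧ v ≠ moveSwap f u w c r ∧ moveParent r u w c f v = b}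
      + (if P c ∧ b = u then 1 else 0)
      = Nat.card {v // P v ∧ v ≠ r ∧ f v = b} + (if P c ∧ b = w then 1 else 0) := by
  set e := moveSwap f u w c
  rw [card_subtype_eq_card_and_ne_add (e c),
    card_subtype_eq_card_and_ne_add (Q := fun v => P v ∧ v ≠ r ∧ f v = b) c]
  have hcr' : e c ≠ e r := e.injective.ne hcr
  have hmoved : ∀ v, (P v ∧ v ≠ r ∧ f v = b) ∧ v ≠ c ↔
      (P (e v) ∧ e v ≠ e r ∧ moveParent r u w c f (e v) = b) ∧ e v ≠ e c := by
    intro v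
    rw [hP, e.injective.ne_iff, e.injective.ne_iff]
    constructor <;> rintro ⟨⟨hPv, hvr, hfv⟩, hvc⟩ <;>
      rw [moveParent_of_ne (e.injective.ne hvr) (e.injective.ne hvc), moveSwap_moveSwap] at * <;>
      exact ⟨⟨hPv, hvr, hfv⟩, hvc⟩
  rw [Nat.card_congr (Equiv.subtypeEquiv (q := fun v =>
    (P v ∧ v ≠ e r ∧ moveParent r u w c f v = b) ∧ v ≠ e c) e hmoved)]
  have hgc : moveParent r u w c f (e c) = w := moveParent_moveSwap_child hcr
  simp only [hP, hcr', hcr, hgc, hcu, ne_eq, not_false_eq_true, true_and, eq_comm (a := b)]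
  ring

end Move

section UnitTransfer

variable {ι : Type*} [DecidableEq ι] {g g' : ι → ℕ} {x y : ι}

theorem sum_add_ite_of_add_single_eq (h : g' + Pi.single x 1 = g + Pi.single y 1)
    (s : Finset ι) :
    ∑ i ∈ s, g' i + (if x ∈ s then 1 else 0)
      = ∑ i ∈ s, g i + (if y ∈ s then 1 else 0) := by
  have := congrArg (fun k => ∑ i ∈ s, k i) h
  simpa only [Pi.add_apply, Finset.sum_add_distrib, Finset.sum_pi_single'] using this

theorem exists_add_single_eq (hx : g x ≠ 0) (y : ι) :
    ∃ g' : ι → ℕ, g' + Pi.single x 1 = g + Pi.single y 1 := by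
  refine ⟨g - Pi.single x 1 + Pi.single y 1, funext fun i => ?_⟩
  rcases eq_or_ne i x with rfl | hix
  · simp only [Pi.add_apply, Pi.sub_apply, Pi.single_eq_same]; omega
  · simp [hix]

theorem apply_source_of_add_single_eq (hxy : x ≠ y) (h : g' + Pi.single x 1 = g + Pi.single y 1) :
    g x = g' x + 1 := by
  simpa [hxy] using (congrFun h x).symm

theorem apply_target_of_add_single_eq (hxy : x ≠ y) (h : g' + Pi.single x 1 = g + Pi.single y 1) :
    g' y = g y + 1 := by
  simpa [hxy.symm] using congrFun h y

theorem prod_factorial_mul_of_add_single_eq [Fintype ι] (hxy : x ≠ y)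
    (h : g' + Pi.single x 1 = g + Pi.single y 1) :
    (∏ i, (g i)!) * g' y = (∏ i, (g' i)!) * g x := by
  have hrest : ∀ i ∈ (Finset.univ.erase x).erase y, g' i = g i := fun i hi => by
    obtain ⟨hiy, hix⟩ : i ≠ y ∧ i ≠ x := by simpa using hi
    simpa [Pi.single_apply, hix, hiy] using congrFun h i
  have hsplit : ∀ k : ι → ℕ, ∏ i, (k i)! =
      (k x)! * ((k y)! * ∏ i ∈ (Finset.univ.erase x).erase y, (k i)!) := fun k => by
    rw [Finset.mul_prod_erase _ (fun i => (k i)!) (by simpa using hxy.symm),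
      Finset.mul_prod_erase _ (fun i => (k i)!) (Finset.mem_univ x)]
  rw [hsplit g, hsplit g', Finset.prod_congr rfl fun i hi => congrArg _ (hrest i hi),
    apply_source_of_add_single_eq hxy h, apply_target_of_add_single_eq hxy h,
    Nat.factorial_succ, Nat.factorial_succ]
  ring

end UnitTransfer

namespace MTree

variable {d : ℕ} {n : Fin d → ℕ}

abbrev WithChildOf (u : Vtx d n) : Type :=
  {x : MTree d n × Vtx d n // x.2 ≠ x.1.root ∧ x.1.parent x.2 = u}

noncomputable def moveChild (u w : Vtx d n) (x : WithChildOf u) : WithChildOf w :=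
  ⟨(⟨(moveSwap x.1.1.parent u w x.1.2 x.1.1.root,
        moveParent x.1.1.root u w x.1.2 x.1.1.parent),
      isRootedTree_moveParent x.1.1.2 x.2.2 x.2.1⟩,
    moveSwap x.1.1.parent u w x.1.2 x.1.2),
    (moveSwap _ u w _).injective.ne x.2.1, moveParent_moveSwap_child x.2.1⟩

theorem moveChild_moveChild {u w : Vtx d n} (x : WithChildOf u) :
    moveChild w u (moveChild u w x) = x := by
  obtain ⟨⟨⟨⟨r, f⟩, hT⟩, c⟩, hcr, hcu⟩ := x
  have he := moveSwap_moveParent (w := w) hT hcu hcr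
  refine Subtype.ext (Prod.ext (Subtype.ext (Prod.ext ?_ ?_)) ?_)
  · exact (DFunLike.congr_fun he _).trans (moveSwap_moveSwap r)
  · exact moveParent_moveParent hT hcu hcr
  · exact (DFunLike.congr_fun he _).trans (moveSwap_moveSwap c)

noncomputable def moveChildEquiv (u w : Vtx d n) : WithChildOf u ≃ WithChildOf w :=
  ⟨moveChild u w, moveChild w u, moveChild_moveChild, moveChild_moveChild⟩

theorem root_fst_moveChild {u w : Vtx d n} (huw : u.1 = w.1) (x : WithChildOf u) :
    (moveChild u w x).1.1.root.1 = x.1.1.root.1 :=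
  apply_moveSwap Sigma.fst huw _

theorem child_fst_moveChild {u w : Vtx d n} (huw : u.1 = w.1) (x : WithChildOf u) :
    (moveChild u w x).1.2.1 = x.1.2.1 :=
  apply_moveSwap Sigma.fst huw _

theorem ch_moveChild {u w : Vtx d n} (huw : u.1 = w.1) (x : WithChildOf u) (a : Fin d)
    (b : Vtx d n) :
    (moveChild u w x).1.1.ch a b + (if x.1.2.1 = a ∧ b = u then 1 else 0)
      = x.1.1.ch a b + (if x.1.2.1 = a ∧ b = w then 1 else 0) :=
  card_children_moveParent x.2.2 x.2.1 (fun v => v.1 = a)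
    (fun v => by rw [apply_moveSwap Sigma.fst huw]) b

noncomputable def count (ρ : Fin d) (γ : Fin d → Vtx d n → ℕ) : ℕ :=
  Nat.card {T : MTree d n // T.root.1 = ρ ∧ ∀ a b, T.ch a b = γ a b}

theorem count_mul_eq_card (ρ s : Fin d) (γ : Fin d → Vtx d n → ℕ) (u : Vtx d n) :
    count ρ γ * γ s u = Nat.card {x : WithChildOf u //
      x.1.1.root.1 = ρ ∧ (∀ a b, x.1.1.ch a b = γ a b) ∧ x.1.2.1 = s} := by
  let fibres : {x : WithChildOf u // x.1.1.root.1 = ρ ∧ (∀ a b, x.1.1.ch a b = γ a b) ∧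
      x.1.2.1 = s} ≃ Σ T : {T : MTree d n // T.root.1 = ρ ∧ ∀ a b, T.ch a b = γ a b},
        {c : Vtx d n // c.1 = s ∧ c ≠ T.1.root ∧ T.1.parent c = u} :=
    { toFun x := ⟨⟨x.1.1.1, x.2.1, x.2.2.1⟩, ⟨x.1.1.2, x.2.2.2, x.1.2.1, x.1.2.2⟩⟩
      invFun y := ⟨⟨(y.1.1, y.2.1), y.2.2.2.1, y.2.2.2.2⟩, y.1.2.1, y.1.2.2, y.2.2.1⟩
      left_inv _ := rfl
      right_inv _ := rfl }
  rw [Nat.card_congr fibres, Nat.card_sigma]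
  refine ((Finset.sum_congr rfl fun T _ => T.2.2 s u).trans ?_).symm
  rw [Finset.sum_const, Finset.card_univ, smul_eq_mul, count, Nat.card_eq_fintype_card]

theorem count_mul_eq_count_mul {ρ s : Fin d} {γ γ' : Fin d → Vtx d n → ℕ} {u w : Vtx d n}
    (huw : u.1 = w.1)
    (h : Function.uncurry γ' + Pi.single (s, u) 1 = Function.uncurry γ + Pi.single (s, w) 1) :
    count ρ γ * γ s u = count ρ γ' * γ' s w := by
  rw [count_mul_eq_card, count_mul_eq_card]
  refine Nat.card_congr ((moveChildEquiv u w).subtypeEquiv fun x => ?_)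
  simp only [moveChildEquiv, Equiv.coe_fn_mk, root_fst_moveChild huw, child_fst_moveChild huw]
  refine and_congr_right fun _ => and_congr_left_iff.2 ?_
  rintro rfl
  have key : ∀ a b, (moveChild u w x).1.1.ch a b + γ a b = x.1.1.ch a b + γ' a b := by
    intro a b
    have := ch_moveChild huw x a b
    have := congrFun h (a, b)
    simp only [Pi.add_apply, Function.uncurry_apply_pair, Pi.single_apply, Prod.mk.injEq,
      @eq_comm _ a] at this
    omega
  exact forall₂_congr fun a b => by have := key a b; omega

noncomputable def weightedCount (ρ : Fin d) (γ : Fin d → Vtx d n → ℕ) : ℕ :=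
  count ρ γ * ∏ p, (Function.uncurry γ p)!

theorem weightedCount_eq_of_add_single_eq {ρ s : Fin d} {γ γ' : Fin d → Vtx d n → ℕ}
    {u w : Vtx d n}
    (h : Function.uncurry γ' + Pi.single (s, u) 1 = Function.uncurry γ + Pi.single (s, w) 1)
    (htype : u.1 = w.1) (huw : u ≠ w) :
    weightedCount ρ γ = weightedCount ρ γ' := by
  have hcount := count_mul_eq_count_mul (ρ := ρ) htype h
  have hfact := prod_factorial_mul_of_add_single_eq (by simpa using huw) h
  have hpos : 0 < γ s u * γ' s w := by
    have hu := apply_source_of_add_single_eq (by simpa using huw : (s, u) ≠ (s, w)) h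
    have hw := apply_target_of_add_single_eq (by simpa using huw : (s, u) ≠ (s, w)) h
    simp only [Function.uncurry_apply_pair] at hu hw
    rw [hu, hw]
    positivity
  refine Nat.eq_of_mul_eq_mul_right hpos ?_
  calc weightedCount ρ γ * (γ s u * γ' s w)
      = count ρ γ * γ s u * ((∏ p, (Function.uncurry γ p)!) * γ' s w) := by
        rw [weightedCount]; ring
    _ = count ρ γ' * γ' s w * ((∏ p, (Function.uncurry γ' p)!) * γ s u) := by
        rw [hcount]; exact congrArg _ hfact
    _ = weightedCount ρ γ' * (γ s u * γ' s w) := by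
        rw [weightedCount]; ring

theorem sum_uncurry_filter_eq_sum (γ : Fin d → Vtx d n → ℕ) (s t : Fin d) :
    ∑ p ∈ Finset.univ.filter (fun p : Fin d × Vtx d n => p.1 = s ∧ p.2.1 = t),
      Function.uncurry γ p = ∑ i : Fin (n t), γ s ⟨t, i⟩ := by
  rw [Finset.sum_filter, Fintype.sum_prod_type, Fintype.sum_eq_single s fun a ha => by simp [ha],
    Fintype.sum_sigma, Fintype.sum_eq_single t fun t' ht' => by simp [ht']]
  simp

noncomputable def nonzeroLabelMass (γ : Fin d → Vtx d n → ℕ) : ℕ :=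
  ∑ p ∈ Finset.univ.filter (fun p : Fin d × Vtx d n => (p.2.2 : ℕ) ≠ 0),
    Function.uncurry γ p

theorem eq_of_nonzeroLabelMass_eq_zero (hn : ∀ t, 0 < n t) {γ γstar : Fin d → Vtx d n → ℕ}
    (hγstar1 : ∀ s t, γstar s ⟨t, ⟨0, hn t⟩⟩ = ∑ i : Fin (n t), γ s ⟨t, i⟩)
    (hγstar0 : ∀ (s t : Fin d) (i : Fin (n t)), (i : ℕ) ≠ 0 → γstar s ⟨t, i⟩ = 0)
    (h : nonzeroLabelMass γ = 0) : γ = γstar := by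
  have hγ0 : ∀ s t (i : Fin (n t)), (i : ℕ) ≠ 0 → γ s ⟨t, i⟩ = 0 := fun s t i hi =>
    Finset.sum_eq_zero_iff.1 h (s, ⟨t, i⟩) (by simpa using hi)
  funext s ⟨t, i⟩
  by_cases hi : (i : ℕ) = 0
  · obtain rfl : i = ⟨0, hn t⟩ := Fin.ext hi
    rw [hγstar1, Finset.sum_eq_single_of_mem _ (Finset.mem_univ _) fun j _ hj =>
      hγ0 s t j fun h => hj (Fin.ext h : j = ⟨0, hn t⟩)]
  · rw [hγ0 s t i hi, hγstar0 s t i hi]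

theorem exists_weightedCount_eq_of_nonzeroLabelMass_ne_zero (hn : ∀ t, 0 < n t) (ρ : Fin d)
    {γ : Fin d → Vtx d n → ℕ} (h : nonzeroLabelMass γ ≠ 0) :
    ∃ γ' : Fin d → Vtx d n → ℕ, weightedCount ρ γ' = weightedCount ρ γ ∧
      nonzeroLabelMass γ' < nonzeroLabelMass γ ∧
      ∀ s t, ∑ i : Fin (n t), γ' s ⟨t, i⟩ = ∑ i : Fin (n t), γ s ⟨t, i⟩ := by
  obtain ⟨⟨s, t, i⟩, hi, hγ⟩ := Finset.exists_ne_zero_of_sum_ne_zero h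
  have hi : (i : ℕ) ≠ 0 := by simpa using hi
  have hlabel : (⟨t, i⟩ : Vtx d n) ≠ ⟨t, ⟨0, hn t⟩⟩ := by simpa [Fin.ext_iff] using hi
  obtain ⟨G', hmove⟩ := exists_add_single_eq hγ (s, ⟨t, ⟨0, hn t⟩⟩)
  rw [← Function.uncurry_curry G'] at hmove
  refine ⟨Function.curry G', ?_, ?_, fun s' t' => ?_⟩
  · exact (weightedCount_eq_of_add_single_eq hmove rfl hlabel).symm
  · have := sum_add_ite_of_add_single_eq hmove
      (Finset.univ.filter fun p : Fin d × Vtx d n => (p.2.2 : ℕ) ≠ 0)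
    rw [if_pos (by simpa using hi), if_neg (by simp)] at this
    simp only [nonzeroLabelMass]
    omega
  · have := sum_add_ite_of_add_single_eq hmove
      (Finset.univ.filter fun p : Fin d × Vtx d n => p.1 = s' ∧ p.2.1 = t')
    simp only [Finset.mem_filter, Finset.mem_univ, true_and] at this
    rw [← sum_uncurry_filter_eq_sum, ← sum_uncurry_filter_eq_sum]
    omega

theorem weightedCount_eq_weightedCount_star (hn : ∀ t, 0 < n t) (ρ : Fin d)
    {γstar : Fin d → Vtx d n → ℕ}
    (hγstar0 : ∀ (s t : Fin d) (i : Fin (n t)), (i : ℕ) ≠ 0 → γstar s ⟨t, i⟩ = 0)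
    (γ : Fin d → Vtx d n → ℕ)
    (hγstar1 : ∀ s t, γstar s ⟨t, ⟨0, hn t⟩⟩ = ∑ i : Fin (n t), γ s ⟨t, i⟩) :
    weightedCount ρ γ = weightedCount ρ γstar := by
  induction hm : nonzeroLabelMass γ using Nat.strong_induction_on generalizing γ with
  | _ m ih =>
    rcases eq_or_ne m 0 with rfl | hm0
    · rw [eq_of_nonzeroLabelMass_eq_zero hn hγstar1 hγstar0 hm]
    obtain ⟨γ', hW, hlt, hsum⟩ :=
      exists_weightedCount_eq_of_nonzeroLabelMass_ne_zero hn ρ (hm ▸ hm0)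
    rw [← hW]
    exact ih _ (hm ▸ hlt) γ' (fun s t => (hγstar1 s t).trans (hsum s t).symm) rfl

end MTree

/-- **Reduction to star trees (Lemma 6).**
If `γ*` is obtained from the indegree vector `γ` by transferring, for all `s,t`, all
the indegrees `γ_{s,t,i}` onto the vertex of type `t` with label `1`, then
`|T_{ρ,γ}| = |T_{ρ,γ*}| · ∏_{s,t} γ*_{s,t,1}! / (γ_{s,t,1}! ⋯ γ_{s,t,n_t}!)`. -/
theorem multitype_cayley_reduction_to_star (d : ℕ) (n : Fin d → ℕ)
    (hn : ∀ t, 0 < n t) (ρ : Fin d) (γ : Fin d → Vtx d n → ℕ)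
    (γstar : Fin d → Vtx d n → ℕ)
    (hγstar1 : ∀ s t, γstar s ⟨t, ⟨0, hn t⟩⟩ = ∑ i : Fin (n t), γ s ⟨t, i⟩)
    (hγstar0 : ∀ (s t : Fin d) (i : Fin (n t)), (i : ℕ) ≠ 0 → γstar s ⟨t, i⟩ = 0) :
    (Nat.card {T : MTree d n // T.root.1 = ρ ∧ ∀ a b, T.ch a b = γ a b} : ℚ)
      =
    (Nat.card {T : MTree d n // T.root.1 = ρ ∧ ∀ a b, T.ch a b = γstar a b} : ℚ) *
      ∏ s : Fin d, ∏ t : Fin d,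
        (Nat.factorial (γstar s ⟨t, ⟨0, hn t⟩⟩) : ℚ) /
          ∏ i : Fin (n t), (Nat.factorial (γ s ⟨t, i⟩) : ℚ) := by
  have hW := MTree.weightedCount_eq_weightedCount_star hn ρ hγstar0 γ hγstar1
  have hγ :
      ∏ p, (Function.uncurry γ p)! = ∏ s, ∏ t, ∏ i : Fin (n t), (γ s ⟨t, i⟩)! := by
    simp only [Fintype.prod_prod_type, Fintype.prod_sigma, Function.uncurry_apply_pair]
  have hγstar :
      ∏ p, (Function.uncurry γstar p)! = ∏ s, ∏ t, (γstar s ⟨t, ⟨0, hn t⟩⟩)! := by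
    simp only [Fintype.prod_prod_type, Fintype.prod_sigma, Function.uncurry_apply_pair]
    refine Finset.prod_congr rfl fun s _ => Finset.prod_congr rfl fun t _ =>
      Fintype.prod_eq_single _ fun i hi => ?_
    rw [hγstar0 s t i fun h => hi (Fin.ext h), Nat.factorial_zero]
  rw [MTree.weightedCount, MTree.weightedCount, hγ, hγstar] at hW
  simp only [Finset.prod_div_distrib]
  rw [mul_div_assoc', eq_div_iff (by positivity)]
  exact_mod_cast hW
end

section
/- Fix d ≥ 1, a tuple n = (n_1,…,n_d) of positive integers, and ρ ∈ [d]. Let γ = (γ_{s,t,i})_{s,t∈[d], i∈[n_t]} be a tuple of nonnegative integers and set m_{s,t} = Σ_{i∈[n_t]} γ_{s,t,i}. If n_s = δ_{s,ρ} + Σ_{t∈[d]} m_{s,t} for all s ∈ [d], then |T_{ρ,γ}| = ( ∏_{t∈[d]} (n_t−1)! / ∏_{s,t∈[d], i∈[n_t]} γ_{s,t,i}! ) · Σ_{A ∈ Cay_d^ρ} ∏_{(s,t)∈A} m_{s,t}; otherwise |T_{ρ,γ}| = 0. -/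
open scoped Classical

/-!
Induction on the number of vertices. Summing the prescribed child counts gives
`∑_v ∑_s γ s v = |U| - 1`, so some vertex `v` (of type `c`) is prescribed to be a leaf.
Deleting it is a bijection between the trees in which `v` hangs below `w` and the trees on the
remaining vertices in which `w` has one child of type `c` fewer. Summing the induction hypothesis
over `w`, grouped by the type `u` of `w`, gives `∑_u m c u` times the tree polynomial with the
weight of the edge `(c, u)` lowered by one. If `v` is not the last vertex of type `c`, this is
`n_c - 1` times the tree polynomial, which is what `(n_c - 1)!` gains over `(n_c - 2)!`. If it is,
nothing points to `c` in the type tree either, so `c` is a leaf there too and factors out of the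
tree polynomial in the same way. When `v` is the only vertex of type `ρ`, both sides vanish.
-/

open Finset Function
open scoped Nat

theorem Set.EqOn.iterate_of_mapsTo {α : Type*} {f g : α → α} {s : Set α} (h : Set.EqOn f g s)
    (hg : Set.MapsTo g s s) (n : ℕ) : Set.EqOn (f^[n]) (g^[n]) s := by
  induction n with
  | zero => exact fun _ _ => rfl
  | succ n ih =>
    intro x hx
    rw [iterate_succ_apply, iterate_succ_apply, h hx, ih (hg hx)]

section RootedTree

variable {α : Type*}

/-- A rooted tree on `S` given by its parent map; `f` is the identity outside `S`, so that
a tree has exactly one parent map. -/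
def IsRootedTreeOn (S : Finset α) (r : α) (f : α → α) : Prop :=
  r ∈ S ∧ f r = r ∧ (∀ x ∉ S, f x = x) ∧ ∀ x ∈ S, ∃ k, f^[k] x = r

namespace IsRootedTreeOn

variable {S : Finset α} {r v w : α} {f : α → α}

theorem mapsTo (h : IsRootedTreeOn S r f) : Set.MapsTo f S S := by
  intro x hx
  by_contra hfx
  have hfix : f (f x) = f x := h.2.2.1 _ hfx
  obtain ⟨k, hk⟩ := h.2.2.2 x hx
  cases k with
  | zero =>
    rw [iterate_zero_apply] at hk
    exact hfx (by rw [hk, h.2.1]; exact h.1)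
  | succ k =>
    rw [iterate_succ_apply, iterate_fixed hfix] at hk
    exact hfx (hk ▸ h.1)

variable [DecidableEq α]

theorem exists_parent_eq_root (h : IsRootedTreeOn S r f) {x : α} (hx : x ∈ S) (hxr : x ≠ r) :
    ∃ y ∈ S.erase r, f y = r := by
  obtain ⟨k, hk⟩ := h.2.2.2 x hx
  induction k generalizing x with
  | zero => exact absurd hk hxr
  | succ k ih =>
    by_cases hfx : f x = r
    · exact ⟨x, mem_erase.2 ⟨hxr, hx⟩, hfx⟩
    · exact ih (h.mapsTo hx) hfx hk

theorem erase_leaf (h : IsRootedTreeOn S r f) (hvr : v ≠ r) (hleaf : ∀ x ∈ S, f x ≠ v) :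
    IsRootedTreeOn (S.erase v) r (update f v v) := by
  have hr : r ∈ S.erase v := mem_erase.2 ⟨hvr.symm, h.1⟩
  have heq : Set.EqOn (update f v v) f (S.erase v) := fun x hx =>
    update_of_ne (ne_of_mem_erase hx) _ _
  have hmaps : Set.MapsTo f (S.erase v) (S.erase v) := fun x hx =>
    mem_erase.2 ⟨hleaf x (mem_of_mem_erase hx), h.mapsTo (mem_of_mem_erase hx)⟩
  refine ⟨hr, (heq hr).trans h.2.1, fun x hx => ?_, fun x hx => ?_⟩
  · by_cases hxv : x = v
    · rw [hxv, update_self]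
    · rw [update_of_ne hxv]
      exact h.2.2.1 x fun hxS => hx (mem_erase.2 ⟨hxv, hxS⟩)
  · obtain ⟨k, hk⟩ := h.2.2.2 x (mem_of_mem_erase hx)
    exact ⟨k, (heq.iterate_of_mapsTo hmaps k hx).trans hk⟩

theorem insert_leaf (h : IsRootedTreeOn S r f) (hv : v ∉ S) (hw : w ∈ S) :
    IsRootedTreeOn (insert v S) r (update f v w) := by
  have hvr : r ≠ v := fun hrv => hv (hrv ▸ h.1)
  have heq : Set.EqOn (update f v w) f S := fun x hx =>
    update_of_ne (fun (hxv : x = v) => hv (hxv ▸ hx)) _ _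
  have hiter (x : α) (hx : x ∈ S) : ∃ k, (update f v w)^[k] x = r := by
    obtain ⟨k, hk⟩ := h.2.2.2 x hx
    exact ⟨k, (heq.iterate_of_mapsTo h.mapsTo k hx).trans hk⟩
  refine ⟨mem_insert_of_mem h.1, (update_of_ne hvr _ _).trans h.2.1, fun x hx => ?_,
    fun x hx => ?_⟩
  · rw [mem_insert, not_or] at hx
    rw [update_of_ne hx.1]
    exact h.2.2.1 x hx.2
  · rcases mem_insert.1 hx with rfl | hxS
    · obtain ⟨k, hk⟩ := hiter w hw
      exact ⟨k + 1, by rwa [iterate_succ_apply, update_self]⟩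
    · exact hiter x hxS

theorem update_ne_of_notMem (h : IsRootedTreeOn S r f) (hv : v ∉ S) (hw : w ∈ S) :
    ∀ x ∈ insert v S, update f v w x ≠ v := by
  intro x hx
  rcases mem_insert.1 hx with rfl | hxS
  · rw [update_self]
    exact fun hwx => hv (hwx ▸ hw)
  · rw [update_of_ne fun (hxv : x = v) => hv (hxv ▸ hxS)]
    exact fun hfx => hv (hfx ▸ h.mapsTo hxS)

end IsRootedTreeOn

theorem isRootedTreeOn_singleton_iff {r r' : α} {f : α → α} :
    IsRootedTreeOn {r} r' f ↔ r' = r ∧ f = id := by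
  constructor
  · rintro ⟨hr', hfix, hout, -⟩
    obtain rfl := mem_singleton.1 hr'
    refine ⟨rfl, funext fun x => ?_⟩
    by_cases hx : x = r'
    · rw [hx, hfix, id]
    · exact hout x (by simpa using hx)
  · rintro ⟨rfl, rfl⟩
    exact ⟨mem_singleton_self _, rfl, fun _ _ => rfl, fun x hx => ⟨0, mem_singleton.1 hx⟩⟩

end RootedTree

theorem isRootedTreeOn_univ_iff {α : Type*} [Fintype α] {r : α} {f : α → α} :
    IsRootedTreeOn univ r f ↔ f r = r ∧ ∀ x, ∃ k, f^[k] x = r := by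
  simp [IsRootedTreeOn]

section TreeSum

variable {α R : Type*} [DecidableEq α] [Fintype α]

noncomputable def treesOn (S : Finset α) (r : α) : Finset (α → α) :=
  {f | IsRootedTreeOn S r f}

theorem mem_treesOn {S : Finset α} {r : α} {f : α → α} :
    f ∈ treesOn S r ↔ IsRootedTreeOn S r f := by
  simp [treesOn]

theorem treesOn_singleton (r : α) : treesOn {r} r = {id} := by
  ext f
  simp [mem_treesOn, isRootedTreeOn_singleton_iff]

noncomputable def treeSum [CommSemiring R] (S : Finset α) (r : α) (M : α → α → R) : R :=
  ∑ A ∈ treesOn S r, ∏ s ∈ S.erase r, M s (A s)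

theorem treeSum_eq_zero_of_col_eq_zero [CommSemiring R] {S : Finset α} {r x : α} (hx : x ∈ S)
    (hxr : x ≠ r) {M : α → α → R} (hM : ∀ s ∈ S, M s r = 0) : treeSum S r M = 0 :=
  sum_eq_zero fun A hA => by
    obtain ⟨y, hy, hAy⟩ := (mem_treesOn.1 hA).exists_parent_eq_root hx hxr
    exact prod_eq_zero hy (by rw [hAy, hM y (mem_of_mem_erase hy)])

/-- Only the factor at `c` depends on `u`, and
`∑ u, M c u * (M c (A c) - [A c = u]) = (∑ u, M c u - 1) * M c (A c)`. -/
theorem sum_mul_treeSum_sub_single [CommRing R] (S : Finset α) (r : α) (M : α → α → R)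
    (c : α) :
    ∑ u, M c u * treeSum S r (fun s t => M s t - if s = c ∧ t = u then 1 else 0)
      = (∑ u, M c u - if c ∈ S.erase r then 1 else 0) * treeSum S r M := by
  by_cases hc : c ∈ S.erase r
  · have hA (A : α → α) (u : α) :
        ∏ s ∈ S.erase r, (M s (A s) - if s = c ∧ A s = u then 1 else 0)
          = (M c (A c) - if A c = u then 1 else 0) * ∏ s ∈ (S.erase r).erase c, M s (A s) := by
      rw [← mul_prod_erase _ _ hc]
      congr 1
      · simp
      · exact prod_congr rfl fun s hs => by simp [ne_of_mem_erase hs]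
    simp only [treeSum, mul_sum, hA, if_pos hc]
    rw [sum_comm]
    refine sum_congr rfl fun A _ => ?_
    have hu : ∑ u, M c u * (M c (A c) - if A c = u then 1 else 0)
        = (∑ u, M c u - 1) * M c (A c) := by
      simp [mul_sub, sum_sub_distrib, sum_mul, sub_mul]
    rw [← mul_prod_erase _ _ hc, ← mul_assoc, ← hu, sum_mul]
    simp only [mul_assoc]
  · have hM (u : α) :
        treeSum S r (fun s t => M s t - if s = c ∧ t = u then 1 else 0) = treeSum S r M :=
      sum_congr rfl fun A _ => prod_congr rfl fun s hs => by
        simp [show s ≠ c from fun hsc => hc (hsc ▸ hs)]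
    simp [hM, hc, sum_mul]

/-- Every tree of nonzero weight has `c` as a leaf, and deleting it is a bijection onto the
trees on `S.erase c`. -/
theorem treeSum_eq_mul_treeSum_erase [CommSemiring R] {S : Finset α} {r c : α} (hc : c ∈ S)
    (hcr : c ≠ r) {M : α → α → R} (hM : ∀ s ∈ S, M s c = 0) :
    treeSum S r M = (∑ u ∈ S.erase c, M c u) * treeSum (S.erase c) r M := by
  have hleaf : ∑ A ∈ treesOn S r with ∀ x ∈ S, A x ≠ c, ∏ s ∈ S.erase r, M s (A s)
      = treeSum S r M := by
    refine sum_filter_of_ne fun A hA hW x hx hAx => hW ?_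
    have hxr : x ≠ r := fun hxr => hcr (by rw [← hAx, hxr, (mem_treesOn.1 hA).2.1])
    exact prod_eq_zero (mem_erase.2 ⟨hxr, hx⟩) (by rw [hAx, hM x hx])
  have hfiber (u : α) (hu : u ∈ S.erase c) :
      ∑ A ∈ treesOn S r with (∀ x ∈ S, A x ≠ c) ∧ A c = u,
          ∏ s ∈ S.erase r, M s (A s) = M c u * treeSum (S.erase c) r M := by
    rw [treeSum, mul_sum]
    refine sum_nbij' (fun A => update A c c) (fun B => update B c u) ?_ ?_ ?_ ?_ ?_
    · intro A hA
      simp only [mem_filter, mem_treesOn] at hA ⊢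
      exact hA.1.erase_leaf hcr hA.2.1
    · intro B hB
      rw [mem_treesOn] at hB
      have hins := insert_erase hc
      simp only [mem_filter, mem_treesOn]
      refine ⟨hins ▸ hB.insert_leaf (notMem_erase c S) hu, ?_, update_self ..⟩
      rw [← hins]
      exact hB.update_ne_of_notMem (notMem_erase c S) hu
    · intro A hA
      rw [update_idem, update_eq_self_iff, (mem_filter.1 hA).2.2]
    · intro B hB
      rw [update_idem, update_eq_self_iff, (mem_treesOn.1 hB).2.2.1 c (notMem_erase c S)]
    · intro A hA
      rw [← mul_prod_erase _ _ (mem_erase.2 ⟨hcr, hc⟩), (mem_filter.1 hA).2.2,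
        erase_right_comm]
      exact congrArg _ (prod_congr rfl fun s hs => by
        rw [update_of_ne (ne_of_mem_erase (mem_of_mem_erase hs))])
  rw [← hleaf, ← sum_fiberwise_of_maps_to (g := fun A => A c) (t := S.erase c), sum_mul]
  · exact sum_congr rfl fun u hu => by rw [filter_filter, hfiber u hu]
  · intro A hA
    simp only [mem_filter, mem_treesOn] at hA
    exact mem_erase.2 ⟨hA.2 c hc, hA.1.mapsTo hc⟩

end TreeSum

section TypeCounts

variable {V ι : Type*} [DecidableEq ι] {κ : V → ι}

variable (κ) in
def typeCount (U : Finset V) (t : ι) : ℕ := #{v ∈ U | κ v = t}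

variable (κ) in
/-- The number `m_{s,t}` of edges from type `s` to type `t` prescribed by `γ`. -/
def edgeCount (U : Finset V) (γ : ι → V → ℕ) (s t : ι) : ℕ :=
  ∑ v ∈ U with κ v = t, γ s v

theorem mem_image_iff_typeCount_pos {U : Finset V} {t : ι} :
    t ∈ U.image κ ↔ 0 < typeCount κ U t := by
  simp [typeCount, card_pos, Finset.Nonempty]

theorem filter_eq_singleton_of_typeCount_eq_one {U : Finset V} {v : V} (hv : v ∈ U)
    (hone : typeCount κ U (κ v) = 1) : {x ∈ U | κ x = κ v} = {v} := by
  obtain ⟨a, ha⟩ := card_eq_one.1 hone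
  rw [ha, mem_singleton.1 (ha ▸ mem_filter.2 ⟨hv, rfl⟩ : v ∈ ({a} : Finset V))]

variable [Fintype ι]

variable (κ) in
def DegreeCondition (U : Finset V) (ρ : ι) (γ : ι → V → ℕ) : Prop :=
  ∀ s, typeCount κ U s = (if s = ρ then 1 else 0) + ∑ t, edgeCount κ U γ s t

theorem sum_typeCount (U : Finset V) : ∑ t, typeCount κ U t = #U :=
  (card_eq_sum_card_fiberwise fun _ _ => mem_univ _).symm

theorem sum_edgeCount (U : Finset V) (γ : ι → V → ℕ) (s : ι) :
    ∑ t, edgeCount κ U γ s t = ∑ v ∈ U, γ s v :=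
  sum_fiberwise U κ (γ s)

theorem sum_mul_comp_eq_sum_edgeCount_mul {R : Type*} [CommSemiring R] (U : Finset V)
    (γ : ι → V → ℕ) (c : ι) (F : ι → R) :
    ∑ w ∈ U, (γ c w : R) * F (κ w) = ∑ u, (edgeCount κ U γ c u : R) * F u := by
  simp_rw [edgeCount, Nat.cast_sum, sum_mul]
  rw [← sum_fiberwise U κ]
  exact sum_congr rfl fun u _ => sum_congr rfl fun w hw => by rw [(mem_filter.1 hw).2]

namespace DegreeCondition

variable {U : Finset V} {ρ : ι} {γ : ι → V → ℕ}

theorem card_eq (h : DegreeCondition κ U ρ γ) : #U = 1 + ∑ v ∈ U, ∑ s, γ s v := by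
  rw [← sum_typeCount (κ := κ), sum_comm, sum_congr rfl fun s _ => h s, sum_add_distrib]
  simp [sum_edgeCount]

theorem exists_leaf (h : DegreeCondition κ U ρ γ) : ∃ v ∈ U, ∀ s, γ s v = 0 := by
  by_contra! hne
  have hle : #U • 1 ≤ ∑ v ∈ U, ∑ s, γ s v := card_nsmul_le_sum _ _ _ fun v hv => by
    obtain ⟨s, hs⟩ := hne v hv
    exact (Nat.one_le_iff_ne_zero.2 hs).trans
      (single_le_sum (f := fun s => γ s v) (fun _ _ => Nat.zero_le _) (mem_univ s))
  have := h.card_eq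
  simp only [smul_eq_mul, mul_one] at hle
  omega

end DegreeCondition

end TypeCounts

section Deletion

variable {V ι : Type*} [DecidableEq V] [DecidableEq ι] {κ : V → ι}

variable (κ) in
def childCount (U : Finset V) (r : V) (f : V → V) (s : ι) (w : V) : ℕ :=
  #{v ∈ U | κ v = s ∧ v ≠ r ∧ f v = w}

def removeChild (γ : ι → V → ℕ) (c : ι) (w : V) (s : ι) (x : V) : ℕ :=
  γ s x - if s = c ∧ x = w then 1 else 0

variable {U : Finset V} {γ : ι → V → ℕ} {c : ι} {v w : V}

theorem childCount_congr {r : V} {f g : V → V} (h : ∀ x ∈ U, f x = g x) :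
    childCount κ U r f = childCount κ U r g := by
  ext s w
  exact congrArg card (filter_congr fun x hx => by rw [h x hx])

theorem childCount_erase_add {r : V} (hv : v ∈ U) (hvr : v ≠ r) (f : V → V) (s : ι) (w : V) :
    childCount κ (U.erase v) r f s w + (if s = κ v ∧ w = f v then 1 else 0)
      = childCount κ U r f s w := by
  rw [childCount, childCount, filter_erase]
  split_ifs with hsw
  · exact card_erase_add_one (mem_filter.2 ⟨hv, hsw.1.symm, hvr, hsw.2.symm⟩)
  · rw [add_zero, erase_eq_of_notMem]
    exact fun hmem => hsw ⟨(mem_filter.1 hmem).2.1.symm, (mem_filter.1 hmem).2.2.2.symm⟩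

theorem typeCount_erase_add (hv : v ∈ U) (t : ι) :
    typeCount κ (U.erase v) t + (if κ v = t then 1 else 0) = typeCount κ U t := by
  rw [typeCount, typeCount, filter_erase]
  split_ifs with ht
  · exact card_erase_add_one (mem_filter.2 ⟨hv, ht⟩)
  · rw [add_zero, erase_eq_of_notMem]
    exact fun hmem => ht (mem_filter.1 hmem).2

theorem edgeCount_erase_of_leaf (hleaf : ∀ s, γ s v = 0) :
    edgeCount κ (U.erase v) γ = edgeCount κ U γ := by
  ext s t
  rw [edgeCount, edgeCount, filter_erase]
  exact sum_erase _ (hleaf s)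

theorem removeChild_add (hγ : 0 < γ c w) (s : ι) (x : V) :
    removeChild γ c w s x + (if s = c ∧ x = w then 1 else 0) = γ s x := by
  unfold removeChild
  split_ifs with h
  · rw [h.1, h.2]
    omega
  · omega

theorem edgeCount_removeChild_add (hw : w ∈ U) (hγ : 0 < γ c w) (s t : ι) :
    edgeCount κ U (removeChild γ c w) s t + (if s = c ∧ t = κ w then 1 else 0)
      = edgeCount κ U γ s t := by
  simp only [edgeCount, ← removeChild_add hγ s, sum_add_distrib]
  congr 1
  by_cases hs : s = c <;> simp [hs, hw, eq_comm]

variable [Fintype ι]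

theorem prod_factorial_removeChild_mul (hw : w ∈ U) (hγ : 0 < γ c w) :
    (∏ x ∈ U, ∏ s, (removeChild γ c w s x)!) * γ c w = ∏ x ∈ U, ∏ s, (γ s x)! := by
  have hpt (x : V) (s : ι) : (removeChild γ c w s x)! *
      (if s = c then if x = w then γ c w else 1 else 1) = (γ s x)! := by
    by_cases hsx : s = c ∧ x = w
    · obtain ⟨rfl, rfl⟩ := hsx
      rw [if_pos rfl, if_pos rfl, removeChild, if_pos ⟨rfl, rfl⟩, mul_comm,
        Nat.mul_factorial_pred hγ.ne']
    · rw [removeChild, if_neg hsx, Nat.sub_zero]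
      split_ifs <;> simp_all
  simp_rw [← hpt, prod_mul_distrib, prod_ite_eq' univ c, if_pos (mem_univ c),
    prod_ite_eq' U w, if_pos hw]

theorem prod_factorial_typeCount_erase_mul (hv : v ∈ U) :
    (∏ t, (typeCount κ (U.erase v) t - 1)!) * (typeCount κ U (κ v) - 1)!
      = (∏ t, (typeCount κ U t - 1)!) * (typeCount κ (U.erase v) (κ v) - 1)! := by
  have hrest : ∏ t ∈ univ.erase (κ v), (typeCount κ (U.erase v) t - 1)!
      = ∏ t ∈ univ.erase (κ v), (typeCount κ U t - 1)! :=
    prod_congr rfl fun t ht => by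
      rw [← typeCount_erase_add hv t, if_neg (ne_of_mem_erase ht).symm, add_zero]
  rw [← mul_prod_erase univ _ (mem_univ (κ v)), ← mul_prod_erase univ _ (mem_univ (κ v)),
    hrest]
  ring

theorem DegreeCondition.erase_removeChild {ρ : ι} (h : DegreeCondition κ U ρ γ) (hv : v ∈ U)
    (hleaf : ∀ s, γ s v = 0) (hw : w ∈ U.erase v) (hγ : 0 < γ (κ v) w) :
    DegreeCondition κ (U.erase v) ρ (removeChild γ (κ v) w) := by
  intro s
  have hcount := typeCount_erase_add (κ := κ) hv s
  have hedge : ∑ t, edgeCount κ U γ s t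
      = ∑ t, edgeCount κ (U.erase v) (removeChild γ (κ v) w) s t
        + if κ v = s then 1 else 0 := by
    simp_rw [← edgeCount_erase_of_leaf (U := U) hleaf, ← edgeCount_removeChild_add hw hγ s,
      sum_add_distrib]
    by_cases hs : s = κ v <;> simp [hs, Ne.symm]
  have := h s
  omega

end Deletion

section MultitypeTrees

variable {V ι : Type*} [DecidableEq V] [Fintype V] [DecidableEq ι] {κ : V → ι}

variable (κ) in
noncomputable def multitypeTrees (U : Finset V) (ρ : ι) (γ : ι → V → ℕ) :
    Finset (V × (V → V)) :=
  {p | IsRootedTreeOn U p.1 p.2 ∧ κ p.1 = ρ ∧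
    ∀ s, ∀ w ∈ U, childCount κ U p.1 p.2 s w = γ s w}

variable {U : Finset V} {ρ : ι} {γ : ι → V → ℕ} {p : V × (V → V)} {v w : V}

theorem mem_multitypeTrees : p ∈ multitypeTrees κ U ρ γ ↔
    IsRootedTreeOn U p.1 p.2 ∧ κ p.1 = ρ ∧
      ∀ s, ∀ w ∈ U, childCount κ U p.1 p.2 s w = γ s w := by
  simp [multitypeTrees]

theorem DegreeCondition.of_mem_multitypeTrees [Fintype ι] (hp : p ∈ multitypeTrees κ U ρ γ) :
    DegreeCondition κ U ρ γ := by
  obtain ⟨htree, hroot, hch⟩ := mem_multitypeTrees.1 hp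
  intro s
  have hnonroot : #{v ∈ U | κ v = s ∧ v ≠ p.1} = ∑ t, edgeCount κ U γ s t := by
    rw [sum_edgeCount, card_eq_sum_card_fiberwise (f := p.2) (t := U)
      fun v hv => htree.mapsTo (mem_filter.1 hv).1]
    refine sum_congr rfl fun w hw => ?_
    rw [← hch s w hw, childCount, filter_filter]
    simp only [and_assoc]
  have hsplit : {v ∈ U | κ v = s ∧ v ≠ p.1} = {v ∈ U | κ v = s}.erase p.1 := by
    rw [← filter_ne', filter_filter]
  rw [← hnonroot, hsplit, typeCount]
  by_cases hs : s = ρ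
  · rw [if_pos hs, ← card_erase_add_one (mem_filter.2 ⟨htree.1, hroot.trans hs.symm⟩),
      add_comm]
  · rw [if_neg hs, zero_add, erase_eq_of_notMem]
    exact fun hmem => hs ((mem_filter.1 hmem).2.symm.trans hroot)

theorem pos_of_mem_multitypeTrees (hp : p ∈ multitypeTrees κ U ρ γ) (hv : v ∈ U)
    (hvr : v ≠ p.1) : 0 < γ (κ v) (p.2 v) := by
  obtain ⟨htree, -, hch⟩ := mem_multitypeTrees.1 hp
  rw [← hch _ _ (htree.mapsTo hv)]
  exact card_pos.2 ⟨v, mem_filter.2 ⟨hv, rfl, hvr, rfl⟩⟩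

theorem root_ne_and_parent_ne_of_leaf (hp : p ∈ multitypeTrees κ U ρ γ)
    (hleaf : ∀ s, γ s v = 0) (hU : 1 < #U) : p.1 ≠ v ∧ ∀ x ∈ U, p.2 x ≠ v := by
  have hnonroot (x : V) (hx : x ∈ U) (hxr : x ≠ p.1) : p.2 x ≠ v := fun hxv => by
    simpa [hxv, hleaf] using pos_of_mem_multitypeTrees hp hx hxr
  have htree := (mem_multitypeTrees.1 hp).1
  have hroot : p.1 ≠ v := by
    rintro rfl
    obtain ⟨y, hy, hyr⟩ := exists_mem_ne hU p.1
    obtain ⟨z, hz, hzr⟩ := htree.exists_parent_eq_root hy hyr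
    exact hnonroot z (mem_of_mem_erase hz) (ne_of_mem_erase hz) hzr
  refine ⟨hroot, fun x hx => ?_⟩
  by_cases hxr : x = p.1
  · rw [hxr, htree.2.1]
    exact hroot
  · exact hnonroot x hx hxr

/-- Deleting the leaf `v` hanging below `w` is a bijection onto the trees on `U.erase v` in
which `w` has one child of type `κ v` fewer. -/
theorem card_filter_multitypeTrees_snd_eq (hv : v ∈ U) (hleaf : ∀ s, γ s v = 0)
    (hU : 1 < #U) (hw : w ∈ U.erase v) (hγ : 0 < γ (κ v) w) :
    #{p ∈ multitypeTrees κ U ρ γ | p.2 v = w}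
      = #(multitypeTrees κ (U.erase v) ρ (removeChild γ (κ v) w)) := by
  refine card_nbij' (fun p => (p.1, update p.2 v v)) (fun q => (q.1, update q.2 v w))
    ?_ ?_ ?_ ?_
  · intro p hp
    obtain ⟨hpU, hpw⟩ := mem_filter.1 hp
    obtain ⟨hroot, hparent⟩ := root_ne_and_parent_ne_of_leaf hpU hleaf hU
    obtain ⟨htree, hρ, hch⟩ := mem_multitypeTrees.1 hpU
    refine mem_multitypeTrees.2 ⟨htree.erase_leaf hroot.symm hparent, hρ, fun s x hx => ?_⟩
    have hcount := childCount_erase_add (κ := κ) hv hroot.symm p.2 s x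
    have hγx := removeChild_add hγ s x
    rw [hch s x (mem_of_mem_erase hx), hpw] at hcount
    dsimp only
    rw [childCount_congr fun y hy => update_of_ne (ne_of_mem_erase hy) _ _]
    omega
  · intro q hq
    obtain ⟨htree, hρ, hch⟩ := mem_multitypeTrees.1 hq
    have hvU : v ∉ U.erase v := notMem_erase v U
    have hvr : v ≠ q.1 := fun hvq => hvU (hvq ▸ htree.1)
    have htree' := htree.insert_leaf hvU hw
    have hparent := htree.update_ne_of_notMem hvU hw
    rw [insert_erase hv] at htree' hparent
    refine mem_filter.2
      ⟨mem_multitypeTrees.2 ⟨htree', hρ, fun s x hx => ?_⟩, update_self ..⟩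
    by_cases hxv : x = v
    · subst hxv
      rw [hleaf, childCount, card_eq_zero, filter_eq_empty_iff]
      exact fun y hy hy' => hparent y hy hy'.2.2
    · have hcount := childCount_erase_add (κ := κ) hv hvr (update q.2 v w) s x
      have hγx := removeChild_add hγ s x
      rw [← hcount, update_self,
        childCount_congr fun y hy => update_of_ne (ne_of_mem_erase hy) _ _,
        hch s x (mem_erase.2 ⟨hxv, hx⟩)]
      omega
  · intro p hp
    refine Prod.ext rfl ?_
    dsimp only
    rw [update_idem, update_eq_self_iff.2 (mem_filter.1 hp).2.symm]
  · intro q hq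
    refine Prod.ext rfl ?_
    dsimp only
    rw [update_idem,
      update_eq_self_iff.2 ((mem_multitypeTrees.1 hq).1.2.2.1 v (notMem_erase v U)).symm]

end MultitypeTrees

section Count

variable {V ι : Type*} [DecidableEq ι] [Fintype ι] {κ : V → ι}

variable (κ) in
/-- The tree polynomial runs over the types that actually occur in `U`: this is what keeps the
formula valid when the last vertex of a type is deleted. -/
noncomputable def treeCountFormula (U : Finset V) (ρ : ι) (γ : ι → V → ℕ) : ℚ :=
  (∏ t, ((typeCount κ U t - 1)! : ℚ)) / (∏ v ∈ U, ∏ s, ((γ s v)! : ℚ)) *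
    treeSum (U.image κ) ρ (fun s t => (edgeCount κ U γ s t : ℚ))

variable [DecidableEq V]

variable (κ) in
/-- What the induction hypothesis gives once a leaf `v` is deleted and its possible parents are
grouped by their type `u`. -/
noncomputable def leafDeletionSum (U : Finset V) (ρ : ι) (γ : ι → V → ℕ) (v : V) : ℚ :=
  (∏ t, ((typeCount κ (U.erase v) t - 1)! : ℚ)) / (∏ x ∈ U, ∏ s, ((γ s x)! : ℚ)) *
    ∑ u, (edgeCount κ U γ (κ v) u : ℚ) * treeSum ((U.erase v).image κ) ρ
      (fun s t => (edgeCount κ U γ s t : ℚ) - if s = κ v ∧ t = u then 1 else 0)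

variable {U : Finset V} {ρ : ι} {γ : ι → V → ℕ} {v : V}

theorem treeCountFormula_eq_leafDeletionSum_of_two_le (h : DegreeCondition κ U ρ γ)
    (hv : v ∈ U) (h2 : 2 ≤ typeCount κ U (κ v)) :
    treeCountFormula κ U ρ γ
      = leafDeletionSum κ U ρ γ v := by
  have hcount := typeCount_erase_add hv (κ := κ)
  have himage : (U.erase v).image κ = U.image κ := by
    ext t
    have := hcount t
    rw [mem_image_iff_typeCount_pos, mem_image_iff_typeCount_pos]
    split_ifs at this with ht
    · subst ht
      omega
    · omega
  have hcoef : (∑ u, (edgeCount κ U γ (κ v) u : ℚ))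
        - (if κ v ∈ (U.image κ).erase ρ then 1 else 0)
      = ((typeCount κ U (κ v) - 1 : ℕ) : ℚ) := by
    rw [Nat.cast_sub (by omega), h (κ v)]
    by_cases hvρ : κ v = ρ
    · rw [if_neg (by simp [hvρ]), if_pos hvρ]
      push_cast
      ring
    · rw [if_pos (by simp [hvρ, mem_image_of_mem κ hv]), if_neg hvρ]
      push_cast
      ring
  have hfac :
      (∏ t, ((typeCount κ (U.erase v) t - 1)! : ℚ)) * ((typeCount κ U (κ v) - 1 : ℕ) : ℚ)
      = ∏ t, ((typeCount κ U t - 1)! : ℚ) := by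
    have hpred := Nat.mul_factorial_pred (n := typeCount κ U (κ v) - 1) (by omega)
    have hmul := prod_factorial_typeCount_erase_mul (κ := κ) hv
    have hc := hcount (κ v)
    rw [if_pos rfl] at hc
    rw [← hpred, ← mul_assoc,
      show typeCount κ U (κ v) - 1 - 1 = typeCount κ (U.erase v) (κ v) - 1 by omega] at hmul
    exact_mod_cast Nat.eq_of_mul_eq_mul_right (Nat.factorial_pos _) hmul
  rw [leafDeletionSum, himage,
    sum_mul_treeSum_sub_single _ _ (fun s t => (edgeCount κ U γ s t : ℚ)), hcoef,
    treeCountFormula, ← hfac]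
  ring

theorem treeCountFormula_eq_leafDeletionSum_of_eq_one (hv : v ∈ U) (hleaf : ∀ s, γ s v = 0)
    (hvρ : κ v ≠ ρ) (hone : typeCount κ U (κ v) = 1) :
    treeCountFormula κ U ρ γ
      = leafDeletionSum κ U ρ γ v := by
  have hcount := typeCount_erase_add hv (κ := κ)
  have himage : (U.erase v).image κ = (U.image κ).erase (κ v) := by
    ext t
    have := hcount t
    rw [mem_erase, mem_image_iff_typeCount_pos, mem_image_iff_typeCount_pos]
    split_ifs at this with ht
    · subst ht
      simp only [ne_eq, not_true_eq_false, false_and, iff_false]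
      omega
    · simp only [ne_eq, Ne.symm ht, not_false_eq_true, true_and]
      omega
  have hcol (s : ι) : edgeCount κ U γ s (κ v) = 0 := by
    rw [edgeCount, filter_eq_singleton_of_typeCount_eq_one hv hone, sum_singleton, hleaf]
  have hrow : ∑ u ∈ (U.image κ).erase (κ v), (edgeCount κ U γ (κ v) u : ℚ)
      = ∑ u, (edgeCount κ U γ (κ v) u : ℚ) := by
    refine sum_subset (subset_univ _) fun u _ hu => ?_
    rw [mem_erase, not_and_or, not_not] at hu
    rcases hu with rfl | hu
    · exact_mod_cast hcol _
    · rw [mem_image_iff_typeCount_pos, not_lt, Nat.le_zero, typeCount, card_eq_zero] at hu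
      simp [edgeCount, hu]
  have hsub (u : ι) : treeSum ((U.image κ).erase (κ v)) ρ
      (fun s t => (edgeCount κ U γ s t : ℚ) - if s = κ v ∧ t = u then 1 else 0)
        = treeSum ((U.image κ).erase (κ v)) ρ (fun s t => (edgeCount κ U γ s t : ℚ)) :=
    sum_congr rfl fun A _ => prod_congr rfl fun s hs => by
      simp [ne_of_mem_erase (mem_of_mem_erase hs)]
  have hfac : ∏ t, ((typeCount κ (U.erase v) t - 1)! : ℚ)
      = ∏ t, ((typeCount κ U t - 1)! : ℚ) := by
    have hmul := prod_factorial_typeCount_erase_mul (κ := κ) hv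
    have hc := hcount (κ v)
    rw [if_pos rfl] at hc
    rw [hone, show typeCount κ (U.erase v) (κ v) = 0 by omega] at hmul
    exact_mod_cast by simpa using hmul
  rw [leafDeletionSum, himage, treeCountFormula,
    treeSum_eq_mul_treeSum_erase (mem_image_of_mem κ hv) hvρ fun s _ => by simp [hcol], hrow,
    hfac]
  simp_rw [hsub, ← sum_mul]

variable [Fintype V]

theorem card_multitypeTrees_of_card_eq_one (h : DegreeCondition κ U ρ γ) (hU : #U = 1) :
    (#(multitypeTrees κ U ρ γ) : ℚ) = treeCountFormula κ U ρ γ := by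
  obtain ⟨r, rfl⟩ := card_eq_one.1 hU
  have hγ (s : ι) : γ s r = 0 := by
    have := h.card_eq
    simp_all
  have hρ : κ r = ρ := by
    have := h ρ
    by_contra hne
    rw [typeCount, filter_singleton, if_neg hne] at this
    simp at this
    omega
  have htrees : multitypeTrees κ {r} ρ γ = {(r, id)} := by
    ext ⟨r', f⟩
    simp only [mem_multitypeTrees, isRootedTreeOn_singleton_iff, mem_singleton, Prod.mk.injEq]
    refine ⟨fun hp => hp.1, ?_⟩
    rintro ⟨rfl, rfl⟩
    refine ⟨⟨rfl, rfl⟩, hρ, ?_⟩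
    rintro s w rfl
    simp [childCount, hγ]
  have htypes (t : ι) : typeCount κ {r} t - 1 = 0 := by
    rw [typeCount, filter_singleton]
    split_ifs <;> simp
  rw [treeCountFormula, htrees, image_singleton, hρ, treeSum, erase_singleton]
  simp [htypes, hγ, treesOn_singleton]

theorem card_multitypeTrees_of_root_type_leaf (hv : v ∈ U) (hleaf : ∀ s, γ s v = 0)
    (hU : 1 < #U) (hvρ : κ v = ρ) (hone : typeCount κ U ρ = 1) :
    (#(multitypeTrees κ U ρ γ) : ℚ) = treeCountFormula κ U ρ γ := by
  have hρ : {x ∈ U | κ x = ρ} = {v} :=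
    hvρ ▸ filter_eq_singleton_of_typeCount_eq_one hv (hvρ ▸ hone)
  have hempty : multitypeTrees κ U ρ γ = ∅ := by
    refine eq_empty_of_forall_notMem fun p hp => ?_
    have hroot : p.1 ∈ {x ∈ U | κ x = ρ} :=
      mem_filter.2 ⟨(mem_multitypeTrees.1 hp).1.1, (mem_multitypeTrees.1 hp).2.1⟩
    rw [hρ, mem_singleton] at hroot
    exact (root_ne_and_parent_ne_of_leaf hp hleaf hU).1 hroot
  obtain ⟨y, hy, hyv⟩ := exists_mem_ne hU v
  have hyρ : κ y ≠ ρ := fun hyρ => hyv (mem_singleton.1 (hρ ▸ mem_filter.2 ⟨hy, hyρ⟩))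
  have hzero : treeSum (U.image κ) ρ (fun s t => (edgeCount κ U γ s t : ℚ)) = 0 :=
    treeSum_eq_zero_of_col_eq_zero (mem_image_of_mem κ hy) hyρ fun s _ => by
      simp [edgeCount, hρ, hleaf]
  rw [hempty, treeCountFormula, hzero, card_empty, Nat.cast_zero, mul_zero]

section Step

variable (hih : ∀ γ', DegreeCondition κ (U.erase v) ρ γ' →
    (#(multitypeTrees κ (U.erase v) ρ γ') : ℚ) = treeCountFormula κ (U.erase v) ρ γ')
  (h : DegreeCondition κ U ρ γ) (hv : v ∈ U) (hleaf : ∀ s, γ s v = 0) (hU : 1 < #U)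
include hih h hv hleaf hU

theorem cast_card_filter_multitypeTrees_snd_eq {w : V} (hw : w ∈ U.erase v) :
    (#{p ∈ multitypeTrees κ U ρ γ | p.2 v = w} : ℚ)
      = γ (κ v) w * ((∏ t, ((typeCount κ (U.erase v) t - 1)! : ℚ)) /
          (∏ x ∈ U, ∏ s, ((γ s x)! : ℚ)) * treeSum ((U.erase v).image κ) ρ
            (fun s t => (edgeCount κ U γ s t : ℚ) - if s = κ v ∧ t = κ w then 1 else 0)) :=
    by
  rcases (γ (κ v) w).eq_zero_or_pos with hγ | hγ
  · rw [hγ, Nat.cast_zero, zero_mul, Nat.cast_eq_zero, card_eq_zero, filter_eq_empty_iff]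
    intro p hp hpw
    have := pos_of_mem_multitypeTrees hp hv (root_ne_and_parent_ne_of_leaf hp hleaf hU).1.symm
    rw [hpw, hγ] at this
    exact this.false
  have hfac : (∏ x ∈ U.erase v, ∏ s, ((removeChild γ (κ v) w s x)! : ℚ)) * γ (κ v) w
      = ∏ x ∈ U, ∏ s, ((γ s x)! : ℚ) := by
    have hv1 : ∏ s, ((γ s v)! : ℚ) = 1 := by simp [hleaf]
    rw [← prod_erase U (f := fun x => ∏ s, ((γ s x)! : ℚ)) hv1]
    exact_mod_cast prod_factorial_removeChild_mul hw hγ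
  have hedge (s t : ι) : (edgeCount κ (U.erase v) (removeChild γ (κ v) w) s t : ℚ)
      = edgeCount κ U γ s t - if s = κ v ∧ t = κ w then 1 else 0 := by
    rw [← edgeCount_erase_of_leaf (U := U) hleaf, ← edgeCount_removeChild_add hw hγ s t]
    push_cast
    ring
  rw [card_filter_multitypeTrees_snd_eq hv hleaf hU hw hγ,
    hih _ (h.erase_removeChild hv hleaf hw hγ), treeCountFormula, ← hfac]
  simp_rw [hedge]
  have : (γ (κ v) w : ℚ) ≠ 0 := by exact_mod_cast hγ.ne'
  field_simp

/-- Sort the trees by the parent `w` of the leaf `v`, then group the parents by type. -/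
theorem cast_card_multitypeTrees_eq_leafDeletionSum :
    (#(multitypeTrees κ U ρ γ) : ℚ)
      = leafDeletionSum κ U ρ γ v := by
  have hmaps (p) (hp : p ∈ multitypeTrees κ U ρ γ) : p.2 v ∈ U.erase v :=
    mem_erase.2 ⟨(root_ne_and_parent_ne_of_leaf hp hleaf hU).2 v hv,
      (mem_multitypeTrees.1 hp).1.mapsTo hv⟩
  rw [leafDeletionSum, card_eq_sum_card_fiberwise hmaps, Nat.cast_sum,
    sum_congr rfl fun w hw => cast_card_filter_multitypeTrees_snd_eq hih h hv hleaf hU hw,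
    sum_erase U (f := fun w => (γ (κ v) w : ℚ) * _) (by simp [hleaf]), mul_sum]
  exact (sum_mul_comp_eq_sum_edgeCount_mul U γ (κ v) fun u => _ * treeSum _ ρ fun s t =>
    (edgeCount κ U γ s t : ℚ) - if s = κ v ∧ t = u then 1 else 0).trans
      (sum_congr rfl fun u _ => by ring)

end Step

theorem cast_card_multitypeTrees (U : Finset V) (γ : ι → V → ℕ)
    (h : DegreeCondition κ U ρ γ) :
    (#(multitypeTrees κ U ρ γ) : ℚ) = treeCountFormula κ U ρ γ := by
  induction U using Finset.strongInduction generalizing γ with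
  | H U ih =>
  have hpos : 1 ≤ #U := by
    have := h.card_eq
    omega
  rcases hpos.eq_or_lt with hU | hU
  · exact card_multitypeTrees_of_card_eq_one h hU.symm
  obtain ⟨v, hv, hleaf⟩ := h.exists_leaf
  by_cases hroot : κ v = ρ ∧ typeCount κ U (κ v) = 1
  · exact card_multitypeTrees_of_root_type_leaf hv hleaf hU hroot.1 (hroot.1 ▸ hroot.2)
  rw [cast_card_multitypeTrees_eq_leafDeletionSum (fun γ' => ih _ (erase_ssubset hv) γ') h hv
    hleaf hU]
  rcases Nat.lt_or_ge (typeCount κ U (κ v)) 2 with hlt | hge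
  · have hone : typeCount κ U (κ v) = 1 := by
      have := mem_image_iff_typeCount_pos.1 (mem_image_of_mem κ hv)
      omega
    exact (treeCountFormula_eq_leafDeletionSum_of_eq_one hv hleaf
      (fun hvρ => hroot ⟨hvρ, hone⟩) hone).symm
  · exact (treeCountFormula_eq_leafDeletionSum_of_two_le h hv hge).symm

end Count

section MultitypeCayley

variable {d : ℕ} {n : Fin d → ℕ}

theorem MTree.ch_eq_childCount (T : MTree d n) (s : Fin d) (w : Vtx d n) :
    T.ch s w = childCount Sigma.fst univ T.root T.parent s w := by
  rw [MTree.ch, childCount, Nat.card_eq_fintype_card, Fintype.card_subtype]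

theorem natCard_mtree_eq_card_multitypeTrees (ρ : Fin d) (γ : Fin d → Vtx d n → ℕ) :
    Nat.card {T : MTree d n // T.root.1 = ρ ∧ ∀ a b, T.ch a b = γ a b}
      = #(multitypeTrees Sigma.fst univ ρ γ) := by
  rw [← Nat.card_eq_finsetCard]
  refine Nat.card_congr
    { toFun := fun T => ⟨T.1.1, mem_multitypeTrees.2 ⟨isRootedTreeOn_univ_iff.2 T.1.2, T.2.1,
        fun s w _ => (T.1.ch_eq_childCount s w).symm.trans (T.2.2 s w)⟩⟩
      invFun := fun p => ⟨⟨p.1, isRootedTreeOn_univ_iff.1 (mem_multitypeTrees.1 p.2).1⟩,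
        (mem_multitypeTrees.1 p.2).2.1, fun s w => (MTree.ch_eq_childCount _ s w).trans
          ((mem_multitypeTrees.1 p.2).2.2 s w (mem_univ w))⟩
      left_inv := fun _ => rfl
      right_inv := fun _ => rfl }

theorem typeCount_fst (t : Fin d) : typeCount Sigma.fst (univ : Finset (Vtx d n)) t = n t := by
  rw [typeCount, card_eq_sum_ones, sum_filter, Fintype.sum_sigma]
  dsimp only
  rw [sum_congr rfl fun x _ => sum_ite_irrel _ _ _ _]
  simp

theorem edgeCount_fst (γ : Fin d → Vtx d n → ℕ) (s t : Fin d) :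
    edgeCount Sigma.fst univ γ s t = ∑ i : Fin (n t), γ s ⟨t, i⟩ := by
  rw [edgeCount, sum_filter, Fintype.sum_sigma]
  dsimp only
  rw [sum_congr rfl fun x _ => sum_ite_irrel _ _ _ _]
  simp

theorem image_fst_univ (hn : ∀ t, 0 < n t) : (univ : Finset (Vtx d n)).image Sigma.fst = univ :=
  image_univ_of_surjective fun t => ⟨⟨t, ⟨0, hn t⟩⟩, rfl⟩

theorem sum_cay_eq_treeSum {R : Type*} [CommSemiring R] (ρ : Fin d) (M : Fin d → Fin d → R) :
    ∑ A : Cay d ρ, ∏ s ∈ univ.erase ρ, M s (A.1 s) = treeSum univ ρ M :=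
  (sum_subtype (treesOn univ ρ) (fun _ => by rw [mem_treesOn, isRootedTreeOn_univ_iff])
    fun A => ∏ s ∈ univ.erase ρ, M s (A s)).symm

end MultitypeCayley

/-- **Trees with a prescribed indegree vector (Proposition 12).**
Let `m_{s,t} = Σ_i γ_{s,t,i}`. If `n_s = δ_{s,ρ} + Σ_t m_{s,t}` for all `s`, then
`|T_{ρ,γ}| = (∏_t (n_t−1)! / ∏_{s,t,i} γ_{s,t,i}!) · Σ_{A ∈ Cay_d^ρ} ∏_{(s,t)∈A} m_{s,t}`;
otherwise `|T_{ρ,γ}| = 0`. -/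
theorem multitype_cayley_count_by_indegree (d : ℕ) (n : Fin d → ℕ)
    (hn : ∀ t, 0 < n t) (ρ : Fin d) (γ : Fin d → Vtx d n → ℕ)
    (m : Fin d → Fin d → ℕ) (hm : ∀ s t, m s t = ∑ i : Fin (n t), γ s ⟨t, i⟩) :
    (Nat.card {T : MTree d n // T.root.1 = ρ ∧ ∀ a b, T.ch a b = γ a b} : ℚ)
      =
    if ∀ s, n s = (if s = ρ then 1 else 0) + ∑ t, m s t then
      ((∏ t : Fin d, (Nat.factorial (n t - 1) : ℚ)) /
          ∏ s : Fin d, ∏ t : Fin d, ∏ i : Fin (n t),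
            (Nat.factorial (γ s ⟨t, i⟩) : ℚ)) *
        ∑ A : Cay d ρ, ∏ s ∈ Finset.univ.erase ρ, (m s (A.1 s) : ℚ)
    else 0 := by
  have hcond : DegreeCondition Sigma.fst (univ : Finset (Vtx d n)) ρ γ
      ↔ ∀ s, n s = (if s = ρ then 1 else 0) + ∑ t, m s t := by
    simp only [DegreeCondition, typeCount_fst, edgeCount_fst, hm]
  rw [natCard_mtree_eq_card_multitypeTrees]
  split_ifs with hdeg
  · rw [cast_card_multitypeTrees _ _ (hcond.2 hdeg), treeCountFormula, image_fst_univ hn,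
      ← sum_cay_eq_treeSum, prod_comm]
    simp only [typeCount_fst, edgeCount_fst, ← hm, Fintype.prod_sigma]
  · rw [card_eq_zero.2 (eq_empty_of_forall_notMem fun p hp =>
      hdeg (hcond.1 (.of_mem_multitypeTrees hp))), Nat.cast_zero]
end

section
/- Fix d ≥ 1. Let G' be the directed graph with vertex set V' = {(s,t) ∈ [d]×[d+1] : t ≤ s+1} and edge set E' = {((s,t),(t,u)) : (s,t) ∈ V', (t,u) ∈ V'}; write e_{s,t,u} for the edge ((s,t),(t,u)). Let A ⊆ E' be a set of edges containing exactly one edge going out of each vertex (s,t) ∈ V' with s,t ∈ [d], and containing no loop e_{s,s,s}. Then A is a spanning tree of G' oriented toward the vertex (d,d+1) if and only if for every s ∈ {2,…,d}, A contains either the edge e_{s−1,s,s+1} or both of the edges e_{s−1,s,s} and e_{s,s,s+1}. -/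
/-!
Call `s` the level of the vertex `(s, t)`. An edge out of `(s, t)` enters level `t ≤ s + 1`, so
walks never climb except along an edge out of a top vertex `(s, s + 1)`, which climbs by one.

If `A` is a spanning tree, let `(s + 1, u)` be the out-neighbour of the top vertex `(s, s + 1)`.
Were `u ≤ s`, the next step would drop to level `≤ s`, and the walk from there to the root would
have to climb through `(s, s + 1)` again: a cycle through a vertex that reaches the sink, which is
impossible since every vertex has at most one out-edge. Hence `u ∈ {s + 1, s + 2}`, and for
`u = s + 1` the same argument and the absence of loops force the edge
`(s + 1, s + 1) → (s + 1, s + 2)`.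

Conversely, the condition chains the top vertices into a walk to the root, and every other vertex
reaches a top vertex by strong induction on its level: from `(s, t)` with `t < s` we drop to
level `t`, and `(s, s)` either moves to the top vertex `(s, s + 1)` or to some `(s, u)` with
`u < s`.
-/

open Relation

theorem Relation.ReflTransGen.not_transGen_self {α : Type*} {R : α → α → Prop}
    (hR : ∀ {x y z}, R x y → R x z → y = z) {v r : α} (hvr : ReflTransGen R v r)
    (hr : ∀ w, ¬ R r w) : ¬ TransGen R v v := by
  induction hvr using ReflTransGen.head_induction_on with
  | refl =>
    intro hcycle
    obtain ⟨w, hrw, -⟩ := TransGen.head'_iff.mp hcycle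
    exact hr w hrw
  | head hvx _ ih =>
    intro hcycle
    obtain ⟨y, hvy, hyv⟩ := TransGen.head'_iff.mp hcycle
    rw [hR hvy hvx] at hyv
    exact ih (TransGen.tail' hyv hvx)

namespace Staircase

abbrev Vertex (e : ℕ) := Fin (e + 1) × Fin (e + 2)

variable {e : ℕ}

def IsVertex (v : Vertex e) : Prop := (v.2 : ℕ) ≤ v.1 + 1

abbrev root (e : ℕ) : Vertex e := (Fin.last e, Fin.last (e + 1))

abbrev top (s : Fin (e + 1)) : Vertex e := (s, s.succ)

abbrev Step (A : Set (Vertex e × Vertex e)) (x y : Vertex e) : Prop := (x, y) ∈ A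

def IsEdgeSet (A : Set (Vertex e × Vertex e)) : Prop :=
  ∀ q ∈ A, IsVertex q.1 ∧ IsVertex q.2 ∧ q.1.2 = q.2.1.castSucc

def HasUniqueSuccessors (A : Set (Vertex e × Vertex e)) : Prop :=
  ∀ v, IsVertex v → v.2 ≠ Fin.last (e + 1) → ∃! w, (v, w) ∈ A

def IsSpanningTreeToward (A : Set (Vertex e × Vertex e)) (r : Vertex e) : Prop :=
  (∀ w, (r, w) ∉ A) ∧ ∀ v, IsVertex v → ReflTransGen (Step A) v r

def StaircaseCondition (A : Set (Vertex e × Vertex e)) : Prop :=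
  ∀ a : Fin e, ((a.castSucc, a.succ.castSucc), (a.succ, a.succ.succ)) ∈ A ∨
    (((a.castSucc, a.succ.castSucc), (a.succ, a.succ.castSucc)) ∈ A ∧
      ((a.succ, a.succ.castSucc), (a.succ, a.succ.succ)) ∈ A)

namespace IsEdgeSet

variable {A : Set (Vertex e × Vertex e)} {x y : Vertex e}

theorem val_snd_eq_val_fst (hA : IsEdgeSet A) (h : (x, y) ∈ A) : (x.2 : ℕ) = y.1 := by
  simpa using congrArg Fin.val (hA _ h).2.2

theorem isVertex_fst (hA : IsEdgeSet A) (h : (x, y) ∈ A) : IsVertex x := (hA _ h).1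

theorem isVertex_snd (hA : IsEdgeSet A) (h : (x, y) ∈ A) : IsVertex y := (hA _ h).2.1

theorem val_snd_le (hA : IsEdgeSet A) (h : (x, y) ∈ A) : (x.2 : ℕ) ≤ e := by
  have := y.1.isLt
  rw [hA.val_snd_eq_val_fst h]
  omega

theorem root_not_mem (hA : IsEdgeSet A) (w : Vertex e) : (root e, w) ∉ A := fun h => by
  simpa using hA.val_snd_le h

theorem exists_out_edge (hA : IsEdgeSet A) (hout : HasUniqueSuccessors A) (hx : IsVertex x)
    (hx₂ : (x.2 : ℕ) ≤ e) : ∃ w, (x, w) ∈ A ∧ IsVertex w ∧ (x.2 : ℕ) = w.1 := by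
  obtain ⟨w, hw, -⟩ := hout x hx (fun h => by simp [h] at hx₂)
  exact ⟨w, hw, hA.isVertex_snd hw, hA.val_snd_eq_val_fst hw⟩

theorem eq_of_mem_of_mem (hA : IsEdgeSet A) (hout : HasUniqueSuccessors A) {z : Vertex e}
    (hy : (x, y) ∈ A) (hz : (x, z) ∈ A) : y = z :=
  (hout x (hA.isVertex_fst hy) (fun h => by simpa [h] using hA.val_snd_le hy)).unique hy hz

theorem eq_top_of_mem (hA : IsEdgeSet A) {s : Fin (e + 1)} (h : (x, y) ∈ A) (hx : x.1 ≤ s)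
    (hy : s < y.1) : x = top s := by
  have h₁ := hA.val_snd_eq_val_fst h
  have h₂ : (x.2 : ℕ) ≤ x.1 + 1 := hA.isVertex_fst h
  rw [Fin.le_def] at hx
  rw [Fin.lt_def] at hy
  ext <;> simp only [Fin.val_succ] <;> omega

theorem reflTransGen_top (hA : IsEdgeSet A) {s : Fin (e + 1)}
    (h : ReflTransGen (Step A) x y) (hx : x.1 ≤ s) (hy : s < y.1) :
    ReflTransGen (Step A) x (top s) := by
  induction h with
  | refl => exact absurd hx (not_le.mpr hy)
  | @tail b c hxb hbc ih =>
    by_cases hb : b.1 ≤ s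
    · exact hA.eq_top_of_mem hbc hb hy ▸ hxb
    · exact ih (not_le.mp hb)

end IsEdgeSet

variable {A : Set (Vertex e × Vertex e)}

namespace IsSpanningTreeToward

theorem lt_snd_of_transGen_top (hA : IsEdgeSet A) (hout : HasUniqueSuccessors A)
    (htree : IsSpanningTreeToward A (root e)) {a : Fin e} {w : Vertex e}
    (hw : TransGen (Step A) (top a.castSucc) w) : (a : ℕ) < w.2 := by
  by_contra! hw₂
  obtain ⟨_, -, hlast⟩ := TransGen.tail'_iff.mp hw
  obtain ⟨z, hwz, hz, hwz₁⟩ := hA.exists_out_edge hout (hA.isVertex_snd hlast) (by omega)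
  have hz_top : ReflTransGen (Step A) z (top a.castSucc) :=
    hA.reflTransGen_top (htree.2 z hz) (by rw [Fin.le_def, Fin.val_castSucc]; omega)
      (by simp [Fin.lt_def])
  exact ReflTransGen.not_transGen_self (R := Step A) (hA.eq_of_mem_of_mem hout)
    (htree.2 _ (by simp [IsVertex])) htree.1 (TransGen.trans_left (hw.tail hwz) hz_top)

theorem staircaseCondition (hA : IsEdgeSet A) (hout : HasUniqueSuccessors A)
    (hloop : ∀ v, (v, v) ∉ A) (htree : IsSpanningTreeToward A (root e)) :
    StaircaseCondition A := by
  intro a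
  have hv : top a.castSucc = (a.castSucc, a.succ.castSucc) := by rw [top, Fin.succ_castSucc]
  obtain ⟨w, hvw, hw, hw₁⟩ :=
    hA.exists_out_edge hout (x := top a.castSucc) (by simp [IsVertex]) (by simp)
  have hw₂ := htree.lt_snd_of_transGen_top hA hout (.single hvw)
  have hw₃ : (w.2 : ℕ) ≤ w.1 + 1 := hw
  simp only [Fin.val_succ, Fin.val_castSucc] at hw₁
  rw [hv] at hvw
  rcases (show (w.2 : ℕ) = a + 2 ∨ (w.2 : ℕ) = a + 1 by omega) with h | h
  · left
    rwa [show w = (a.succ, a.succ.succ) by ext <;> simp only [Fin.val_succ] <;> omega] at hvw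
  · right
    obtain rfl : w = (a.succ, a.succ.castSucc) := by
      ext <;> simp only [Fin.val_succ, Fin.val_castSucc] <;> omega
    obtain ⟨w', hww', hw', hw'₁⟩ := hA.exists_out_edge hout hw a.isLt
    have hw'₂ := htree.lt_snd_of_transGen_top hA hout ((TransGen.single (hv ▸ hvw)).tail hww')
    have hw'₃ : (w'.2 : ℕ) ≤ w'.1 + 1 := hw'
    simp only [Fin.val_succ, Fin.val_castSucc] at hw'₁
    have hne : (w'.2 : ℕ) ≠ a + 1 := fun h => hloop _ <|
      (show w' = (a.succ, a.succ.castSucc) by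
        ext <;> simp only [Fin.val_succ, Fin.val_castSucc] <;> omega) ▸ hww'
    refine ⟨hvw, ?_⟩
    rwa [show w' = (a.succ, a.succ.succ) by ext <;> simp only [Fin.val_succ] <;> omega] at hww'

end IsSpanningTreeToward

theorem StaircaseCondition.reflTransGen_top_root (hcond : StaircaseCondition A)
    (s : Fin (e + 1)) : ReflTransGen (Step A) (top s) (root e) := by
  induction s using Fin.reverseInduction with
  | last => rw [top, Fin.succ_last]
  | cast a ih =>
    rw [top, Fin.succ_castSucc]
    rcases hcond a with h | ⟨h₁, h₂⟩
    · exact .head h ih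
    · exact .head h₁ (.head h₂ ih)

theorem reflTransGen_root_of_forall_top (hA : IsEdgeSet A) (hout : HasUniqueSuccessors A)
    (hloop : ∀ v, (v, v) ∉ A) (htop : ∀ s, ReflTransGen (Step A) (top s) (root e))
    (v : Vertex e) (hv : IsVertex v) : ReflTransGen (Step A) v (root e) := by
  obtain ⟨s, t⟩ := v
  induction s using WellFoundedLT.induction generalizing t with
  | _ s ih =>
  have hv : (t : ℕ) ≤ s + 1 := hv
  have below : ∀ t : Fin (e + 2), (t : ℕ) < s → ReflTransGen (Step A) (s, t) (root e) := by
    intro t ht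
    obtain ⟨⟨u, u'⟩, hstep, hu, hu₁⟩ := hA.exists_out_edge hout (x := (s, t))
      (show (t : ℕ) ≤ s + 1 by omega) (show (t : ℕ) ≤ e by omega)
    exact .head hstep (ih u (Fin.lt_def.mpr (hu₁ ▸ ht)) u' hu)
  rcases (show (t : ℕ) < s ∨ (t : ℕ) = s ∨ (t : ℕ) = s + 1 by omega) with ht | ht | ht
  · exact below t ht
  · obtain ⟨⟨u, u'⟩, hstep, hu, hu₁⟩ :=
      hA.exists_out_edge hout (x := (s, t)) hv (show (t : ℕ) ≤ e by omega)
    obtain rfl : u = s := Fin.ext (hu₁.symm.trans ht)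
    have hu : (u' : ℕ) ≤ u + 1 := hu
    have hne : (u' : ℕ) ≠ u := fun h =>
      hloop _ (congrArg (Prod.mk u) (Fin.ext (ht.trans h.symm)) ▸ hstep)
    rcases (show (u' : ℕ) < u ∨ (u' : ℕ) = u + 1 by omega) with h | h
    · exact .head hstep (below u' h)
    · rw [congrArg (Prod.mk u) (Fin.ext (h.trans (Fin.val_succ u).symm))] at hstep
      exact .head hstep (htop u)
  · rw [congrArg (Prod.mk s) (Fin.ext (ht.trans (Fin.val_succ s).symm))]
    exact htop s

end Staircase

open Staircase in
/-- **Characterization of the spanning trees of the staircase graph `G'`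
(Claim 16).** Here `d = e + 1 ≥ 1`, the vertices of `G'` are the pairs
`(s,t) ∈ [d]×[d+1]` with `t ≤ s+1` (0-indexed: `(s,t) ∈ Fin (e+1) × Fin (e+2)`
with `t ≤ s+1`), its edges are the pairs `e_{s,t,u} = ((s,t),(t,u))` of vertices,
and the root is `r = (d, d+1)` (0-indexed: `(Fin.last e, Fin.last (e+1))`).
Let `A` be a set of edges of `G'` containing exactly one edge out of each vertex
`(s,t)` with `s,t ∈ [d]`, and no loop. Then `A` is a spanning tree of `G'` oriented
toward `r` (no edge out of `r`, and every vertex reaches `r` along `A`) if and only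
if for every `s ∈ {2,…,d}` (0-indexed: `s = a+1` with `a : Fin e`), `A` contains
either the edge `e_{s−1,s,s+1}` or both of the edges `e_{s−1,s,s}` and
`e_{s,s,s+1}`. -/
theorem staircase_spanning_tree_characterization (e : ℕ)
    (A : Set ((Fin (e + 1) × Fin (e + 2)) × (Fin (e + 1) × Fin (e + 2))))
    (hA : ∀ q ∈ A,
      ((q.1.2 : ℕ) ≤ (q.1.1 : ℕ) + 1) ∧ ((q.2.2 : ℕ) ≤ (q.2.1 : ℕ) + 1) ∧
        q.1.2 = q.2.1.castSucc)
    (hout : ∀ v : Fin (e + 1) × Fin (e + 2),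
      (v.2 : ℕ) ≤ (v.1 : ℕ) + 1 → v.2 ≠ Fin.last (e + 1) → ∃! w, (v, w) ∈ A)
    (hloop : ∀ v, (v, v) ∉ A) :
    ((∀ w, ((Fin.last e, Fin.last (e + 1)), w) ∉ A) ∧
      ∀ v : Fin (e + 1) × Fin (e + 2), (v.2 : ℕ) ≤ (v.1 : ℕ) + 1 →
        Relation.ReflTransGen (fun x y => (x, y) ∈ A) v
          (Fin.last e, Fin.last (e + 1)))
      ↔
    ∀ a : Fin e,
      ((a.castSucc, a.succ.castSucc), (a.succ, a.succ.succ)) ∈ A ∨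
      (((a.castSucc, a.succ.castSucc), (a.succ, a.succ.castSucc)) ∈ A ∧
        ((a.succ, a.succ.castSucc), (a.succ, a.succ.succ)) ∈ A) := by
  exact ⟨IsSpanningTreeToward.staircaseCondition hA hout hloop,
    fun hcond => ⟨IsEdgeSet.root_not_mem hA, reflTransGen_root_of_forall_top hA hout hloop
      (StaircaseCondition.reflTransGen_top_root hcond)⟩⟩
end
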